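/- arXiv:1210.2929 — 13 statements merged into one kernel-verified Lean document; each statement's English description precedes it below -/
import Mathlib

section
/- Let M be a point with M ≠ O, and let N be the inverse of M with respect to the circumcircle k (N = inversion O R M), with M, N ∉ {A, B, C}. Let r, r' > 0 and let A₁ = inversion M r A, B₁ = inversion M r B, C₁ = inversion M r C and A' = inversion N r' A, B' = inversion N r' B, C' = inversion N r' C. Then the two image triples are similar: dist B₁ C₁ * dist C' A' = dist B' C' * dist C₁ A₁ and dist C₁ A₁ * dist A' B' = dist C' A' * dist A₁ B₁. -/
open EuclideanGeometry

noncomputable section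

theorem stmt0 (A B C O M N : EuclideanSpace ℝ (Fin 2)) (R r r' : ℝ)
    (hABC : AffineIndependent ℝ ![A, B, C])
    (hR : 0 < R) (hOA : dist O A = R) (hOB : dist O B = R) (hOC : dist O C = R)
    (hMO : M ≠ O) (hN : N = inversion O R M)
    (hMA : M ≠ A) (hMB : M ≠ B) (hMC : M ≠ C)
    (hNA : N ≠ A) (hNB : N ≠ B) (hNC : N ≠ C)
    (hr : 0 < r) (hr' : 0 < r')
    (A₁ B₁ C₁ A' B' C' : EuclideanSpace ℝ (Fin 2))
    (hA₁ : A₁ = inversion M r A) (hB₁ : B₁ = inversion M r B) (hC₁ : C₁ = inversion M r C)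
    (hA' : A' = inversion N r' A) (hB' : B' = inversion N r' B) (hC' : C' = inversion N r' C) :
    dist B₁ C₁ * dist C' A' = dist B' C' * dist C₁ A₁ ∧
    dist C₁ A₁ * dist A' B' = dist C' A' * dist A₁ B₁ := by
  have hAO : A ≠ O := by rintro rfl; simp at hOA; linarith
  have hBO : B ≠ O := by rintro rfl; simp at hOB; linarith
  have hCO : C ≠ O := by rintro rfl; simp at hOC; linarith
  have hfix : ∀ P : EuclideanSpace ℝ (Fin 2), dist O P = R → inversion O R P = P := by
    intro P hP
    exact inversion_of_mem_sphere (Metric.mem_sphere'.2 hP)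
  have key : ∀ P : EuclideanSpace ℝ (Fin 2), P ≠ O → dist O P = R →
      dist N P = (R ^ 2 / (dist M O * R)) * dist M P := by
    intro P hPO hP
    rw [hN, show dist (inversion O R M) P = dist (inversion O R M) (inversion O R P) from
      by rw [hfix P hP], dist_inversion_inversion hMO hPO, dist_comm P O, hP, dist_comm M P]
  have hNA' := key A hAO hOA
  have hNB' := key B hBO hOB
  have hNC' := key C hCO hOC
  have hMOp : 0 < dist M O := dist_pos.2 hMO
  have hMAp : 0 < dist M A := dist_pos.2 hMA
  have hMBp : 0 < dist M B := dist_pos.2 hMB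
  have hMCp : 0 < dist M C := dist_pos.2 hMC
  have hANA : A ≠ N := fun h => hNA h.symm
  have hBNB : B ≠ N := fun h => hNB h.symm
  have hCNC : C ≠ N := fun h => hNC h.symm
  rw [hA₁, hB₁, hC₁, hA', hB', hC',
    dist_inversion_inversion (fun h => hMB h.symm) (fun h => hMC h.symm),
    dist_inversion_inversion hCNC hANA,
    dist_inversion_inversion hBNB hCNC,
    dist_inversion_inversion (fun h => hMC h.symm) (fun h => hMA h.symm),
    dist_inversion_inversion hANA hBNB,
    dist_inversion_inversion (fun h => hMA h.symm) (fun h => hMB h.symm)]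
  rw [dist_comm A N, dist_comm B N, dist_comm C N, dist_comm A M, dist_comm B M, dist_comm C M,
    hNA', hNB', hNC']
  constructor <;> field_simp <;> ring
end
end

section
/- Let a₁, b₁, c₁ > 0 satisfy the strict triangle inequalities (a₁ < b₁ + c₁, b₁ < c₁ + a₁, c₁ < a₁ + b₁) and suppose (a₁, b₁, c₁) is not proportional to (a, b, c), i.e. there is no t > 0 with a₁ = t·a, b₁ = t·b, c₁ = t·c. Then the set S = {M : b₁ · (a · dist M A) = a₁ · (b · dist M B) and c₁ · (b · dist M B) = b₁ · (c · dist M C)} of points whose distances satisfy (a·MA) : (b·MB) : (c·MC) = a₁ : b₁ : c₁ has exactly two elements: there exist M ≠ N with S = {M, N}. -/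
/-!
If `XA², XB², XC²` are `l α, l β, l γ`, subtracting these equations pairwise leaves two linear
equations in `X`, which determine `X` as an affine function of `l` (Cramer's rule in the basis
`B - A, C - A`). The remaining equation is a quadratic in `l`. Its leading coefficient is a
squared norm that vanishes only when `α = β = γ`, and its discriminant factors as `16 S² · 16 S₁²`,
where `S` is the area of `ABC` and `S₁` that of the triangle with sides `a √α, b √β, c √γ`.
With `α = (a₁ / a)²` etc. the latter has sides `a₁, b₁, c₁`, so the quadratic has two distinct
roots, giving two distinct points.
-/

open Module
open scoped RealInnerProductSpace

noncomputable section

section Gram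

variable {V : Type*} [NormedAddCommGroup V] [InnerProductSpace ℝ V]

def gramDet (u v : V) : ℝ := ‖u‖ ^ 2 * ‖v‖ ^ 2 - ⟪u, v⟫ ^ 2

lemma gramDet_pos {u v : V} (h : LinearIndependent ℝ ![u, v]) : 0 < gramDet u v := by
  have hu : u ≠ 0 := h.ne_zero 0
  have hw : ‖u‖ ^ 2 • v - ⟪u, v⟫ • u ≠ 0 := by
    intro h0
    have := LinearIndependent.pair_iff.mp h (-⟪u, v⟫) (‖u‖ ^ 2) (by rw [← h0]; module)
    exact pow_ne_zero 2 (norm_ne_zero_iff.mpr hu) this.2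
  have key : ‖‖u‖ ^ 2 • v - ⟪u, v⟫ • u‖ ^ 2 = ‖u‖ ^ 2 * gramDet u v := by
    rw [norm_sub_sq_real, norm_smul, norm_smul, inner_smul_left, inner_smul_right,
      real_inner_comm u v]
    simp only [gramDet, Real.norm_eq_abs, sq_abs, conj_trivial, abs_pow, abs_norm, mul_pow]
    ring
  have hu2 : 0 < ‖u‖ ^ 2 := by positivity
  nlinarith [sq_pos_of_pos (norm_pos_iff.mpr hw)]

/-- The solution of `⟪w, u⟫ = s`, `⟪w, v⟫ = t` by Cramer's rule. -/
def gramSolve (u v : V) (s t : ℝ) : V :=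
  ((‖v‖ ^ 2 * s - ⟪u, v⟫ * t) / gramDet u v) • u +
    ((‖u‖ ^ 2 * t - ⟪u, v⟫ * s) / gramDet u v) • v

variable {u v : V}

lemma inner_gramSolve_left (h : gramDet u v ≠ 0) (s t : ℝ) : ⟪gramSolve u v s t, u⟫ = s := by
  simp only [gramSolve, inner_add_left, inner_smul_left, real_inner_self_eq_norm_sq,
    real_inner_comm u v, conj_trivial]
  field_simp
  simp only [gramDet]
  ring

lemma inner_gramSolve_right (h : gramDet u v ≠ 0) (s t : ℝ) : ⟪gramSolve u v s t, v⟫ = t := by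
  simp only [gramSolve, inner_add_left, inner_smul_left, real_inner_self_eq_norm_sq,
    conj_trivial]
  field_simp
  simp only [gramDet]
  ring

lemma norm_gramSolve_sq (h : gramDet u v ≠ 0) (s t : ℝ) :
    ‖gramSolve u v s t‖ ^ 2 =
      (‖v‖ ^ 2 * s ^ 2 - 2 * ⟪u, v⟫ * s * t + ‖u‖ ^ 2 * t ^ 2) / gramDet u v := by
  rw [← real_inner_self_eq_norm_sq]
  nth_rw 2 [gramSolve]
  rw [inner_add_right, inner_smul_right, inner_smul_right, real_inner_comm _ u,
    inner_gramSolve_left h, inner_gramSolve_right h]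
  field_simp
  ring

lemma eq_gramSolve_iff [Fact (finrank ℝ V = 2)] (h : LinearIndependent ℝ ![u, v]) {w : V}
    {s t : ℝ} : w = gramSolve u v s t ↔ ⟪w, u⟫ = s ∧ ⟪w, v⟫ = t := by
  have hΔ := (gramDet_pos h).ne'
  refine ⟨?_, fun ⟨hs, ht⟩ => ?_⟩
  · rintro rfl
    exact ⟨inner_gramSolve_left hΔ s t, inner_gramSolve_right hΔ s t⟩
  · have hspan : Submodule.span ℝ {u, v} = ⊤ := by
      simpa [Matrix.range_cons, Matrix.range_empty, Set.union_singleton, Set.pair_comm] using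
        h.span_eq_top_of_card_eq_finrank (by simp [Fact.out (p := finrank ℝ V = 2)])
    obtain ⟨a, b, hab⟩ := Submodule.mem_span_pair.mp (hspan ▸ Submodule.mem_top :
      w - gramSolve u v s t ∈ Submodule.span ℝ {u, v})
    rw [← sub_eq_zero, ← inner_self_eq_zero (𝕜 := ℝ)]
    nth_rw 2 [← hab]
    simp only [inner_add_right, inner_smul_right, inner_sub_left, hs, ht,
      inner_gramSolve_left hΔ, inner_gramSolve_right hΔ, sub_self, mul_zero, add_zero]

end Gram

/-- Sixteen times the squared area of a triangle with squared side lengths `x, y, z`. -/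
def heronPoly (x y z : ℝ) : ℝ := 2 * (x * y + y * z + z * x) - (x ^ 2 + y ^ 2 + z ^ 2)

lemma heronPoly_sq (a b c : ℝ) :
    heronPoly (a ^ 2) (b ^ 2) (c ^ 2) = (a + b + c) * (-a + b + c) * (a - b + c) * (a + b - c) := by
  unfold heronPoly; ring

lemma heronPoly_sq_pos {a b c : ℝ} (ha : 0 < a) (h₁ : a < b + c) (h₂ : b < c + a)
    (h₃ : c < a + b) : 0 < heronPoly (a ^ 2) (b ^ 2) (c ^ 2) := by
  rw [heronPoly_sq]
  have : 0 < -a + b + c := by linarith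
  have : 0 < a - b + c := by linarith
  have : 0 < a + b - c := by linarith
  have : 0 < a + b + c := by linarith
  positivity

lemma exists_pair_setOf_quadratic_eq_zero {a b c : ℝ} (ha : a ≠ 0) (hd : 0 < discrim a b c) :
    ∃ x y, x ≠ y ∧ {z | a * (z * z) + b * z + c = 0} = {x, y} := by
  set s := √(discrim a b c)
  have hs : 0 < s := Real.sqrt_pos.mpr hd
  refine ⟨(-b + s) / (2 * a), (-b - s) / (2 * a), ?_, ?_⟩
  · rw [Ne, div_left_inj' (mul_ne_zero two_ne_zero ha)]
    linarith
  · ext z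
    exact quadratic_eq_zero_iff ha (Real.mul_self_sqrt hd.le).symm z

section Ratio

variable {V : Type*} [NormedAddCommGroup V] [InnerProductSpace ℝ V] (u v : V) (α β γ : ℝ)

def ratioVec (l : ℝ) : V :=
  gramSolve u v ((‖u‖ ^ 2 + l * (α - β)) / 2) ((‖v‖ ^ 2 + l * (α - γ)) / 2)

variable {u v α β γ}

lemma norm_sq_eq_mul_iff_eq_ratioVec [Fact (finrank ℝ V = 2)] (h : LinearIndependent ℝ ![u, v])
    (w : V) (l : ℝ) : (‖w‖ ^ 2 = l * α ∧ ‖w - u‖ ^ 2 = l * β ∧ ‖w - v‖ ^ 2 = l * γ) ↔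
      w = ratioVec u v α β γ l ∧ ‖ratioVec u v α β γ l‖ ^ 2 = l * α := by
  rw [norm_sub_sq_real, norm_sub_sq_real]
  constructor
  · rintro ⟨hA, hB, hC⟩
    have hw : w = ratioVec u v α β γ l := (eq_gramSolve_iff h).mpr ⟨by linarith, by linarith⟩
    exact ⟨hw, hw ▸ hA⟩
  · rintro ⟨rfl, hA⟩
    have hΔ := (gramDet_pos h).ne'
    rw [ratioVec] at hA ⊢
    rw [inner_gramSolve_left hΔ, inner_gramSolve_right hΔ, hA]
    refine ⟨rfl, ?_, ?_⟩ <;> ring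

lemma ratioVec_injective (h : LinearIndependent ℝ ![u, v]) (hne : ¬(α = β ∧ α = γ)) :
    Function.Injective (ratioVec u v α β γ) := by
  intro l l' hl
  have hΔ := (gramDet_pos h).ne'
  have hu := congrArg (⟪·, u⟫) hl
  have hv := congrArg (⟪·, v⟫) hl
  simp only [ratioVec, inner_gramSolve_left hΔ, inner_gramSolve_right hΔ] at hu hv
  have hβ : (l - l') * (α - β) = 0 := by linarith
  have hγ : (l - l') * (α - γ) = 0 := by linarith
  by_contra hll
  have hll' : l - l' ≠ 0 := sub_ne_zero.mpr hll
  exact hne ⟨by simpa [hll', sub_eq_zero] using hβ, by simpa [hll', sub_eq_zero] using hγ⟩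

lemma exists_pair_setOf_norm_ratioVec_sq_eq (h : LinearIndependent ℝ ![u, v])
    (hne : ¬(α = β ∧ α = γ))
    (hH : 0 < heronPoly (‖u - v‖ ^ 2 * α) (‖v‖ ^ 2 * β) (‖u‖ ^ 2 * γ)) :
    ∃ l₁ l₂ : ℝ, l₁ ≠ l₂ ∧ {l | ‖ratioVec u v α β γ l‖ ^ 2 = l * α} = {l₁, l₂} := by
  have hΔ := gramDet_pos h
  set p := α - β
  set q := α - γ
  -- `4 Δ (‖ratioVec l‖² - l α) = e₂ l² + e₁ l + e₀`, with `Δ = gramDet u v`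
  set e₂ := ‖v‖ ^ 2 * p ^ 2 - 2 * ⟪u, v⟫ * p * q + ‖u‖ ^ 2 * q ^ 2
  set e₁ := 2 * (p * ‖v‖ ^ 2 * (‖u‖ ^ 2 - ⟪u, v⟫) + q * ‖u‖ ^ 2 * (‖v‖ ^ 2 - ⟪u, v⟫)) -
    4 * gramDet u v * α
  set e₀ := ‖u‖ ^ 2 * ‖v‖ ^ 2 * (‖u‖ ^ 2 + ‖v‖ ^ 2 - 2 * ⟪u, v⟫)
  have hquad (l : ℝ) : ‖ratioVec u v α β γ l‖ ^ 2 = l * α ↔ e₂ * (l * l) + e₁ * l + e₀ = 0 := by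
    rw [ratioVec, norm_gramSolve_sq hΔ.ne', div_eq_iff hΔ.ne']
    constructor <;> intro hl
    · linear_combination 4 * hl
    · linear_combination hl / 4
  have he₂ : e₂ ≠ 0 := by
    have hpq : q • u - p • v ≠ 0 := by
      intro h0
      have := LinearIndependent.pair_iff.mp h q (-p) (by rw [← h0]; module)
      exact hne ⟨by linarith [this.2], by linarith [this.1]⟩
    have : e₂ = ‖q • u - p • v‖ ^ 2 := by
      rw [norm_sub_sq_real, norm_smul, norm_smul, inner_smul_left, inner_smul_right]
      simp only [Real.norm_eq_abs, mul_pow, sq_abs, conj_trivial]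
      ring
    rw [this]
    positivity
  have hdisc : discrim e₂ e₁ e₀ =
      heronPoly (‖u - v‖ ^ 2) (‖v‖ ^ 2) (‖u‖ ^ 2) *
        heronPoly (‖u - v‖ ^ 2 * α) (‖v‖ ^ 2 * β) (‖u‖ ^ 2 * γ) := by
    simp only [discrim, heronPoly, norm_sub_sq_real, e₂, e₁, e₀, p, q, gramDet]
    ring
  have hheron : heronPoly (‖u - v‖ ^ 2) (‖v‖ ^ 2) (‖u‖ ^ 2) = 4 * gramDet u v := by
    simp only [heronPoly, norm_sub_sq_real, gramDet]
    ring
  obtain ⟨l₁, l₂, hl, hroots⟩ :=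
    exists_pair_setOf_quadratic_eq_zero he₂ (by rw [hdisc, hheron]; positivity)
  exact ⟨l₁, l₂, hl, by rw [← hroots]; ext l; exact hquad l⟩

theorem exists_pair_setOf_norm_sq_eq_mul [Fact (finrank ℝ V = 2)]
    (h : LinearIndependent ℝ ![u, v]) (hne : ¬(α = β ∧ α = γ))
    (hH : 0 < heronPoly (‖u - v‖ ^ 2 * α) (‖v‖ ^ 2 * β) (‖u‖ ^ 2 * γ)) :
    ∃ w₁ w₂ : V, w₁ ≠ w₂ ∧
      {w | ∃ l, ‖w‖ ^ 2 = l * α ∧ ‖w - u‖ ^ 2 = l * β ∧ ‖w - v‖ ^ 2 = l * γ} = {w₁, w₂} := by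
  obtain ⟨l₁, l₂, hl, hroots⟩ := exists_pair_setOf_norm_ratioVec_sq_eq h hne hH
  refine ⟨ratioVec u v α β γ l₁, ratioVec u v α β γ l₂, (ratioVec_injective h hne).ne hl, ?_⟩
  rw [← Set.image_pair, ← hroots]
  ext w
  simp only [Set.mem_ofPred_eq, Set.mem_image, norm_sq_eq_mul_iff_eq_ratioVec h]
  exact exists_congr fun l => by rw [eq_comm, and_comm]

end Ratio

lemma AffineIndependent.linearIndependent_vsub_pair {k V P : Type*} [Ring k] [AddCommGroup V]
    [Module k V] [AddTorsor V P] {A B C : P} (h : AffineIndependent k ![A, B, C]) :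
    LinearIndependent k ![B -ᵥ A, C -ᵥ A] := by
  have hvsub : ![B -ᵥ A, C -ᵥ A] =
      (fun i : {x : Fin 3 // x ≠ 0} => ![A, B, C] i -ᵥ ![A, B, C] 0) ∘ finSuccAboveEquiv 0 := by
    ext i
    fin_cases i <;> rfl
  rw [hvsub]
  exact ((affineIndependent_iff_linearIndependent_vsub k _ 0).mp h).comp _ (Equiv.injective _)

theorem exists_pair_setOf_dist_sq_eq_mul {V P : Type*} [NormedAddCommGroup V]
    [InnerProductSpace ℝ V] [MetricSpace P] [NormedAddTorsor V P] [Fact (finrank ℝ V = 2)]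
    {A B C : P} (h : AffineIndependent ℝ ![A, B, C]) {α β γ : ℝ} (hne : ¬(α = β ∧ α = γ))
    (hH : 0 < heronPoly (dist B C ^ 2 * α) (dist C A ^ 2 * β) (dist A B ^ 2 * γ)) :
    ∃ M N : P, M ≠ N ∧
      {X | ∃ l, dist X A ^ 2 = l * α ∧ dist X B ^ 2 = l * β ∧ dist X C ^ 2 = l * γ} = {M, N} := by
  have hdist (X Y : P) : dist X Y = ‖(X -ᵥ A) - (Y -ᵥ A)‖ := by
    rw [vsub_sub_vsub_cancel_right, dist_eq_norm_vsub V]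
  rw [hdist B C, hdist C A, hdist A B, vsub_self, sub_zero, zero_sub, norm_neg] at hH
  obtain ⟨w₁, w₂, hw, hS⟩ := exists_pair_setOf_norm_sq_eq_mul h.linearIndependent_vsub_pair hne hH
  refine ⟨w₁ +ᵥ A, w₂ +ᵥ A, mt (vadd_right_cancel A) hw, ?_⟩
  ext X
  have hX := Set.ext_iff.mp hS (X -ᵥ A)
  simp only [Set.mem_ofPred_eq, Set.mem_insert_iff, Set.mem_singleton_iff] at hX ⊢
  simp only [hdist X, vsub_self, sub_zero, hX, eq_vadd_iff_vsub_eq]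

lemma mul_eq_mul_and_mul_eq_mul_iff_exists_sq {x y z r s t : ℝ} (hx : 0 ≤ x) (hy : 0 ≤ y)
    (hz : 0 ≤ z) (hr : 0 < r) (hs : 0 < s) (ht : 0 < t) :
    (s * x = r * y ∧ t * y = s * z) ↔
      ∃ l, x ^ 2 = l * r ^ 2 ∧ y ^ 2 = l * s ^ 2 ∧ z ^ 2 = l * t ^ 2 := by
  constructor
  · rintro ⟨hxy, hyz⟩
    refine ⟨(x / r) ^ 2, by field_simp, ?_, ?_⟩
    · field_simp
      linear_combination -(r * y + s * x) * hxy
    · have hzx : z * r = t * x := mul_left_cancel₀ hs.ne' (by linear_combination -r * hyz - t * hxy)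
      field_simp
      linear_combination (z * r + t * x) * hzx
  · rintro ⟨l, hlx, hly, hlz⟩
    constructor
    · rw [← sq_eq_sq₀ (by positivity) (by positivity)]
      linear_combination s ^ 2 * hlx - r ^ 2 * hly
    · rw [← sq_eq_sq₀ (by positivity) (by positivity)]
      linear_combination t ^ 2 * hly - s ^ 2 * hlz

theorem stmt1_general (A B C : EuclideanSpace ℝ (Fin 2)) (a b c a₁ b₁ c₁ : ℝ)
    (hABC : AffineIndependent ℝ ![A, B, C])
    (ha : a = dist B C) (hb : b = dist C A) (hc : c = dist A B)
    (ha₁ : 0 < a₁) (hb₁ : 0 < b₁) (hc₁ : 0 < c₁)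
    (htri₁ : a₁ < b₁ + c₁) (htri₂ : b₁ < c₁ + a₁) (htri₃ : c₁ < a₁ + b₁)
    (hprop : ¬ ∃ t : ℝ, 0 < t ∧ a₁ = t * a ∧ b₁ = t * b ∧ c₁ = t * c) :
    ∃ M N : EuclideanSpace ℝ (Fin 2), M ≠ N ∧
      {X : EuclideanSpace ℝ (Fin 2) |
          b₁ * (a * dist X A) = a₁ * (b * dist X B) ∧
          c₁ * (b * dist X B) = b₁ * (c * dist X C)} = {M, N} := by
  have : Fact (finrank ℝ (EuclideanSpace ℝ (Fin 2)) = 2) := ⟨finrank_euclideanSpace_fin⟩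
  have ha0 : 0 < a := ha ▸ dist_pos.mpr (hABC.injective.ne (by decide : (1 : Fin 3) ≠ 2))
  have hb0 : 0 < b := hb ▸ dist_pos.mpr (hABC.injective.ne (by decide : (2 : Fin 3) ≠ 0))
  have hc0 : 0 < c := hc ▸ dist_pos.mpr (hABC.injective.ne (by decide : (0 : Fin 3) ≠ 1))
  have hne : ¬((a₁ / a) ^ 2 = (b₁ / b) ^ 2 ∧ (a₁ / a) ^ 2 = (c₁ / c) ^ 2) := by
    rintro ⟨hab, hac⟩
    rw [sq_eq_sq₀ (by positivity) (by positivity), eq_comm] at hab hac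
    exact hprop ⟨a₁ / a, by positivity, by field_simp, by rw [← hab]; field_simp,
      by rw [← hac]; field_simp⟩
  have hH : 0 < heronPoly (dist B C ^ 2 * (a₁ / a) ^ 2) (dist C A ^ 2 * (b₁ / b) ^ 2)
      (dist A B ^ 2 * (c₁ / c) ^ 2) := by
    rw [← ha, ← hb, ← hc, ← mul_pow, ← mul_pow, ← mul_pow, mul_div_cancel₀ _ ha0.ne',
      mul_div_cancel₀ _ hb0.ne', mul_div_cancel₀ _ hc0.ne']
    exact heronPoly_sq_pos ha₁ htri₁ htri₂ htri₃
  have hscale {k d r : ℝ} (hk : 0 < k) (l : ℝ) :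
      (k * d) ^ 2 = l * r ^ 2 ↔ d ^ 2 = l * (r / k) ^ 2 := by
    rw [div_pow, ← mul_div_assoc, eq_div_iff (by positivity), mul_pow, mul_comm]
  obtain ⟨M, N, hMN, hS⟩ := exists_pair_setOf_dist_sq_eq_mul hABC hne hH
  refine ⟨M, N, hMN, hS ▸ Set.ext fun X => ?_⟩
  rw [Set.mem_ofPred_eq, Set.mem_ofPred_eq, mul_eq_mul_and_mul_eq_mul_iff_exists_sq
    (by positivity) (by positivity) (by positivity) ha₁ hb₁ hc₁]
  simp only [hscale ha0, hscale hb0, hscale hc0]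

theorem stmt1 (A B C O : EuclideanSpace ℝ (Fin 2)) (R a b c a₁ b₁ c₁ : ℝ)
    (hABC : AffineIndependent ℝ ![A, B, C])
    (hR : 0 < R) (hOA : dist O A = R) (hOB : dist O B = R) (hOC : dist O C = R)
    (ha : a = dist B C) (hb : b = dist C A) (hc : c = dist A B)
    (ha₁ : 0 < a₁) (hb₁ : 0 < b₁) (hc₁ : 0 < c₁)
    (htri₁ : a₁ < b₁ + c₁) (htri₂ : b₁ < c₁ + a₁) (htri₃ : c₁ < a₁ + b₁)
    (hprop : ¬ ∃ t : ℝ, 0 < t ∧ a₁ = t * a ∧ b₁ = t * b ∧ c₁ = t * c) :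
    ∃ M N : EuclideanSpace ℝ (Fin 2), M ≠ N ∧
      {X : EuclideanSpace ℝ (Fin 2) |
          b₁ * (a * dist X A) = a₁ * (b * dist X B) ∧
          c₁ * (b * dist X B) = b₁ * (c * dist X C)} = {M, N} :=
  stmt1_general A B C a b c a₁ b₁ c₁ hABC ha hb hc ha₁ hb₁ hc₁ htri₁ htri₂ htri₃ hprop
end
end

section
/- Let a₁, b₁, c₁ > 0 satisfy the strict triangle inequalities. Then: (i) there exists exactly one point M with dist O M < R such that b₁ · (a · dist M A) = a₁ · (b · dist M B) and c₁ · (b · dist M B) = b₁ · (c · dist M C); (ii) if moreover (a₁, b₁, c₁) is not proportional to (a, b, c), there exists exactly one point N with dist O N > R satisfying the same two equations, and this N is the inverse of the point M from (i) with respect to the circumcircle: N = inversion O R M. -/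
/-!
Invert in the vertex `A` with radius `1`, writing `X'` for the image of `X`. Since
`X'Y' = XY / (XA · YA)`, the two equations for `M ≠ A` say that the triangle `B'C'M'` has side
ratios `a₁ : b₁ : c₁`. By the triangle inequalities there is exactly one such `M'` on each side of
the line `B'C'`. This line is the image of the circumcircle, namely the perpendicular bisector of
`A` and `O'`; the interior of the circumcircle goes to the side of `O'` and the exterior to the side
of `A`. Hence there is exactly one inner solution and at most one outer one. Inversion in the
circumcircle multiplies `MA`, `MB`, `MC` by a common factor, so it sends the inner solution `M` to
an outer one, unless `M = O`, which forces `(a₁, b₁, c₁)` to be proportional to `(a, b, c)`.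
-/

open EuclideanGeometry AffineSubspace Module RealInnerProductSpace

variable {V P : Type*} [NormedAddCommGroup V] [InnerProductSpace ℝ V] [MetricSpace P]
  [NormedAddTorsor V P]

namespace EuclideanGeometry

theorem dist_sq_sub_dist_sq_of_mem_perpBisector {p₁ p₂ c : P} (hc : c ∈ perpBisector p₁ p₂)
    (x : P) : dist x p₁ ^ 2 - dist x p₂ ^ 2 = 2 * ⟪x -ᵥ c, p₂ -ᵥ p₁⟫ := by
  rw [mem_perpBisector_iff_inner_eq] at hc
  rw [dist_eq_norm_vsub V, dist_eq_norm_vsub V, ← vsub_sub_vsub_cancel_right x p₂ p₁,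
    norm_sub_sq_real, ← vsub_sub_vsub_cancel_right x c p₁, inner_sub_left, hc,
    dist_eq_norm_vsub' V]
  ring

theorem exists_dist_eq_dist_eq_of_inner_eq_zero {c₁ c₂ : P} {v : V} (hv : v ≠ 0)
    (hperp : ⟪c₂ -ᵥ c₁, v⟫ = 0) {r₁ r₂ : ℝ} (h₁ : dist c₁ c₂ < r₁ + r₂)
    (h₂ : r₁ < r₂ + dist c₁ c₂) (h₃ : r₂ < r₁ + dist c₁ c₂) :
    ∃ t s : ℝ, 0 < s ∧ ∀ σ : ℝ, σ ^ 2 = s ^ 2 →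
      dist ((t • (c₂ -ᵥ c₁) + σ • v) +ᵥ c₁) c₁ = r₁ ∧
        dist ((t • (c₂ -ᵥ c₁) + σ • v) +ᵥ c₁) c₂ = r₂ := by
  set d := dist c₁ c₂
  have hd : 0 < d := by linarith
  set t := (d ^ 2 + r₁ ^ 2 - r₂ ^ 2) / (2 * d ^ 2) with ht
  -- Heron: `4 d² (r₁² - t² d²)` is `16` times the squared area of the triangle `d, r₁, r₂`
  have hq : 0 < r₁ ^ 2 - t ^ 2 * d ^ 2 := by
    have hfac : r₁ ^ 2 - t ^ 2 * d ^ 2 =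
        (r₁ + r₂ - d) * (r₂ + d - r₁) * (d + r₁ - r₂) * (d + r₁ + r₂) / (4 * d ^ 2) := by
      rw [ht]; field_simp; ring
    have : 0 < r₁ + r₂ - d := by linarith
    have : 0 < r₂ + d - r₁ := by linarith
    have : 0 < d + r₁ - r₂ := by linarith
    have : 0 < d + r₁ + r₂ := by linarith
    rw [hfac]; positivity
  have hv₀ : 0 < ‖v‖ := norm_pos_iff.2 hv
  refine ⟨t, √(r₁ ^ 2 - t ^ 2 * d ^ 2) / ‖v‖, by positivity, fun σ hσ ↦ ?_⟩
  have hσv : σ ^ 2 * ‖v‖ ^ 2 = r₁ ^ 2 - t ^ 2 * d ^ 2 := by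
    rw [hσ, div_pow, Real.sq_sqrt hq.le]; field_simp
  have hnorm (u : ℝ) : ‖u • (c₂ -ᵥ c₁) + σ • v‖ ^ 2 = u ^ 2 * d ^ 2 + σ ^ 2 * ‖v‖ ^ 2 := by
    rw [sq, norm_add_sq_eq_norm_sq_add_norm_sq_real
      (by rw [real_inner_smul_left, real_inner_smul_right, hperp]; ring),
      norm_smul, norm_smul, ← dist_eq_norm_vsub' V, Real.norm_eq_abs, Real.norm_eq_abs]
    rw [← sq_abs u, ← sq_abs σ]; ring
  constructor
  · rw [dist_vadd_left, ← sq_eq_sq₀ (norm_nonneg _) (by linarith), hnorm, hσv]; ring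
  · rw [dist_eq_norm_vsub V, vadd_vsub_assoc, ← sq_eq_sq₀ (norm_nonneg _) (by linarith),
      show t • (c₂ -ᵥ c₁) + σ • v + (c₁ -ᵥ c₂) = (t - 1) • (c₂ -ᵥ c₁) + σ • v by
        rw [← neg_vsub_eq_vsub_rev c₂ c₁, sub_smul, one_smul]; abel,
      hnorm, hσv, ht]
    field_simp; ring

theorem existsUnique_dist_eq_mul_dist_eq_mul_dist_lt [FiniteDimensional ℝ V]
    (hV : finrank ℝ V = 2) {p q c₁ c₂ : P} (hpq : p ≠ q) (hc₁ : c₁ ∈ perpBisector p q)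
    (hc₂ : c₂ ∈ perpBisector p q) (hc : c₁ ≠ c₂) {a b c : ℝ} (ha : 0 < a) (h₁ : a < b + c)
    (h₂ : b < c + a) (h₃ : c < a + b) :
    ∃! x, (dist x c₁ = b / a * dist c₁ c₂ ∧ dist x c₂ = c / a * dist c₁ c₂) ∧
      dist x q < dist x p := by
  set v := q -ᵥ p
  have hside (x : P) : dist x q < dist x p ↔ 0 < ⟪x -ᵥ c₁, v⟫ := by
    rw [← pow_lt_pow_iff_left₀ dist_nonneg dist_nonneg two_ne_zero, ← sub_pos,
      dist_sq_sub_dist_sq_of_mem_perpBisector hc₁]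
    exact mul_pos_iff_of_pos_left two_pos
  have hperp : ⟪c₂ -ᵥ c₁, v⟫ = 0 := by
    have := dist_sq_sub_dist_sq_of_mem_perpBisector hc₁ c₂
    rw [mem_perpBisector_iff_dist_eq.1 hc₂, sub_self] at this
    linarith
  have hd : 0 < dist c₁ c₂ := dist_pos.2 hc
  have hscale {x y z : ℝ} (h : x < y + z) :
      x / a * dist c₁ c₂ < y / a * dist c₁ c₂ + z / a * dist c₁ c₂ := by
    rw [← add_mul, ← add_div]; gcongr
  obtain ⟨t, s, hs, hx⟩ := exists_dist_eq_dist_eq_of_inner_eq_zero (vsub_ne_zero.2 hpq.symm)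
    hperp (by simpa [ha.ne'] using hscale h₁) (by simpa [ha.ne'] using hscale h₂)
    (by simpa [ha.ne', add_comm] using hscale h₃)
  set x : ℝ → P := fun σ ↦ (t • (c₂ -ᵥ c₁) + σ • v) +ᵥ c₁
  have hinner (σ : ℝ) : ⟪x σ -ᵥ c₁, v⟫ = σ * ‖v‖ ^ 2 := by
    simp only [x, vadd_vsub, inner_add_left, real_inner_smul_left, hperp,
      real_inner_self_eq_norm_sq]
    ring
  have hsv : 0 < s * ‖v‖ ^ 2 := mul_pos hs (pow_pos (norm_pos_iff.2 (vsub_ne_zero.2 hpq.symm)) 2)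
  refine ⟨x s, ⟨hx s rfl, (hside _).2 (by rwa [hinner])⟩, ?_⟩
  rintro y ⟨⟨hy₁, hy₂⟩, hy⟩
  have hne : x s ≠ x (-s) := by
    intro h
    have := hinner s
    rw [h, hinner] at this
    linarith
  obtain ⟨hs₁, hs₂⟩ := hx s rfl
  obtain ⟨hs₁', hs₂'⟩ := hx (-s) (neg_sq s)
  rcases eq_of_dist_eq_of_dist_eq_of_finrank_eq_two hV hc hne hs₁ hs₁' hy₁ hs₂ hs₂' hy₂ with h | h
  · exact h
  · rw [h, hside, hinner] at hy
    linarith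

theorem dist_inversion_inversion_mul_dist_center {c x y : P} (hx : x ≠ c) (hy : y ≠ c)
    (R : ℝ) : dist (inversion c R x) (inversion c R y) * dist y c =
      dist x y * dist (inversion c R x) c := by
  rw [dist_inversion_inversion hx hy, dist_inversion_center]
  field_simp [dist_ne_zero.2 hy]

theorem dist_inversion_inversion_lt_iff {c x y : P} {R : ℝ} (hR : R ≠ 0) (hx : x ≠ c)
    (hy : y ≠ c) :
    dist (inversion c R x) (inversion c R y) < dist (inversion c R x) c ↔ dist x y < dist y c := by
  have h := dist_inversion_inversion_mul_dist_center hx hy R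
  have hyc : 0 < dist y c := dist_pos.2 hy
  have hxc : 0 < dist (inversion c R x) c := dist_pos.2 (by simpa [hR] using hx)
  constructor <;> intro <;> nlinarith

theorem dist_inversion_lt_dist_inversion_inversion_iff {c x y : P} {R : ℝ} (hR : R ≠ 0)
    (hx : x ≠ c) (hy : y ≠ c) :
    dist (inversion c R x) c < dist (inversion c R x) (inversion c R y) ↔ dist y c < dist x y := by
  have h := dist_inversion_inversion_mul_dist_center hx hy R
  have hyc : 0 < dist y c := dist_pos.2 hy
  have hxc : 0 < dist (inversion c R x) c := dist_pos.2 (by simpa [hR] using hx)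
  constructor <;> intro <;> nlinarith

theorem dist_inversion_of_mem_sphere {c x y : P} {R : ℝ} (hR : R ≠ 0) (hx : x ≠ c)
    (hy : y ∈ Metric.sphere c R) : dist (inversion c R x) y = R / dist x c * dist x y := by
  conv_lhs => rw [← inversion_of_mem_sphere hy]
  rw [dist_inversion_inversion hx (Metric.ne_of_mem_sphere hy hR), Metric.mem_sphere.1 hy]
  field_simp

end EuclideanGeometry

-- `a · MA`, `b · MB`, `c · MC` are `2R` times the sides of the pedal triangle of `M`.
def HasWeightedDistRatio (A B C : P) (a₁ b₁ c₁ : ℝ) (M : P) : Prop :=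
  b₁ * (dist B C * dist M A) = a₁ * (dist C A * dist M B) ∧
    c₁ * (dist C A * dist M B) = b₁ * (dist A B * dist M C)

theorem hasWeightedDistRatio_iff_inversion {A B C M : P} {R : ℝ} (hR : R ≠ 0) (hBA : B ≠ A)
    (hCA : C ≠ A) {a₁ b₁ c₁ : ℝ} (ha₁ : a₁ ≠ 0) (hb₁ : b₁ ≠ 0) :
    HasWeightedDistRatio A B C a₁ b₁ c₁ M ↔ M ≠ A ∧
      dist (inversion A R M) (inversion A R B) =
        b₁ / a₁ * dist (inversion A R B) (inversion A R C) ∧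
      dist (inversion A R M) (inversion A R C) =
        c₁ / a₁ * dist (inversion A R B) (inversion A R C) := by
  have hBA' := dist_ne_zero.2 hBA
  have hCA' := dist_ne_zero.2 hCA
  rcases eq_or_ne M A with rfl | hMA
  · refine iff_of_false (fun ⟨h, _⟩ ↦ ?_) (fun h ↦ h.1 rfl)
    rw [dist_self, mul_zero, mul_zero, dist_comm M B] at h
    exact mul_ne_zero ha₁ (mul_ne_zero hCA' hBA') h.symm
  have hMA' := dist_ne_zero.2 hMA
  rw [HasWeightedDistRatio, dist_inversion_inversion hMA hBA, dist_inversion_inversion hMA hCA,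
    dist_inversion_inversion hBA hCA, dist_comm A B]
  simp only [ne_eq, hMA, not_false_eq_true, true_and]
  constructor
  · rintro ⟨h₁, h₂⟩
    constructor
    · field_simp
      linear_combination -h₁
    · field_simp
      refine mul_left_cancel₀ hb₁ ?_
      linear_combination (-a₁) * h₂ - c₁ * h₁
  · rintro ⟨h₁, h₂⟩
    field_simp at h₁ h₂
    refine ⟨by linear_combination -h₁, mul_left_cancel₀ ha₁ ?_⟩
    linear_combination c₁ * h₁ - b₁ * h₂

theorem HasWeightedDistRatio.inversion {A B C O M : P} {R : ℝ} {a₁ b₁ c₁ : ℝ}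
    (h : HasWeightedDistRatio A B C a₁ b₁ c₁ M) (hR : R ≠ 0) (hM : M ≠ O)
    (hA : A ∈ Metric.sphere O R) (hB : B ∈ Metric.sphere O R) (hC : C ∈ Metric.sphere O R) :
    HasWeightedDistRatio A B C a₁ b₁ c₁ (inversion O R M) := by
  rw [HasWeightedDistRatio, dist_inversion_of_mem_sphere hR hM hA,
    dist_inversion_of_mem_sphere hR hM hB, dist_inversion_of_mem_sphere hR hM hC]
  exact ⟨by linear_combination (R / dist M O) * h.1, by linear_combination (R / dist M O) * h.2⟩

theorem HasWeightedDistRatio.exists_pos_eq_mul_of_dist_eq {A B C O : P} {a₁ b₁ c₁ : ℝ}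
    (h : HasWeightedDistRatio A B C a₁ b₁ c₁ O) (hOA : O ≠ A) (hOB : dist O B = dist O A)
    (hOC : dist O C = dist O A) (hBC : B ≠ C) (hCA : C ≠ A) (ha₁ : 0 < a₁) :
    ∃ t : ℝ, 0 < t ∧ a₁ = t * dist B C ∧ b₁ = t * dist C A ∧ c₁ = t * dist A B := by
  obtain ⟨h₁, h₂⟩ := h
  rw [hOB] at h₁
  rw [hOB, hOC] at h₂
  have hR := dist_ne_zero.2 hOA
  have hBC' := dist_ne_zero.2 hBC
  have hCA' := dist_ne_zero.2 hCA
  refine ⟨a₁ / dist B C, by positivity, by field_simp, ?_, ?_⟩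
  · field_simp
    refine mul_right_cancel₀ hR ?_
    linear_combination h₁
  · field_simp
    refine mul_right_cancel₀ (mul_ne_zero hR hCA') ?_
    linear_combination dist A B * h₁ + dist B C * h₂

theorem existsUnique_hasWeightedDistRatio_inside_and_subsingleton_outside [FiniteDimensional ℝ V]
    (hV : finrank ℝ V = 2) {A B C O : P} (hAB : A ≠ B) (hAC : A ≠ C) (hBC : B ≠ C) (hOA : O ≠ A)
    (hOB : dist O B = dist O A) (hOC : dist O C = dist O A) {a₁ b₁ c₁ : ℝ} (ha₁ : 0 < a₁)
    (hb₁ : 0 < b₁) (h₁ : a₁ < b₁ + c₁) (h₂ : b₁ < c₁ + a₁) (h₃ : c₁ < a₁ + b₁) :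
    (∃! M, dist O M < dist O A ∧ HasWeightedDistRatio A B C a₁ b₁ c₁ M) ∧
      {N | dist O A < dist O N ∧ HasWeightedDistRatio A B C a₁ b₁ c₁ N}.Subsingleton := by
  set ι := inversion A (1 : ℝ)
  have hperp {X : P} (hXA : X ≠ A) (hX : dist O X = dist O A) : ι X ∈ perpBisector A (ι O) :=
    (inversion_mem_perpBisector_inversion_iff one_ne_zero hXA hOA).2 (by rwa [dist_comm])
  have hAO' : A ≠ ι O := (center_eq_inversion one_ne_zero).not.2 hOA
  have hB'C' : ι B ≠ ι C := (inversion_injective A one_ne_zero).ne hBC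
  have hsol (M : P) := hasWeightedDistRatio_iff_inversion (M := M) (c₁ := c₁) one_ne_zero
    hAB.symm hAC.symm ha₁.ne' hb₁.ne'
  constructor
  · refine ((inversion_involutive A one_ne_zero).toPerm ι).existsUnique_congr (fun M ↦ ?_) |>.2
      (existsUnique_dist_eq_mul_dist_eq_mul_dist_lt hV hAO' (hperp hAB.symm hOB)
        (hperp hAC.symm hOC) hB'C' ha₁ h₁ h₂ h₃)
    rcases eq_or_ne M A with rfl | hMA
    · simp [ι]
    · rw [hsol, Function.Involutive.coe_toPerm, dist_inversion_inversion_lt_iff one_ne_zero hMA hOA,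
        dist_comm M O]
      tauto
  · rintro N₁ ⟨hN₁, hsol₁⟩ N₂ ⟨hN₂, hsol₂⟩
    rw [hsol] at hsol₁ hsol₂
    rw [perpBisector_comm] at hperp
    refine inversion_injective A one_ne_zero <|
      (existsUnique_dist_eq_mul_dist_eq_mul_dist_lt hV hAO'.symm (hperp hAB.symm hOB)
        (hperp hAC.symm hOC) hB'C' ha₁ h₁ h₂ h₃).unique ⟨hsol₁.2, ?_⟩ ⟨hsol₂.2, ?_⟩
    · rwa [dist_inversion_lt_dist_inversion_inversion_iff one_ne_zero hsol₁.1 hOA, dist_comm N₁]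
    · rwa [dist_inversion_lt_dist_inversion_inversion_iff one_ne_zero hsol₂.1 hOA, dist_comm N₂]

theorem stmt2_general (A B C O : EuclideanSpace ℝ (Fin 2)) (R a b c a₁ b₁ c₁ : ℝ)
    (hABC : AffineIndependent ℝ ![A, B, C])
    (hR : 0 < R) (hOA : dist O A = R) (hOB : dist O B = R) (hOC : dist O C = R)
    (ha : a = dist B C) (hb : b = dist C A) (hc : c = dist A B)
    (ha₁ : 0 < a₁) (hb₁ : 0 < b₁)
    (htri₁ : a₁ < b₁ + c₁) (htri₂ : b₁ < c₁ + a₁) (htri₃ : c₁ < a₁ + b₁) :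
    (∃! M : EuclideanSpace ℝ (Fin 2), dist O M < R ∧
        b₁ * (a * dist M A) = a₁ * (b * dist M B) ∧
        c₁ * (b * dist M B) = b₁ * (c * dist M C)) ∧
    ((¬ ∃ t : ℝ, 0 < t ∧ a₁ = t * a ∧ b₁ = t * b ∧ c₁ = t * c) →
      (∃! N : EuclideanSpace ℝ (Fin 2), R < dist O N ∧
          b₁ * (a * dist N A) = a₁ * (b * dist N B) ∧
          c₁ * (b * dist N B) = b₁ * (c * dist N C)) ∧
      (∀ M N : EuclideanSpace ℝ (Fin 2),
        (dist O M < R ∧ b₁ * (a * dist M A) = a₁ * (b * dist M B) ∧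
            c₁ * (b * dist M B) = b₁ * (c * dist M C)) →
        (R < dist O N ∧ b₁ * (a * dist N A) = a₁ * (b * dist N B) ∧
            c₁ * (b * dist N B) = b₁ * (c * dist N C)) →
        N = inversion O R M)) := by
  subst ha hb hc hOA
  have hne {i j : Fin 3} (hij : i ≠ j) : ![A, B, C] i ≠ ![A, B, C] j := hABC.injective.ne hij
  have hAB : A ≠ B := hne (i := 0) (j := 1) (by decide)
  have hAC : A ≠ C := hne (i := 0) (j := 2) (by decide)
  have hBC : B ≠ C := hne (i := 1) (j := 2) (by decide)
  have hOA : O ≠ A := dist_pos.1 hR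
  obtain ⟨hin, hout⟩ := existsUnique_hasWeightedDistRatio_inside_and_subsingleton_outside
    finrank_euclideanSpace_fin hAB hAC hBC hOA hOB hOC ha₁ hb₁ htri₁ htri₂ htri₃
  refine ⟨hin, fun hnp ↦ ?_⟩
  have hinv {M} (hM : dist O M < dist O A ∧ HasWeightedDistRatio A B C a₁ b₁ c₁ M) :
      dist O A < dist O (inversion O (dist O A) M) ∧
        HasWeightedDistRatio A B C a₁ b₁ c₁ (inversion O (dist O A) M) := by
    have hMO : M ≠ O := by
      rintro rfl
      exact hnp (hM.2.exists_pos_eq_mul_of_dist_eq hOA hOB hOC hBC hAC.symm ha₁)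
    refine ⟨?_, hM.2.inversion hR.ne' hMO (Metric.mem_sphere'.2 rfl) (Metric.mem_sphere'.2 hOB)
      (Metric.mem_sphere'.2 hOC)⟩
    rw [dist_center_inversion, lt_div_iff₀ (dist_pos.2 hMO.symm), sq]
    exact mul_lt_mul_of_pos_left hM.1 hR
  obtain ⟨M₀, hM₀, -⟩ := hin
  exact ⟨⟨_, hinv hM₀, fun N hN ↦ hout hN (hinv hM₀)⟩, fun M N hM hN ↦ hout hN (hinv hM)⟩

theorem stmt2 (A B C O : EuclideanSpace ℝ (Fin 2)) (R a b c a₁ b₁ c₁ : ℝ)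
    (hABC : AffineIndependent ℝ ![A, B, C])
    (hR : 0 < R) (hOA : dist O A = R) (hOB : dist O B = R) (hOC : dist O C = R)
    (ha : a = dist B C) (hb : b = dist C A) (hc : c = dist A B)
    (ha₁ : 0 < a₁) (hb₁ : 0 < b₁) (hc₁ : 0 < c₁)
    (htri₁ : a₁ < b₁ + c₁) (htri₂ : b₁ < c₁ + a₁) (htri₃ : c₁ < a₁ + b₁) :
    (∃! M : EuclideanSpace ℝ (Fin 2), dist O M < R ∧
        b₁ * (a * dist M A) = a₁ * (b * dist M B) ∧
        c₁ * (b * dist M B) = b₁ * (c * dist M C)) ∧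
    ((¬ ∃ t : ℝ, 0 < t ∧ a₁ = t * a ∧ b₁ = t * b ∧ c₁ = t * c) →
      (∃! N : EuclideanSpace ℝ (Fin 2), R < dist O N ∧
          b₁ * (a * dist N A) = a₁ * (b * dist N B) ∧
          c₁ * (b * dist N B) = b₁ * (c * dist N C)) ∧
      (∀ M N : EuclideanSpace ℝ (Fin 2),
        (dist O M < R ∧ b₁ * (a * dist M A) = a₁ * (b * dist M B) ∧
            c₁ * (b * dist M B) = b₁ * (c * dist M C)) →
        (R < dist O N ∧ b₁ * (a * dist N A) = a₁ * (b * dist N B) ∧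
            c₁ * (b * dist N B) = b₁ * (c * dist N C)) →
        N = inversion O R M)) :=
  stmt2_general A B C O R a b c a₁ b₁ c₁ hABC hR hOA hOB hOC ha hb hc ha₁ hb₁ htri₁ htri₂ htri₃
end

section
/- For any point M in the plane, the sides of its pedal triangle satisfy dist B₁ C₁ = (a · dist M A)/(2R), dist C₁ A₁ = (b · dist M B)/(2R), and dist A₁ B₁ = (c · dist M C)/(2R). -/
/-!
The feet of the perpendiculars from `M` to the two sides through a vertex `X` are at distance
`XM · sin X` from each other, and by the extended law of sines `sin A = a / (2R)`.
-/

open EuclideanGeometry InnerProductGeometry Module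
open scoped RealInnerProductSpace

section Plane

variable {V : Type*} [NormedAddCommGroup V] [InnerProductSpace ℝ V] [Fact (finrank ℝ V = 2)]

attribute [local instance] FiniteDimensional.of_fact_finrank_eq_two

theorem inner_sq_mul_add_inner_sq_mul_sub_eq_of_finrank_eq_two (u v m : V) :
    ⟪u, m⟫ ^ 2 * ⟪v, v⟫ + ⟪v, m⟫ ^ 2 * ⟪u, u⟫ - 2 * (⟪u, m⟫ * ⟪v, m⟫ * ⟪u, v⟫) =
      ⟪m, m⟫ * (⟪u, u⟫ * ⟪v, v⟫ - ⟪u, v⟫ * ⟪u, v⟫) := by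
  -- the difference of the two sides is the Gram determinant of `u, v, m`, which vanishes in a plane
  let b := (stdOrthonormalBasis ℝ V).reindex (finCongr (Fact.out : finrank ℝ V = 2))
  have hinner : ∀ x y : V, ⟪x, y⟫ = ⟪b 0, x⟫ * ⟪b 0, y⟫ + ⟪b 1, x⟫ * ⟪b 1, y⟫ := fun x y => by
    rw [← b.sum_inner_mul_inner x y, Fin.sum_univ_two, real_inner_comm x, real_inner_comm x]
  simp only [hinner u, hinner v, hinner m]
  ring

theorem norm_starProjection_singleton_sub_eq_mul_sin_angle {u v : V} (hu : u ≠ 0) (hv : v ≠ 0)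
    (m : V) :
    ‖(ℝ ∙ u).starProjection m - (ℝ ∙ v).starProjection m‖ = ‖m‖ * Real.sin (angle u v) := by
  have hsin : (Real.sin (angle u v) * (‖u‖ * ‖v‖)) ^ 2 = ⟪u, u⟫ * ⟪v, v⟫ - ⟪u, v⟫ * ⟪u, v⟫ := by
    rw [sin_angle_mul_norm_mul_norm, Real.sq_sqrt]
    nlinarith [real_inner_mul_inner_self_le u v, abs_real_inner_le_norm u v]
  have hsin' : Real.sin (angle u v) ^ 2 =
      (⟪u, u⟫ * ⟪v, v⟫ - ⟪u, v⟫ * ⟪u, v⟫) / (⟪u, u⟫ * ⟪v, v⟫) := by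
    rw [← hsin, real_inner_self_eq_norm_sq, real_inner_self_eq_norm_sq]
    field_simp [norm_ne_zero_iff.2 hu, norm_ne_zero_iff.2 hv]
  rw [← sq_eq_sq₀ (norm_nonneg _) (mul_nonneg (norm_nonneg _) (sin_angle_nonneg u v)),
    Submodule.starProjection_singleton, Submodule.starProjection_singleton, norm_sub_sq_real,
    mul_pow, hsin', norm_smul, norm_smul, real_inner_smul_left, real_inner_smul_right]
  simp only [Real.norm_eq_abs, mul_pow, sq_abs, ← real_inner_self_eq_norm_sq,
    RCLike.ofReal_real_eq_id, id_eq]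
  field_simp
  linear_combination inner_sq_mul_add_inner_sq_mul_sub_eq_of_finrank_eq_two u v m

end Plane

section Euclidean

variable {V P : Type*} [NormedAddCommGroup V] [InnerProductSpace ℝ V] [MetricSpace P]
  [NormedAddTorsor V P]

theorem Affine.Simplex.circumradius_eq_of_dist_eq_of_finrank_eq [FiniteDimensional ℝ V] {n : ℕ}
    (s : Affine.Simplex ℝ P n) (hn : finrank ℝ V = n) {O : P} {R : ℝ}
    (hO : ∀ i, dist (s.points i) O = R) : s.circumradius = R := by
  have hspan : affineSpan ℝ (Set.range s.points) = ⊤ := by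
    rw [s.independent.affineSpan_eq_top_iff_card_eq_finrank_add_one, hn, Fintype.card_fin]
  exact (s.eq_circumradius_of_dist_eq (hspan ▸ AffineSubspace.mem_top ℝ V O) hO).symm

theorem Affine.Triangle.sin_angle_eq_dist_div_two_mul_circumradius (t : Affine.Triangle ℝ P)
    {i₁ i₂ i₃ : Fin 3} (h₁₂ : i₁ ≠ i₂) (h₁₃ : i₁ ≠ i₃) (h₂₃ : i₂ ≠ i₃) :
    Real.sin (∠ (t.points i₁) (t.points i₂) (t.points i₃)) =
      dist (t.points i₁) (t.points i₃) / (2 * t.circumradius) := by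
  have h := t.dist_div_sin_angle_eq_two_mul_circumradius h₁₂ h₁₃ h₂₃
  have hR := t.circumradius_pos
  have hsin : Real.sin (∠ (t.points i₁) (t.points i₂) (t.points i₃)) ≠ 0 := by
    intro h0
    rw [h0, div_zero] at h
    linarith
  rw [eq_div_iff (by positivity), ← h, mul_div_cancel₀ _ hsin]

theorem orthogonalProjection_line_vsub_left (X Y M : P) :
    (orthogonalProjection line[ℝ, X, Y] M : P) -ᵥ X = (ℝ ∙ (Y -ᵥ X)).starProjection (M -ᵥ X) := by
  have hdir : line[ℝ, X, Y].direction = ℝ ∙ (Y -ᵥ X) := by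
    rw [direction_affineSpan, vectorSpan_pair_rev]
  rw [orthogonalProjection_apply_mem _ (left_mem_affineSpan_pair ℝ X Y), vadd_vsub,
    Submodule.coe_orthogonalProjectionOnto_apply]
  simp only [hdir]

variable [Fact (finrank ℝ V = 2)]

theorem dist_orthogonalProjection_line_line_eq_dist_mul_sin_angle {X Y Z : P} (hY : X ≠ Y)
    (hZ : X ≠ Z) (M : P) :
    dist (orthogonalProjection line[ℝ, Y, X] M : P) (orthogonalProjection line[ℝ, X, Z] M : P) =
      dist M X * Real.sin (∠ Y X Z) := by
  rw [eq_orthogonalProjection_of_eq_subspace (s' := line[ℝ, X, Y]) (by rw [Set.pair_comm]),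
    dist_eq_norm_vsub V, ← vsub_sub_vsub_cancel_right _ _ X,
    orthogonalProjection_line_vsub_left, orthogonalProjection_line_vsub_left,
    norm_starProjection_singleton_sub_eq_mul_sin_angle (vsub_ne_zero.2 hY.symm)
      (vsub_ne_zero.2 hZ.symm), dist_eq_norm_vsub V]
  rfl

end Euclidean

theorem stmt3_general (A B C O M A₁ B₁ C₁ : EuclideanSpace ℝ (Fin 2)) (R a b c : ℝ)
    (hABC : AffineIndependent ℝ ![A, B, C])
    (hOA : dist O A = R) (hOB : dist O B = R) (hOC : dist O C = R)
    (ha : a = dist B C) (hb : b = dist C A) (hc : c = dist A B)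
    (hA₁ : A₁ = EuclideanGeometry.orthogonalProjection (affineSpan ℝ {B, C}) M)
    (hB₁ : B₁ = EuclideanGeometry.orthogonalProjection (affineSpan ℝ {C, A}) M)
    (hC₁ : C₁ = EuclideanGeometry.orthogonalProjection (affineSpan ℝ {A, B}) M) :
    dist B₁ C₁ = (a * dist M A) / (2 * R) ∧
    dist C₁ A₁ = (b * dist M B) / (2 * R) ∧
    dist A₁ B₁ = (c * dist M C) / (2 * R) := by
  have : Fact (finrank ℝ (EuclideanSpace ℝ (Fin 2)) = 2) := ⟨finrank_euclideanSpace_fin⟩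
  let t : Affine.Triangle ℝ (EuclideanSpace ℝ (Fin 2)) := ⟨![A, B, C], hABC⟩
  have hRt : t.circumradius = R := by
    refine t.circumradius_eq_of_dist_eq_of_finrank_eq finrank_euclideanSpace_fin (O := O)
      fun i => ?_
    fin_cases i <;> rw [dist_comm] <;> assumption
  have hsin {i j k : Fin 3} (hij : i ≠ j) (hik : i ≠ k) (hjk : j ≠ k) :
      Real.sin (∠ (t.points i) (t.points j) (t.points k)) =
        dist (t.points i) (t.points k) / (2 * R) :=
    hRt ▸ t.sin_angle_eq_dist_div_two_mul_circumradius hij hik hjk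
  have hsinA : Real.sin (∠ C A B) = dist B C / (2 * R) := by
    rw [dist_comm]; exact hsin (i := 2) (j := 0) (k := 1) (by decide) (by decide) (by decide)
  have hsinB : Real.sin (∠ A B C) = dist C A / (2 * R) := by
    rw [dist_comm]; exact hsin (i := 0) (j := 1) (k := 2) (by decide) (by decide) (by decide)
  have hsinC : Real.sin (∠ B C A) = dist A B / (2 * R) := by
    rw [dist_comm]; exact hsin (i := 1) (j := 2) (k := 0) (by decide) (by decide) (by decide)
  have hAB : A ≠ B := hABC.injective.ne (by decide : (0 : Fin 3) ≠ 1)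
  have hBC : B ≠ C := hABC.injective.ne (by decide : (1 : Fin 3) ≠ 2)
  have hCA : C ≠ A := hABC.injective.ne (by decide : (2 : Fin 3) ≠ 0)
  subst ha hb hc hA₁ hB₁ hC₁
  refine ⟨?_, ?_, ?_⟩
  · rw [dist_orthogonalProjection_line_line_eq_dist_mul_sin_angle hCA.symm hAB, hsinA]; ring
  · rw [dist_orthogonalProjection_line_line_eq_dist_mul_sin_angle hAB.symm hBC, hsinB]; ring
  · rw [dist_orthogonalProjection_line_line_eq_dist_mul_sin_angle hBC.symm hCA, hsinC]; ring

theorem stmt3 (A B C O M A₁ B₁ C₁ : EuclideanSpace ℝ (Fin 2)) (R a b c : ℝ)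
    (hABC : AffineIndependent ℝ ![A, B, C])
    (hR : 0 < R) (hOA : dist O A = R) (hOB : dist O B = R) (hOC : dist O C = R)
    (ha : a = dist B C) (hb : b = dist C A) (hc : c = dist A B)
    (hA₁ : A₁ = EuclideanGeometry.orthogonalProjection (affineSpan ℝ {B, C}) M)
    (hB₁ : B₁ = EuclideanGeometry.orthogonalProjection (affineSpan ℝ {C, A}) M)
    (hC₁ : C₁ = EuclideanGeometry.orthogonalProjection (affineSpan ℝ {A, B}) M) :
    dist B₁ C₁ = (a * dist M A) / (2 * R) ∧
    dist C₁ A₁ = (b * dist M B) / (2 * R) ∧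
    dist A₁ B₁ = (c * dist M C) / (2 * R) :=
  stmt3_general A B C O M A₁ B₁ C₁ R a b c hABC hOA hOB hOC ha hb hc hA₁ hB₁ hC₁
end

section
/- A point M lies on the circumcircle of triangle ABC (dist O M = R) if and only if the vertices A₁, B₁, C₁ of its pedal triangle are collinear (Simson's theorem). -/
/-!
Simson's theorem is the degenerate case of Euler's formula for the pedal triangle,
`[A₁B₁C₁] = (R² - OM²) / (4R²) · [ABC]`. Writing `[u, v]` for the wedge product and
`D(M) = Σ |A - M|² [B - M, C - M]` for the concyclicity determinant expanded at `M`, the formula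
splits into two polynomial identities:
`[B₁ - A₁, C₁ - A₁] · a²b²c² = [B - A, C - A]² · D(M)`, and
`D(M) = (R² - OM²) · [B - A, C - A]` when `O` is at distance `R` from `A`, `B` and `C`.
Since `[B - A, C - A] ≠ 0`, the feet are collinear exactly when `OM = R`.
-/

open EuclideanGeometry RealInnerProductSpace

noncomputable section

section

variable {V P : Type*} [NormedAddCommGroup V] [InnerProductSpace ℝ V] [MetricSpace P]
  [NormedAddTorsor V P]

theorem coe_orthogonalProjection_affineSpan_pair (p q m : P) :
    (orthogonalProjection line[ℝ, p, q] m : P) =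
      AffineMap.lineMap p q (⟪m -ᵥ p, q -ᵥ p⟫ / ‖q -ᵥ p‖ ^ 2) := by
  rw [coe_orthogonalProjection_eq_iff_mem]
  refine ⟨AffineMap.lineMap_mem_affineSpan_pair _ _ _, ?_⟩
  rw [direction_affineSpan, vectorSpan_pair_rev,
    Submodule.mem_orthogonal_singleton_iff_inner_right, AffineMap.lineMap_apply,
    vsub_vadd_eq_vsub_sub, inner_sub_right, real_inner_smul_right, real_inner_self_eq_norm_sq,
    real_inner_comm]
  rcases eq_or_ne (q -ᵥ p) 0 with h | h
  · simp [h]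
  · field_simp
    ring

theorem coe_orthogonalProjection_affineSpan_pair_sub (p q m : V) :
    (orthogonalProjection line[ℝ, p, q] m : V) - m =
      orthogonalProjection line[ℝ, p - m, q - m] 0 := by
  simp only [coe_orthogonalProjection_affineSpan_pair, AffineMap.lineMap_apply, vsub_eq_sub,
    vadd_eq_add, sub_sub_sub_cancel_right, zero_sub, neg_sub]
  abel

end

local notation "E²" => EuclideanSpace ℝ (Fin 2)

def wedge (u v : E²) : ℝ := u 0 * v 1 - u 1 * v 0

theorem inner_fin_two (u v : E²) : ⟪u, v⟫ = u 0 * v 0 + u 1 * v 1 := by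
  simp [PiLp.inner_apply, Fin.sum_univ_two, mul_comm]

theorem norm_sq_fin_two (u : E²) : ‖u‖ ^ 2 = u 0 ^ 2 + u 1 ^ 2 := by
  simp [EuclideanSpace.real_norm_sq_eq, Fin.sum_univ_two]

theorem collinear_iff_wedge_eq_zero {p q r : E²} :
    Collinear ℝ {p, q, r} ↔ wedge (q - p) (r - p) = 0 := by
  constructor
  · intro h
    obtain ⟨v, hv⟩ := (collinear_iff_of_mem (Set.mem_insert p _)).1 h
    obtain ⟨s, rfl⟩ := hv q (by simp)
    obtain ⟨t, rfl⟩ := hv r (by simp)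
    simp only [wedge, vadd_eq_add, add_sub_cancel_right, PiLp.smul_apply, smul_eq_mul]
    ring
  · intro h
    rcases eq_or_ne q p with rfl | hqp
    · simp [collinear_pair]
    refine collinear_triple_of_mem_affineSpan_pair (left_mem_affineSpan_pair ℝ p q)
      (right_mem_affineSpan_pair ℝ p q) ?_
    have hn : (q - p) 0 ^ 2 + (q - p) 1 ^ 2 ≠ 0 := by
      rw [← norm_sq_fin_two]
      simpa [sub_eq_zero] using hqp
    convert AffineMap.lineMap_mem_affineSpan_pair (⟪r - p, q - p⟫ / ‖q - p‖ ^ 2) p q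
    ext i
    fin_cases i <;>
      simp only [Fin.zero_eta, Fin.mk_one, AffineMap.lineMap_apply, vsub_eq_sub, vadd_eq_add,
        inner_fin_two, norm_sq_fin_two, PiLp.add_apply, PiLp.smul_apply, smul_eq_mul,
        PiLp.sub_apply, wedge] at hn h ⊢ <;>
      field_simp
    · linear_combination (p 1 - q 1) * h
    · linear_combination (q 0 - p 0) * h

def concyclicDet (m a b c : E²) : ℝ :=
  ‖a - m‖ ^ 2 * wedge (b - m) (c - m) + ‖b - m‖ ^ 2 * wedge (c - m) (a - m) +
    ‖c - m‖ ^ 2 * wedge (a - m) (b - m)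

theorem concyclicDet_eq_of_dist_eq {o a b c : E²} {r : ℝ} (ha : dist o a = r)
    (hb : dist o b = r) (hc : dist o c = r) (m : E²) :
    concyclicDet m a b c = (r ^ 2 - dist o m ^ 2) * wedge (b - a) (c - a) := by
  simp only [dist_eq_norm, ← sq_eq_sq₀ (norm_nonneg _) (dist_nonneg.trans_eq ha)] at *
  simp only [concyclicDet, wedge, norm_sq_fin_two, PiLp.sub_apply] at *
  -- `|a - m|² = |a - o|² - |o - m|² + 2⟪a - m, o - m⟫`, and the inner-product terms cancel
  -- because `Σ [b - m, c - m] (a - m) = 0` in the plane.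
  linear_combination (norm := skip)
    wedge (b - m) (c - m) * ha + wedge (c - m) (a - m) * hb + wedge (a - m) (b - m) * hc
  simp only [wedge, PiLp.sub_apply]
  ring

-- With `m` at the origin the identity stays within reach of `field_simp; ring`.
theorem wedge_pedal_mul_sides_zero (a b c : E²) (hbc : b ≠ c) (hca : c ≠ a) (hab : a ≠ b) :
    wedge ((orthogonalProjection line[ℝ, c, a] 0 : E²) - orthogonalProjection line[ℝ, b, c] 0)
        ((orthogonalProjection line[ℝ, a, b] 0 : E²) - orthogonalProjection line[ℝ, b, c] 0) *
      (‖c - b‖ ^ 2 * ‖a - c‖ ^ 2 * ‖b - a‖ ^ 2) =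
      wedge (b - a) (c - a) ^ 2 * concyclicDet 0 a b c := by
  have h₁ : ‖c - b‖ ^ 2 ≠ 0 := by simpa [sub_eq_zero] using hbc.symm
  have h₂ : ‖a - c‖ ^ 2 ≠ 0 := by simpa [sub_eq_zero] using hca.symm
  have h₃ : ‖b - a‖ ^ 2 ≠ 0 := by simpa [sub_eq_zero] using hab.symm
  simp only [coe_orthogonalProjection_affineSpan_pair, AffineMap.lineMap_apply, vsub_eq_sub,
    vadd_eq_add, concyclicDet, wedge, sub_zero, zero_sub, inner_neg_left]
  simp only [inner_fin_two, norm_sq_fin_two, PiLp.add_apply, PiLp.sub_apply,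
    PiLp.smul_apply, smul_eq_mul] at h₁ h₂ h₃ ⊢
  field_simp
  ring

theorem wedge_pedal_mul_sides (a b c m : E²) (hbc : b ≠ c) (hca : c ≠ a) (hab : a ≠ b) :
    wedge ((orthogonalProjection line[ℝ, c, a] m : E²) - orthogonalProjection line[ℝ, b, c] m)
        ((orthogonalProjection line[ℝ, a, b] m : E²) - orthogonalProjection line[ℝ, b, c] m) *
      (‖c - b‖ ^ 2 * ‖a - c‖ ^ 2 * ‖b - a‖ ^ 2) =
      wedge (b - a) (c - a) ^ 2 * concyclicDet m a b c := by
  have h := wedge_pedal_mul_sides_zero (a - m) (b - m) (c - m) (by simpa using hbc)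
    (by simpa using hca) (by simpa using hab)
  simpa only [← coe_orthogonalProjection_affineSpan_pair_sub, sub_sub_sub_cancel_right,
    concyclicDet, sub_zero] using h

theorem stmt4_general (A B C O M A₁ B₁ C₁ : EuclideanSpace ℝ (Fin 2)) (R : ℝ)
    (hABC : AffineIndependent ℝ ![A, B, C])
    (hOA : dist O A = R) (hOB : dist O B = R) (hOC : dist O C = R)
    (hA₁ : A₁ = EuclideanGeometry.orthogonalProjection (affineSpan ℝ {B, C}) M)
    (hB₁ : B₁ = EuclideanGeometry.orthogonalProjection (affineSpan ℝ {C, A}) M)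
    (hC₁ : C₁ = EuclideanGeometry.orthogonalProjection (affineSpan ℝ {A, B}) M) :
    dist O M = R ↔ Collinear ℝ ({A₁, B₁, C₁} : Set (EuclideanSpace ℝ (Fin 2))) := by
  have hw : wedge (B - A) (C - A) ≠ 0 :=
    mt collinear_iff_wedge_eq_zero.2 (affineIndependent_iff_not_collinear_set.1 hABC)
  have hAB : A ≠ B := by simpa using hABC.injective.ne (show (0 : Fin 3) ≠ 1 by decide)
  have hBC : B ≠ C := by simpa using hABC.injective.ne (show (1 : Fin 3) ≠ 2 by decide)
  have hCA : C ≠ A := by simpa using hABC.injective.ne (show (2 : Fin 3) ≠ 0 by decide)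
  have hsides : ‖C - B‖ ^ 2 * ‖A - C‖ ^ 2 * ‖B - A‖ ^ 2 ≠ 0 := by
    simp [sub_eq_zero, hAB.symm, hBC.symm, hCA.symm]
  have hpedal := wedge_pedal_mul_sides A B C M hBC hCA hAB
  rw [concyclicDet_eq_of_dist_eq hOA hOB hOC, ← hA₁, ← hB₁, ← hC₁] at hpedal
  have hdegenerate : wedge (B₁ - A₁) (C₁ - A₁) = 0 ↔ R ^ 2 - dist O M ^ 2 = 0 := by
    rw [← mul_left_inj' hsides, hpedal, zero_mul]
    simp [hw]
  rw [collinear_iff_wedge_eq_zero, hdegenerate, sub_eq_zero,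
    sq_eq_sq₀ (hOA ▸ dist_nonneg) dist_nonneg, eq_comm]

theorem stmt4 (A B C O M A₁ B₁ C₁ : EuclideanSpace ℝ (Fin 2)) (R : ℝ)
    (hABC : AffineIndependent ℝ ![A, B, C])
    (hR : 0 < R) (hOA : dist O A = R) (hOB : dist O B = R) (hOC : dist O C = R)
    (hA₁ : A₁ = EuclideanGeometry.orthogonalProjection (affineSpan ℝ {B, C}) M)
    (hB₁ : B₁ = EuclideanGeometry.orthogonalProjection (affineSpan ℝ {C, A}) M)
    (hC₁ : C₁ = EuclideanGeometry.orthogonalProjection (affineSpan ℝ {A, B}) M) :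
    dist O M = R ↔ Collinear ℝ ({A₁, B₁, C₁} : Set (EuclideanSpace ℝ (Fin 2))) :=
  stmt4_general A B C O M A₁ B₁ C₁ R hABC hOA hOB hOC hA₁ hB₁ hC₁
end
end

section
/- Let Ω₁ be a first Brocard point of triangle ABC. Then the pedal triangle A₁B₁C₁ of Ω₁ is similar to triangle BCA: its side lengths satisfy dist B₁ C₁ : dist C₁ A₁ : dist A₁ B₁ = b : c : a, i.e. c · dist B₁ C₁ = b · dist C₁ A₁ and a · dist C₁ A₁ = c · dist A₁ B₁. -/
/-!
Write Ω₁ = αA + βB + γC in barycentric coordinates (all positive) and let S_A = ⟪B - A, C - A⟫,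
S_B, S_C be Conway's symbols, so that S² = S_A S_B + S_B S_C + S_C S_A for S twice the area of ABC.
If ω is the common angle, comparing cos ω and sin ω at each vertex gives
⟪Ω₁ - A, B - A⟫ = t γ, ⟪Ω₁ - B, C - B⟫ = t α, ⟪Ω₁ - C, A - C⟫ = t β with t = S cot ω.
As ⟪Ω₁ - A, B - A⟫ = β c² + γ S_A and cyclically, these are linear in (α, β, γ); multiplying them
yields (t - S_A - S_B - S_C)(t² + S²) = 0, hence t = S_A + S_B + S_C and c²β = a²γ = b²α.
The pedal triangle satisfies B₁C₁ = AΩ₁ sin A cyclically, and the areas of Ω₁AB and Ω₁BC give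
AΩ₁ · c · sin ω = γ S and BΩ₁ · a · sin ω = α S; with the law of sines this turns a²γ = b²α into
c · B₁C₁ = b · C₁A₁, and the second identity is the same statement for the triangle BCA.
-/

open EuclideanGeometry
open scoped RealInnerProductSpace

theorem brocard_weights {sA sB sC α β γ t : ℝ} (hS : 0 < sA * sB + sB * sC + sC * sA)
    (hα : α ≠ 0) (hβ : β ≠ 0) (hγ : γ ≠ 0)
    (hA : β * (sA + sB) + γ * sA = t * γ) (hB : γ * (sB + sC) + α * sB = t * α)
    (hC : α * (sC + sA) + β * sC = t * β) :
    (sA + sB) * β = (sB + sC) * γ ∧ (sB + sC) * γ = (sC + sA) * α := by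
  have hcubic :
      (t - (sA + sB + sC)) * (t ^ 2 + (sA * sB + sB * sC + sC * sA)) * (α * β * γ) = 0 := by
    linear_combination (-((sB + sC) * γ) * ((sC + sA) * α)) * hA
      - ((t - sA) * γ * ((sC + sA) * α)) * hB - ((t - sA) * γ * ((t - sB) * α)) * hC
  have ht : t = sA + sB + sC := by
    have : t ^ 2 + (sA * sB + sB * sC + sC * sA) ≠ 0 := by positivity
    simpa [sub_eq_zero, this, hα, hβ, hγ] using hcubic
  subst ht
  constructor <;> linarith

variable {V Pt : Type*} [NormedAddCommGroup V] [InnerProductSpace ℝ V] [MetricSpace Pt]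
  [NormedAddTorsor V Pt]

theorem coe_orthogonalProjection_affineSpan_pair_s7 (A B P : Pt) :
    (orthogonalProjection (affineSpan ℝ {A, B}) P : Pt) =
      (⟪P -ᵥ A, B -ᵥ A⟫ / ‖B -ᵥ A‖ ^ 2) • (B -ᵥ A) +ᵥ A := by
  rw [coe_orthogonalProjection_eq_iff_mem]
  refine ⟨smul_vsub_vadd_mem_affineSpan_pair _ _ _, ?_⟩
  rw [direction_affineSpan, vectorSpan_pair, Submodule.mem_orthogonal_singleton_iff_inner_right,
    ← neg_vsub_eq_vsub_rev B A, inner_neg_left, neg_eq_zero, vsub_vadd_eq_vsub_sub, inner_sub_right,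
    real_inner_smul_right, real_inner_self_eq_norm_sq, real_inner_comm, sub_eq_zero]
  rcases eq_or_ne (B -ᵥ A) 0 with h | h
  · simp [h]
  · field_simp

theorem inner_vsub_vsub_add_inner_vsub_vsub (A B C : Pt) :
    ⟪B -ᵥ A, C -ᵥ A⟫ + ⟪C -ᵥ B, A -ᵥ B⟫ = dist A B ^ 2 := by
  rw [dist_comm, dist_eq_norm_vsub V B A, ← vsub_sub_vsub_cancel_right C B A,
    ← neg_vsub_eq_vsub_rev B A, inner_sub_left, inner_neg_right, inner_neg_right,
    real_inner_self_eq_norm_sq, real_inner_comm (B -ᵥ A)]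
  ring

open InnerProductGeometry in
theorem sq_sin_angle_mul_norm_mul_norm (x y : V) :
    (Real.sin (angle x y) * (‖x‖ * ‖y‖)) ^ 2 = ⟪x, x⟫ * ⟪y, y⟫ - ⟪x, y⟫ * ⟪x, y⟫ := by
  rw [sin_angle_mul_norm_mul_norm, Real.sq_sqrt (sub_nonneg.2 (real_inner_mul_inner_self_le x y))]

theorem sin_angle_mul_dist_mul_dist_rotate (A B C : Pt) :
    Real.sin (∠ C B A) * (dist B C * dist B A) = Real.sin (∠ B A C) * (dist A B * dist A C) := by
  have h := law_sin A B C
  rw [angle_comm A B C, angle_comm C A B] at h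
  rw [dist_comm B A, dist_comm C A] at *
  linear_combination dist A B * h

theorem sq_sin_angle_mul_dist_mul_dist (A B C : Pt) :
    (Real.sin (∠ B A C) * (dist A B * dist A C)) ^ 2 =
      ⟪B -ᵥ A, C -ᵥ A⟫ * ⟪C -ᵥ B, A -ᵥ B⟫ + ⟪C -ᵥ B, A -ᵥ B⟫ * ⟪A -ᵥ C, B -ᵥ C⟫ +
        ⟪A -ᵥ C, B -ᵥ C⟫ * ⟪B -ᵥ A, C -ᵥ A⟫ := by
  have hc := inner_vsub_vsub_add_inner_vsub_vsub A B C
  have hb := inner_vsub_vsub_add_inner_vsub_vsub A C B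
  rw [real_inner_comm (B -ᵥ A), real_inner_comm (A -ᵥ C)] at hb
  rw [angle, dist_eq_norm_vsub' V A B, dist_eq_norm_vsub' V A C, sq_sin_angle_mul_norm_mul_norm,
    real_inner_self_eq_norm_sq, real_inner_self_eq_norm_sq, ← dist_eq_norm_vsub' V A B,
    ← dist_eq_norm_vsub' V A C, ← hc, ← hb]
  ring

section Triangle

variable {A B C P : Pt} {α β γ : ℝ}

theorem sin_angle_mul_dist_mul_dist_pos (hABC : ¬Collinear ℝ {A, B, C}) :
    0 < Real.sin (∠ B A C) * (dist A B * dist A C) :=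
  mul_pos (sin_pos_of_not_collinear (by rwa [Set.insert_comm]))
    (mul_pos (dist_pos.2 (ne₁₂_of_not_collinear hABC)) (dist_pos.2 (ne₁₃_of_not_collinear hABC)))

theorem inner_vsub_vsub_of_vsub_eq (h : P -ᵥ A = β • (B -ᵥ A) + γ • (C -ᵥ A)) :
    ⟪P -ᵥ A, B -ᵥ A⟫ = β * dist A B ^ 2 + γ * ⟪B -ᵥ A, C -ᵥ A⟫ := by
  rw [h, dist_comm, dist_eq_norm_vsub V B A, ← real_inner_self_eq_norm_sq, inner_add_left,
    real_inner_smul_left, real_inner_smul_left, real_inner_comm (B -ᵥ A) (C -ᵥ A)]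

theorem sin_angle_mul_dist_mul_dist_of_vsub_eq (h : P -ᵥ A = β • (B -ᵥ A) + γ • (C -ᵥ A)) :
    Real.sin (∠ P A B) * (dist A P * dist A B) =
      |γ| * (Real.sin (∠ B A C) * (dist A B * dist A C)) := by
  simp only [angle, dist_comm A, dist_eq_norm_vsub V _ A, h]
  generalize B -ᵥ A = u, C -ᵥ A = v
  open InnerProductGeometry in
  rw [← sq_eq_sq₀ (mul_nonneg (sin_angle_nonneg _ _) (by positivity))
      (mul_nonneg (abs_nonneg γ) (mul_nonneg (sin_angle_nonneg _ _) (by positivity))),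
    mul_pow |γ|, sq_abs, sq_sin_angle_mul_norm_mul_norm, sq_sin_angle_mul_norm_mul_norm]
  simp only [inner_add_left, inner_add_right, real_inner_smul_left, real_inner_smul_right,
    real_inner_comm u v]
  ring

theorem dist_orthogonalProjection_affineSpan_pair_of_vsub_eq (hAB : A ≠ B) (hAC : A ≠ C)
    (h : P -ᵥ A = β • (B -ᵥ A) + γ • (C -ᵥ A)) :
    dist (orthogonalProjection (affineSpan ℝ {C, A}) P : Pt)
        (orthogonalProjection (affineSpan ℝ {A, B}) P) = dist A P * Real.sin (∠ B A C) := by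
  rw [orthogonalProjection_congr (congrArg (affineSpan ℝ) (Set.pair_comm C A)) rfl,
    coe_orthogonalProjection_affineSpan_pair_s7, coe_orthogonalProjection_affineSpan_pair_s7,
    dist_vadd_cancel_right, dist_eq_norm]
  simp only [angle, dist_comm A, dist_eq_norm_vsub V _ A, h]
  have hu : B -ᵥ A ≠ 0 := vsub_ne_zero.2 hAB.symm
  have hv : C -ᵥ A ≠ 0 := vsub_ne_zero.2 hAC.symm
  generalize B -ᵥ A = u, C -ᵥ A = v at hu hv
  have hsin : Real.sin (InnerProductGeometry.angle u v) ^ 2 =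
      (⟪u, u⟫ * ⟪v, v⟫ - ⟪u, v⟫ * ⟪u, v⟫) / (⟪u, u⟫ * ⟪v, v⟫) := by
    rw [← sq_sin_angle_mul_norm_mul_norm, real_inner_self_eq_norm_sq, real_inner_self_eq_norm_sq]
    field_simp
  rw [← sq_eq_sq₀ (norm_nonneg _)
      (mul_nonneg (norm_nonneg _) (InnerProductGeometry.sin_angle_nonneg _ _)), mul_pow, hsin]
  simp only [← real_inner_self_eq_norm_sq, inner_sub_left, inner_sub_right, inner_add_left,
    inner_add_right, real_inner_smul_left, real_inner_smul_right, real_inner_comm u v]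
  have hu' : ⟪u, u⟫ ≠ 0 := inner_self_ne_zero.2 hu
  have hv' : ⟪v, v⟫ ≠ 0 := inner_self_ne_zero.2 hv
  field_simp
  ring

theorem inner_vsub_vsub_mul_sin_angle_of_vsub_eq (h : P -ᵥ A = β • (B -ᵥ A) + γ • (C -ᵥ A))
    (hγ : 0 ≤ γ) :
    ⟪P -ᵥ A, B -ᵥ A⟫ * Real.sin (∠ P A B) =
      γ * (Real.sin (∠ B A C) * (dist A B * dist A C)) * Real.cos (∠ P A B) := by
  have hcos : Real.cos (∠ P A B) * (dist A P * dist A B) = ⟪P -ᵥ A, B -ᵥ A⟫ := by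
    rw [dist_comm A, dist_comm A, dist_eq_norm_vsub V P A, dist_eq_norm_vsub V B A]
    exact InnerProductGeometry.cos_angle_mul_norm_mul_norm _ _
  have hsin := sin_angle_mul_dist_mul_dist_of_vsub_eq h
  rw [abs_of_nonneg hγ] at hsin
  rw [← hcos, ← hsin]
  ring

theorem sin_angle_pos_of_vsub_eq (hABC : ¬Collinear ℝ {A, B, C})
    (h : P -ᵥ A = β • (B -ᵥ A) + γ • (C -ᵥ A)) (hγ : 0 < γ) : 0 < Real.sin (∠ P A B) := by
  have harea := sin_angle_mul_dist_mul_dist_of_vsub_eq h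
  have hS := mul_pos (abs_pos.2 hγ.ne') (sin_angle_mul_dist_mul_dist_pos hABC)
  rw [← harea] at hS
  exact pos_of_mul_pos_left hS (by positivity)

theorem dist_sq_mul_eq_of_angle_eq (hABC : ¬Collinear ℝ {A, B, C})
    (hA : P -ᵥ A = β • (B -ᵥ A) + γ • (C -ᵥ A)) (hB : P -ᵥ B = γ • (C -ᵥ B) + α • (A -ᵥ B))
    (hC : P -ᵥ C = α • (A -ᵥ C) + β • (B -ᵥ C)) (hα : 0 < α) (hβ : 0 < β) (hγ : 0 < γ)
    (h₁ : ∠ P A B = ∠ P B C) (h₂ : ∠ P B C = ∠ P C A) :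
    dist A B ^ 2 * β = dist B C ^ 2 * γ ∧ dist B C ^ 2 * γ = dist C A ^ 2 * α := by
  have hθ := sin_angle_pos_of_vsub_eq hABC hA hγ
  have vA := inner_vsub_vsub_mul_sin_angle_of_vsub_eq hA hγ.le
  have vB := inner_vsub_vsub_mul_sin_angle_of_vsub_eq hB hα.le
  have vC := inner_vsub_vsub_mul_sin_angle_of_vsub_eq hC hβ.le
  rw [inner_vsub_vsub_of_vsub_eq hA] at vA
  rw [inner_vsub_vsub_of_vsub_eq hB] at vB
  rw [inner_vsub_vsub_of_vsub_eq hC] at vC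
  rw [← h₁, sin_angle_mul_dist_mul_dist_rotate] at vB
  rw [← h₂, ← h₁, sin_angle_mul_dist_mul_dist_rotate, sin_angle_mul_dist_mul_dist_rotate] at vC
  have hS := pow_pos (sin_angle_mul_dist_mul_dist_pos hABC) 2
  rw [sq_sin_angle_mul_dist_mul_dist] at hS
  rw [← inner_vsub_vsub_add_inner_vsub_vsub A B C, ← inner_vsub_vsub_add_inner_vsub_vsub B C A,
    ← inner_vsub_vsub_add_inner_vsub_vsub C A B] at *
  refine brocard_weights hS hα.ne' hβ.ne' hγ.ne'
    (t := Real.sin (∠ B A C) * (dist A B * dist A C) * Real.cos (∠ P A B) / Real.sin (∠ P A B))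
    ?_ ?_ ?_
  all_goals field_simp
  · linear_combination vA
  · linear_combination vB
  · linear_combination vC

theorem dist_mul_dist_mul_sin_angle_eq_of_angle_eq (hABC : ¬Collinear ℝ {A, B, C})
    (hA : P -ᵥ A = β • (B -ᵥ A) + γ • (C -ᵥ A)) (hB : P -ᵥ B = γ • (C -ᵥ B) + α • (A -ᵥ B))
    (hα : 0 < α) (hγ : 0 < γ) (h : ∠ P A B = ∠ P B C)
    (hw : dist B C ^ 2 * γ = dist C A ^ 2 * α) :
    dist A B * (dist A P * Real.sin (∠ B A C)) = dist C A * (dist B P * Real.sin (∠ C B A)) := by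
  have hθ := sin_angle_pos_of_vsub_eq hABC hA hγ
  have hBC : dist B C ≠ 0 := dist_ne_zero.2 (ne₂₃_of_not_collinear hABC)
  have hPA := sin_angle_mul_dist_mul_dist_of_vsub_eq hA
  have hPB := sin_angle_mul_dist_mul_dist_of_vsub_eq hB
  have hsin := law_sin A B C
  rw [abs_of_pos hγ] at hPA
  rw [abs_of_pos hα, ← h] at hPB
  rw [angle_comm A B C, angle_comm C A B] at hsin
  rw [dist_comm B A, dist_comm A C] at *
  refine mul_left_cancel₀ (mul_ne_zero hθ.ne' (pow_ne_zero 2 hBC)) ?_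
  linear_combination dist B C ^ 2 * Real.sin (∠ B A C) * hPA
    - dist B C * dist C A * Real.sin (∠ C B A) * hPB
    - α * dist C A * dist A B *
      (dist B C * Real.sin (∠ C B A) + dist C A * Real.sin (∠ B A C)) * hsin
    + dist C A * dist A B * Real.sin (∠ B A C) ^ 2 * hw

end Triangle

theorem exists_pos_barycentric_of_mem_interior_convexHull {E : Type*} [NormedAddCommGroup E]
    [NormedSpace ℝ E] (hE : Module.finrank ℝ E = 2) {A B C P : E}
    (hABC : AffineIndependent ℝ ![A, B, C]) (hP : P ∈ interior (convexHull ℝ {A, B, C})) :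
    ∃ α β γ : ℝ, 0 < α ∧ 0 < β ∧ 0 < γ ∧ α + β + γ = 1 ∧ α • A + β • B + γ • C = P := by
  have : FiniteDimensional ℝ E := Module.finite_of_finrank_eq_succ hE
  let b : AffineBasis (Fin 3) ℝ E :=
    ⟨![A, B, C], hABC, by rw [hABC.affineSpan_eq_top_iff_card_eq_finrank_add_one]; simp [hE]⟩
  have hb : ⇑b = ![A, B, C] := rfl
  have hrange : Set.range b = {A, B, C} := by
    rw [hb, Matrix.range_cons, Matrix.range_cons, Matrix.range_cons, Matrix.range_empty]
    simp only [Set.union_empty, Set.singleton_union]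
  rw [← hrange, b.interior_convexHull] at hP
  refine ⟨b.coord 0 P, b.coord 1 P, b.coord 2 P, hP 0, hP 1, hP 2, ?_, ?_⟩
  · rw [← b.sum_coord_apply_eq_one P, Fin.sum_univ_three]
  · conv_rhs => rw [← b.linear_combination_coord_eq_self P]
    rw [Fin.sum_univ_three, hb]
    rfl

theorem vsub_eq_smul_vsub_add_smul_vsub_of_eq {E : Type*} [AddCommGroup E] [Module ℝ E]
    {A B C P : E} {α β γ : ℝ} (hsum : α + β + γ = 1) (hP : α • A + β • B + γ • C = P) :
    P -ᵥ A = β • (B -ᵥ A) + γ • (C -ᵥ A) ∧ P -ᵥ B = γ • (C -ᵥ B) + α • (A -ᵥ B) ∧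
      P -ᵥ C = α • (A -ᵥ C) + β • (B -ᵥ C) := by
  obtain rfl : α = 1 - β - γ := by linarith
  subst hP
  simp only [vsub_eq_sub]
  refine ⟨?_, ?_, ?_⟩ <;> module

theorem stmt7_general (A B C Ω₁ A₁ B₁ C₁ : EuclideanSpace ℝ (Fin 2)) (a b c : ℝ)
    (hABC : AffineIndependent ℝ ![A, B, C])
    (ha : a = dist B C) (hb : b = dist C A) (hc : c = dist A B)
    (hΩ : Ω₁ ∈ interior (convexHull ℝ ({A, B, C} : Set (EuclideanSpace ℝ (Fin 2)))))
    (hBr₁ : ∠ Ω₁ A B = ∠ Ω₁ B C) (hBr₂ : ∠ Ω₁ B C = ∠ Ω₁ C A)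
    (hA₁ : A₁ = EuclideanGeometry.orthogonalProjection (affineSpan ℝ {B, C}) Ω₁)
    (hB₁ : B₁ = EuclideanGeometry.orthogonalProjection (affineSpan ℝ {C, A}) Ω₁)
    (hC₁ : C₁ = EuclideanGeometry.orthogonalProjection (affineSpan ℝ {A, B}) Ω₁) :
    c * dist B₁ C₁ = b * dist C₁ A₁ ∧ a * dist C₁ A₁ = c * dist A₁ B₁ := by
  obtain ⟨α, β, γ, hα, hβ, hγ, hsum, hΩ₁⟩ :=
    exists_pos_barycentric_of_mem_interior_convexHull finrank_euclideanSpace_fin hABC hΩ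
  obtain ⟨hA, hB, hC⟩ := vsub_eq_smul_vsub_add_smul_vsub_of_eq hsum hΩ₁
  have hcol : ¬Collinear ℝ {A, B, C} := affineIndependent_iff_not_collinear_set.1 hABC
  have hcol' : ¬Collinear ℝ {B, C, A} := by rwa [Set.pair_comm C A, Set.insert_comm B A]
  obtain ⟨hw₁, hw₂⟩ := dist_sq_mul_eq_of_angle_eq hcol hA hB hC hα hβ hγ hBr₁ hBr₂
  have hAB := ne₁₂_of_not_collinear hcol
  have hAC := ne₁₃_of_not_collinear hcol
  have hBC := ne₂₃_of_not_collinear hcol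
  subst ha hb hc hA₁ hB₁ hC₁
  rw [dist_orthogonalProjection_affineSpan_pair_of_vsub_eq hAB hAC hA,
    dist_orthogonalProjection_affineSpan_pair_of_vsub_eq hBC hAB.symm hB,
    dist_orthogonalProjection_affineSpan_pair_of_vsub_eq hAC.symm hBC.symm hC]
  exact ⟨dist_mul_dist_mul_sin_angle_eq_of_angle_eq hcol hA hB hα hγ hBr₁ hw₂,
    dist_mul_dist_mul_sin_angle_eq_of_angle_eq hcol' hB hC hβ hα hBr₂ (hw₁.trans hw₂).symm⟩

theorem stmt7 (A B C O Ω₁ A₁ B₁ C₁ : EuclideanSpace ℝ (Fin 2)) (R a b c : ℝ)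
    (hABC : AffineIndependent ℝ ![A, B, C])
    (hR : 0 < R) (hOA : dist O A = R) (hOB : dist O B = R) (hOC : dist O C = R)
    (ha : a = dist B C) (hb : b = dist C A) (hc : c = dist A B)
    (hΩ : Ω₁ ∈ interior (convexHull ℝ ({A, B, C} : Set (EuclideanSpace ℝ (Fin 2)))))
    (hBr₁ : ∠ Ω₁ A B = ∠ Ω₁ B C) (hBr₂ : ∠ Ω₁ B C = ∠ Ω₁ C A)
    (hA₁ : A₁ = EuclideanGeometry.orthogonalProjection (affineSpan ℝ {B, C}) Ω₁)
    (hB₁ : B₁ = EuclideanGeometry.orthogonalProjection (affineSpan ℝ {C, A}) Ω₁)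
    (hC₁ : C₁ = EuclideanGeometry.orthogonalProjection (affineSpan ℝ {A, B}) Ω₁) :
    c * dist B₁ C₁ = b * dist C₁ A₁ ∧ a * dist C₁ A₁ = c * dist A₁ B₁ :=
  stmt7_general A B C Ω₁ A₁ B₁ C₁ a b c hABC ha hb hc hΩ hBr₁ hBr₂ hA₁ hB₁ hC₁
end

section
/- Let Ω₂ be a second Brocard point of triangle ABC. Then the pedal triangle A₁B₁C₁ of Ω₂ is similar to triangle CAB: its side lengths satisfy dist B₁ C₁ : dist C₁ A₁ : dist A₁ B₁ = c : a : b, i.e. a · dist B₁ C₁ = c · dist C₁ A₁ and b · dist C₁ A₁ = a · dist A₁ B₁. -/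
/-!
The feet `B₁`, `C₁` of the perpendiculars from `P` to `CA` and `AB` see `PA` at a right angle,
so they lie on the circle with diameter `PA`, and `B₁C₁` is the chord of that circle subtending
the angle `A`: `B₁C₁ = PA · sin A`. For the Brocard point `P` with Brocard angle `ω`, the
oriented angles `∡ P A C` and `∡ P B A` agree (both open towards the interior), so the angle of
triangle `APB` at `P` is `π - A`, and the law of sines in `APB` turns `PA · sin A` into
`c · sin ω`. Hence the pedal triangle has sides `c sin ω`, `a sin ω`, `b sin ω`.
-/

open EuclideanGeometry
open scoped EuclideanGeometry RealInnerProductSpace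

section Pedal

variable {V Pt : Type*} [NormedAddCommGroup V] [InnerProductSpace ℝ V] [MetricSpace Pt]
  [NormedAddTorsor V Pt]

theorem orthogonalProjection_affineSpan_pair_vsub (p₁ p₂ q : Pt) :
    (orthogonalProjection (affineSpan ℝ {p₁, p₂}) q : Pt) -ᵥ p₁ =
      (⟪p₂ -ᵥ p₁, q -ᵥ p₁⟫ / ‖p₂ -ᵥ p₁‖ ^ 2) • (p₂ -ᵥ p₁) := by
  rw [orthogonalProjection_apply_mem _ (left_mem_affineSpan_pair ℝ p₁ p₂), vadd_vsub,
    Submodule.coe_orthogonalProjectionOnto_apply]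
  simp only [direction_affineSpan, vectorSpan_pair_rev]
  rw [Submodule.starProjection_singleton]
  rfl

theorem exists_smul_add_smul_eq_vsub_of_mem_affineSpan {A B C P : Pt}
    (hP : P ∈ affineSpan ℝ {A, B, C}) : ∃ s t : ℝ, s • (B -ᵥ A) + t • (C -ᵥ A) = P -ᵥ A := by
  rw [← AffineSubspace.vsub_right_mem_direction_iff_mem (mem_affineSpan ℝ (Set.mem_insert A _)),
    direction_affineSpan, vectorSpan_eq_span_vsub_set_right ℝ (Set.mem_insert A _)] at hP
  simpa [Set.image_insert_eq, Submodule.span_insert_zero, Submodule.mem_span_pair] using hP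

theorem dist_orthogonalProjection_eq_dist_mul_sin_angle {A B C P : Pt}
    (hP : P ∈ affineSpan ℝ {A, B, C}) (hAB : A ≠ B) (hAC : A ≠ C) :
    dist (orthogonalProjection (affineSpan ℝ {C, A}) P : Pt)
        (orthogonalProjection (affineSpan ℝ {A, B}) P) = dist P A * Real.sin (∠ B A C) := by
  obtain ⟨s, t, hst⟩ := exists_smul_add_smul_eq_vsub_of_mem_affineSpan hP
  simp only [Set.pair_comm C A]
  rw [dist_eq_norm_vsub V, ← vsub_sub_vsub_cancel_right _ _ A,
    orthogonalProjection_affineSpan_pair_vsub, orthogonalProjection_affineSpan_pair_vsub,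
    dist_eq_norm_vsub V, ← hst, EuclideanGeometry.angle]
  set g := B -ᵥ A
  set e := C -ᵥ A
  have hg : ‖g‖ ≠ 0 := norm_ne_zero_iff.2 (vsub_ne_zero.2 hAB.symm)
  have he : ‖e‖ ≠ 0 := norm_ne_zero_iff.2 (vsub_ne_zero.2 hAC.symm)
  -- Squared, this is the vanishing of the Gram determinant of `P -ᵥ A`, `g`, `e`.
  refine (sq_eq_sq₀ (norm_nonneg _) (mul_nonneg (norm_nonneg _)
    (InnerProductGeometry.sin_angle_nonneg g e))).1 ?_
  rw [mul_pow, Real.sin_sq, InnerProductGeometry.cos_angle, norm_sub_sq_real, norm_add_sq_real,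
    norm_smul, norm_smul, norm_smul, norm_smul]
  simp only [inner_add_right, inner_smul_left, inner_smul_right, real_inner_self_eq_norm_sq,
    Real.norm_eq_abs, mul_pow, sq_abs, real_inner_comm g e, RCLike.conj_to_real]
  field_simp
  ring

variable [Fact (Module.finrank ℝ V = 2)] [Module.Oriented ℝ V (Fin 2)]

theorem sin_angle_eq_abs_sin_oangle {p₁ p₂ p₃ : Pt} (h₁ : p₁ ≠ p₂) (h₃ : p₃ ≠ p₂) :
    Real.sin (∠ p₁ p₂ p₃) = |(∡ p₁ p₂ p₃).sin| := by
  rcases oangle_eq_angle_or_eq_neg_angle h₁ h₃ with h | h <;>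
    simp [h, Real.Angle.sin_neg,
      abs_of_nonneg (Real.sin_nonneg_of_nonneg_of_le_pi (angle_nonneg _ _ _) (angle_le_pi _ _ _))]

theorem dist_mul_sin_angle_eq_of_angle_eq {A B C P : Pt} (h : ∠ P A C = ∠ P B A)
    (hs : (∡ P A C).sign = (∡ P B A).sign) (hs₀ : (∡ P A C).sign ≠ 0) :
    dist P A * Real.sin (∠ B A C) = dist A B * Real.sin (∠ P B A) := by
  have hPA := left_ne_of_oangle_sign_ne_zero hs₀
  have hCA := right_ne_of_oangle_sign_ne_zero hs₀
  have hPB := left_ne_of_oangle_sign_ne_zero (hs ▸ hs₀)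
  have hAB := right_ne_of_oangle_sign_ne_zero (hs ▸ hs₀)
  have hsum : ∡ A P B + ∡ P B A + ∡ B A P = Real.pi :=
    oangle_add_oangle_add_oangle_eq_pi hPA hPB.symm hAB
  have hsplit : ∡ B A C + ∡ C A P = ∡ B A P := oangle_add hAB.symm hCA hPA
  have hsupp : ∡ A P B + ∡ B A C = Real.pi := by
    rw [← hsum, ← hsplit, oangle_rev P A C, oangle_eq_of_angle_eq_of_sign_eq h hs]
    abel
  have hsin : Real.sin (∠ A P B) = Real.sin (∠ B A C) := by
    rw [sin_angle_eq_abs_sin_oangle hPA.symm hPB.symm, sin_angle_eq_abs_sin_oangle hAB.symm hCA,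
      Real.Angle.sin_eq_iff_eq_or_add_eq_pi.2 (Or.inr hsupp)]
  have hlaw := law_sin B P A
  rw [angle_comm B P A, hsin, angle_comm A B P] at hlaw
  linarith

theorem dist_orthogonalProjection_eq_dist_mul_sin_of_angle_eq {A B C P : Pt}
    (hP : P ∈ affineSpan ℝ {A, B, C}) (h : ∠ P A C = ∠ P B A)
    (hs : (∡ P A C).sign = (∡ P B A).sign) (hs₀ : (∡ P A C).sign ≠ 0) :
    dist (orthogonalProjection (affineSpan ℝ {C, A}) P : Pt)
        (orthogonalProjection (affineSpan ℝ {A, B}) P) = dist A B * Real.sin (∠ P B A) := by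
  rw [dist_orthogonalProjection_eq_dist_mul_sin_angle hP
      (right_ne_of_oangle_sign_ne_zero (hs ▸ hs₀))
      (right_ne_of_oangle_sign_ne_zero hs₀).symm,
    dist_mul_sin_angle_eq_of_angle_eq h hs hs₀]

end Pedal

section Interior

theorem exists_pos_weights_of_mem_interior_convexHull {E : Type*} [NormedAddCommGroup E]
    [NormedSpace ℝ E] [FiniteDimensional ℝ E] {A B C P : E}
    (hABC : AffineIndependent ℝ ![A, B, C]) (hP : P ∈ interior (convexHull ℝ {A, B, C})) :
    ∃ α β γ : ℝ, 0 < α ∧ 0 < β ∧ 0 < γ ∧ α + β + γ = 1 ∧ α • A + β • B + γ • C = P := by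
  have hrange : Set.range ![A, B, C] = {A, B, C} := by
    ext x
    simp only [Matrix.range_cons, Matrix.range_empty, Set.union_empty, Set.union_singleton,
      Set.mem_union, Set.mem_insert_iff, Set.mem_singleton_iff]
    tauto
  rw [← hrange] at hP
  let b : AffineBasis (Fin 3) ℝ E :=
    ⟨![A, B, C], hABC, interior_convexHull_nonempty_iff_affineSpan_eq_top.1 ⟨P, hP⟩⟩
  have hpos : ∀ i, 0 < b.coord i P := by
    have hPb : P ∈ interior (convexHull ℝ (Set.range b)) := hP
    rwa [b.interior_convexHull] at hPb
  refine ⟨b.coord 0 P, b.coord 1 P, b.coord 2 P, hpos 0, hpos 1, hpos 2, ?_, ?_⟩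
  · simpa only [Fin.sum_univ_three] using b.sum_coord_apply_eq_one P
  · have h := b.linear_combination_coord_eq_self P
    rw [Fin.sum_univ_three] at h
    exact h

variable {V : Type*} [NormedAddCommGroup V] [InnerProductSpace ℝ V]
  [Fact (Module.finrank ℝ V = 2)] [Module.Oriented ℝ V (Fin 2)]

theorem oangle_sign_eq_of_smul_add_smul_add_smul_eq {A B C P : V} {α β γ : ℝ}
    (hsum : α + β + γ = 1) (hP : α • A + β • B + γ • C = P) (hβ : 0 < β) :
    (∡ P A C).sign = (∡ B A C).sign := by
  have hPA : P -ᵥ A = β • (B -ᵥ A) + γ • (C -ᵥ A) := by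
    rw [← hP, vsub_eq_sub, vsub_eq_sub, vsub_eq_sub, show α = 1 - β - γ by linarith]
    module
  rw [EuclideanGeometry.oangle, EuclideanGeometry.oangle, hPA,
    positiveOrientation.oangle_sign_smul_add_smul_left, sign_pos hβ, one_mul]

theorem oangle_sign_eq_of_mem_interior_convexHull {A B C P : V}
    (hABC : AffineIndependent ℝ ![A, B, C]) (hP : P ∈ interior (convexHull ℝ {A, B, C})) :
    (∡ P A C).sign = (∡ B A C).sign ∧ (∡ P B A).sign = (∡ B A C).sign ∧
      (∡ P C B).sign = (∡ B A C).sign := by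
  have : FiniteDimensional ℝ V := .of_fact_finrank_eq_two
  obtain ⟨α, β, γ, hα, hβ, hγ, hsum, hP⟩ := exists_pos_weights_of_mem_interior_convexHull hABC hP
  refine ⟨oangle_sign_eq_of_smul_add_smul_add_smul_eq hsum hP hβ, ?_, ?_⟩
  · rw [oangle_sign_eq_of_smul_add_smul_add_smul_eq (A := B) (B := C) (C := A)
      (α := β) (β := γ) (γ := α) (by linarith) (by rw [← hP]; abel) hγ,
      oangle_rotate_sign A C B, oangle_rotate_sign B A C]
  · rw [oangle_sign_eq_of_smul_add_smul_add_smul_eq (A := C) (B := A) (C := B)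
      (α := γ) (β := α) (γ := β) (by linarith) (by rw [← hP]; abel) hα,
      oangle_rotate_sign B A C]

end Interior

theorem stmt8_general (A B C Ω₂ A₁ B₁ C₁ : EuclideanSpace ℝ (Fin 2)) (a b c : ℝ)
    (hABC : AffineIndependent ℝ ![A, B, C])
    (ha : a = dist B C) (hb : b = dist C A) (hc : c = dist A B)
    (hΩ : Ω₂ ∈ interior (convexHull ℝ ({A, B, C} : Set (EuclideanSpace ℝ (Fin 2)))))
    (hBr₁ : ∠ Ω₂ A C = ∠ Ω₂ C B) (hBr₂ : ∠ Ω₂ C B = ∠ Ω₂ B A)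
    (hA₁ : A₁ = EuclideanGeometry.orthogonalProjection (affineSpan ℝ {B, C}) Ω₂)
    (hB₁ : B₁ = EuclideanGeometry.orthogonalProjection (affineSpan ℝ {C, A}) Ω₂)
    (hC₁ : C₁ = EuclideanGeometry.orthogonalProjection (affineSpan ℝ {A, B}) Ω₂) :
    a * dist B₁ C₁ = c * dist C₁ A₁ ∧ b * dist C₁ A₁ = a * dist A₁ B₁ := by
  -- Any orientation will do: the statement involves only unoriented angles.
  let _ : Module.Oriented ℝ (EuclideanSpace ℝ (Fin 2)) (Fin 2) :=
    ⟨(EuclideanSpace.basisFun (Fin 2) ℝ).toBasis.orientation⟩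
  have : Fact (Module.finrank ℝ (EuclideanSpace ℝ (Fin 2)) = 2) := ⟨finrank_euclideanSpace_fin⟩
  have hs₀ : (∡ B A C).sign ≠ 0 := by
    rw [Ne, oangle_sign_eq_zero_iff_collinear, Set.insert_comm]
    exact affineIndependent_iff_not_collinear_set.1 hABC
  obtain ⟨hsA, hsB, hsC⟩ := oangle_sign_eq_of_mem_interior_convexHull hABC hΩ
  have hplane : ∀ {X Y Z}, ({X, Y, Z} : Set _) = {A, B, C} → Ω₂ ∈ affineSpan ℝ {X, Y, Z} :=
    fun h => h ▸ convexHull_subset_affineSpan _ (interior_subset hΩ)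
  have hB₁C₁ : dist B₁ C₁ = c * Real.sin (∠ Ω₂ B A) := by
    rw [hB₁, hC₁, hc, dist_orthogonalProjection_eq_dist_mul_sin_of_angle_eq (hplane rfl)
      (hBr₁.trans hBr₂) (hsA.trans hsB.symm) (hsA ▸ hs₀)]
  have hC₁A₁ : dist C₁ A₁ = a * Real.sin (∠ Ω₂ C B) := by
    rw [hC₁, hA₁, ha, dist_orthogonalProjection_eq_dist_mul_sin_of_angle_eq
      (hplane (by rw [Set.pair_comm C A, Set.insert_comm B A]))
      hBr₂.symm (hsB.trans hsC.symm) (hsB ▸ hs₀)]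
  have hA₁B₁ : dist A₁ B₁ = b * Real.sin (∠ Ω₂ A C) := by
    rw [hA₁, hB₁, hb, dist_orthogonalProjection_eq_dist_mul_sin_of_angle_eq
      (hplane (by rw [Set.insert_comm C A, Set.pair_comm C B]))
      hBr₁.symm (hsC.trans hsA.symm) (hsC ▸ hs₀)]
  rw [hB₁C₁, hC₁A₁, hA₁B₁, ← hBr₂, ← hBr₁]
  constructor <;> ring

theorem stmt8 (A B C O Ω₂ A₁ B₁ C₁ : EuclideanSpace ℝ (Fin 2)) (R a b c : ℝ)
    (hABC : AffineIndependent ℝ ![A, B, C])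
    (hR : 0 < R) (hOA : dist O A = R) (hOB : dist O B = R) (hOC : dist O C = R)
    (ha : a = dist B C) (hb : b = dist C A) (hc : c = dist A B)
    (hΩ : Ω₂ ∈ interior (convexHull ℝ ({A, B, C} : Set (EuclideanSpace ℝ (Fin 2)))))
    (hBr₁ : ∠ Ω₂ A C = ∠ Ω₂ C B) (hBr₂ : ∠ Ω₂ C B = ∠ Ω₂ B A)
    (hA₁ : A₁ = EuclideanGeometry.orthogonalProjection (affineSpan ℝ {B, C}) Ω₂)
    (hB₁ : B₁ = EuclideanGeometry.orthogonalProjection (affineSpan ℝ {C, A}) Ω₂)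
    (hC₁ : C₁ = EuclideanGeometry.orthogonalProjection (affineSpan ℝ {A, B}) Ω₂) :
    a * dist B₁ C₁ = c * dist C₁ A₁ ∧ b * dist C₁ A₁ = a * dist A₁ B₁ :=
  stmt8_general A B C Ω₂ A₁ B₁ C₁ a b c hABC ha hb hc hΩ hBr₁ hBr₂ hA₁ hB₁ hC₁
end

section
/- Let L₃ be the orthogonal projection of the circumcenter O onto the symmedian line CL (the line through C and the Lemoine point L). Then the pedal triangle A₁B₁C₁ of L₃ is similar to triangle BAC: its side lengths satisfy dist B₁ C₁ : dist C₁ A₁ : dist A₁ B₁ = b : a : c, i.e. a · dist B₁ C₁ = b · dist C₁ A₁ and c · dist C₁ A₁ = a · dist A₁ B₁. -/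
open EuclideanGeometry RealInnerProductSpace

noncomputable section

private lemma proj_line (p q x : EuclideanSpace ℝ (Fin 2)) (h : p ≠ q) :
    ((EuclideanGeometry.orthogonalProjection (affineSpan ℝ {p, q}) x : EuclideanSpace ℝ (Fin 2))) =
      (⟪x - p, q - p⟫ / ⟪q - p, q - p⟫) • (q - p) + p := by
  haveI : Nonempty (affineSpan ℝ ({p, q} : Set (EuclideanSpace ℝ (Fin 2)))) :=
    ⟨⟨p, mem_affineSpan ℝ (by simp)⟩⟩
  have hv : q - p ≠ 0 := sub_ne_zero.2 (Ne.symm h)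
  have hvv : ⟪q - p, q - p⟫ ≠ 0 := inner_self_ne_zero.2 hv
  set t : ℝ := ⟪x - p, q - p⟫ / ⟪q - p, q - p⟫ with ht
  have hy : t • (q - p) + p ∈ affineSpan ℝ ({p, q} : Set (EuclideanSpace ℝ (Fin 2))) := by
    have := smul_vsub_vadd_mem_affineSpan_pair t p q
    simpa [vsub_eq_sub, vadd_eq_add] using this
  have horth : x - (t • (q - p) + p) ∈
      (affineSpan ℝ ({p, q} : Set (EuclideanSpace ℝ (Fin 2)))).directionᗮ := by
    rw [direction_affineSpan, vectorSpan_pair]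
    rw [Submodule.mem_orthogonal_singleton_iff_inner_right]
    have hpq : (p -ᵥ q : EuclideanSpace ℝ (Fin 2)) = -(q - p) := by simp [vsub_eq_sub]
    have hexp : ⟪q - p, x - (t • (q - p) + p)⟫ = ⟪q - p, x - p⟫ - t * ⟪q - p, q - p⟫ := by
      rw [show x - (t • (q - p) + p) = (x - p) - t • (q - p) by abel]
      rw [inner_sub_right, real_inner_smul_right]
    rw [hpq, inner_neg_left, hexp, ht, div_mul_cancel₀ _ hvv, real_inner_comm, sub_self, neg_zero]
  have key := EuclideanGeometry.orthogonalProjection_vadd_eq_self hy horth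
  have hx : (x - (t • (q - p) + p)) +ᵥ (t • (q - p) + p) = x := by
    simp [vadd_eq_add]
  rw [hx] at key
  rw [key]

private lemma side_sq (m e f : EuclideanSpace ℝ (Fin 2)) (he : ⟪e, e⟫ ≠ 0) (hf : ⟪f, f⟫ ≠ 0) :
    ‖(⟪m, e⟫ / ⟪e, e⟫) • e - (⟪m, f⟫ / ⟪f, f⟫) • f‖ ^ 2 * (⟪e, e⟫ * ⟪f, f⟫) =
      ⟪m, e⟫ ^ 2 * ⟪f, f⟫ + ⟪m, f⟫ ^ 2 * ⟪e, e⟫ - 2 * ⟪m, e⟫ * ⟪m, f⟫ * ⟪e, f⟫ := by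
  rw [← real_inner_self_eq_norm_sq]
  simp only [inner_sub_left, inner_sub_right, real_inner_smul_left, real_inner_smul_right]
  rw [real_inner_comm f e]
  set p : ℝ := ⟪m, e⟫
  set q : ℝ := ⟪m, f⟫
  set ee : ℝ := ⟪e, e⟫
  set ff : ℝ := ⟪f, f⟫
  set ef : ℝ := ⟪e, f⟫
  field_simp
  ring

private lemma proj_line' (p q x : EuclideanSpace ℝ (Fin 2)) (h : p ≠ q) :
    ((EuclideanGeometry.orthogonalProjection (affineSpan ℝ {p, q}) x : EuclideanSpace ℝ (Fin 2))) =
      (⟪x - q, p - q⟫ / ⟪p - q, p - q⟫) • (p - q) + q := by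
  have hs : (affineSpan ℝ ({p, q} : Set (EuclideanSpace ℝ (Fin 2)))) =
      affineSpan ℝ ({q, p} : Set (EuclideanSpace ℝ (Fin 2))) := by rw [Set.pair_comm]
  haveI : Nonempty (affineSpan ℝ ({p, q} : Set (EuclideanSpace ℝ (Fin 2)))) :=
    ⟨⟨p, mem_affineSpan ℝ (by simp)⟩⟩
  haveI : Nonempty (affineSpan ℝ ({q, p} : Set (EuclideanSpace ℝ (Fin 2)))) :=
    ⟨⟨p, mem_affineSpan ℝ (by simp)⟩⟩
  rw [EuclideanGeometry.eq_orthogonalProjection_of_eq_subspace hs x]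
  exact proj_line q p x h.symm

set_option maxHeartbeats 2000000 in
theorem stmt9 (A B C O L L₃ A₁ B₁ C₁ : EuclideanSpace ℝ (Fin 2)) (R a b c : ℝ)
    (hABC : AffineIndependent ℝ ![A, B, C])
    (hR : 0 < R) (hOA : dist O A = R) (hOB : dist O B = R) (hOC : dist O C = R)
    (ha : a = dist B C) (hb : b = dist C A) (hc : c = dist A B)
    (hL : L = (a ^ 2 + b ^ 2 + c ^ 2)⁻¹ • (a ^ 2 • A + b ^ 2 • B + c ^ 2 • C))
    (hL₃ : L₃ = EuclideanGeometry.orthogonalProjection (affineSpan ℝ {C, L}) O)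
    (hA₁ : A₁ = EuclideanGeometry.orthogonalProjection (affineSpan ℝ {B, C}) L₃)
    (hB₁ : B₁ = EuclideanGeometry.orthogonalProjection (affineSpan ℝ {C, A}) L₃)
    (hC₁ : C₁ = EuclideanGeometry.orthogonalProjection (affineSpan ℝ {A, B}) L₃) :
    a * dist B₁ C₁ = b * dist C₁ A₁ ∧ c * dist C₁ A₁ = a * dist A₁ B₁ := by
  -- distinctness of vertices
  have hinj := hABC.injective
  have hAB : A ≠ B := by
    intro h
    exact (by decide : ¬((0 : Fin 3) = 1)) (hinj (show ![A, B, C] 0 = ![A, B, C] 1 by simpa using h))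
  have hBC : B ≠ C := by
    intro h
    exact (by decide : ¬((1 : Fin 3) = 2)) (hinj (show ![A, B, C] 1 = ![A, B, C] 2 by simpa using h))
  have hAC : A ≠ C := by
    intro h
    exact (by decide : ¬((0 : Fin 3) = 2)) (hinj (show ![A, B, C] 0 = ![A, B, C] 2 by simpa using h))
  have ha0 : 0 < a := by rw [ha]; exact dist_pos.2 hBC
  have hb0 : 0 < b := by rw [hb]; exact dist_pos.2 hAC.symm
  have hc0 : 0 < c := by rw [hc]; exact dist_pos.2 hAB
  have ha' : a ≠ 0 := ha0.ne'
  have hb' : b ≠ 0 := hb0.ne'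
  have hc' : c ≠ 0 := hc0.ne'
  -- explicit forms of the pedal vertices (before atomization)
  have hB₁A : B₁ = (⟪L₃ - A, C - A⟫ / ⟪C - A, C - A⟫) • (C - A) + A := by
    rw [hB₁, proj_line' C A L₃ hAC.symm]
  have hC₁A : C₁ = (⟪L₃ - A, B - A⟫ / ⟪B - A, B - A⟫) • (B - A) + A := by
    rw [hC₁, proj_line A B L₃ hAB]
  have hC₁B : C₁ = (⟪L₃ - B, A - B⟫ / ⟪A - B, A - B⟫) • (A - B) + B := by
    rw [hC₁, proj_line' A B L₃ hAB]
  have hA₁B : A₁ = (⟪L₃ - B, C - B⟫ / ⟪C - B, C - B⟫) • (C - B) + B := by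
    rw [hA₁, proj_line B C L₃ hBC]
  have hA₁C : A₁ = (⟪L₃ - C, B - C⟫ / ⟪B - C, B - C⟫) • (B - C) + C := by
    rw [hA₁, proj_line' B C L₃ hBC]
  have hB₁C : B₁ = (⟪L₃ - C, A - C⟫ / ⟪A - C, A - C⟫) • (A - C) + C := by
    rw [hB₁, proj_line C A L₃ hAC.symm]
  -- atomization
  obtain ⟨u, hu⟩ : ∃ v : EuclideanSpace ℝ (Fin 2), A - C = v := ⟨_, rfl⟩
  obtain ⟨w, hw⟩ : ∃ v : EuclideanSpace ℝ (Fin 2), B - C = v := ⟨_, rfl⟩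
  obtain ⟨o, ho⟩ : ∃ v : EuclideanSpace ℝ (Fin 2), O - C = v := ⟨_, rfl⟩
  obtain ⟨m, hm⟩ : ∃ v : EuclideanSpace ℝ (Fin 2), L₃ - C = v := ⟨_, rfl⟩
  have hvCA : C - A = -u := by rw [← hu]; abel
  have hvBA : B - A = w - u := by rw [← hu, ← hw]; abel
  have hvAB : A - B = u - w := by rw [← hu, ← hw]; abel
  have hvCB : C - B = -w := by rw [← hw]; abel
  have hvLA : L₃ - A = m - u := by rw [← hm, ← hu]; abel
  have hvLB : L₃ - B = m - w := by rw [← hm, ← hw]; abel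
  have hvOA : O - A = o - u := by rw [← ho, ← hu]; abel
  have hvOB : O - B = o - w := by rw [← ho, ← hw]; abel
  rw [hvLA, hvCA] at hB₁A
  rw [hvLA, hvBA] at hC₁A
  rw [hvLB, hvAB] at hC₁B
  rw [hvLB, hvCB] at hA₁B
  rw [hm, hw] at hA₁C
  rw [hm, hu] at hB₁C
  -- base scalar quantities
  obtain ⟨s, hss⟩ : ∃ r : ℝ, ⟪u, w⟫ = r := ⟨_, rfl⟩
  have hss' : ⟪w, u⟫ = s := by rw [real_inner_comm]; exact hss
  have hbb : ⟪u, u⟫ = b ^ 2 := by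
    rw [real_inner_self_eq_norm_sq, hb, dist_eq_norm, hvCA, norm_neg]
  have haa : ⟪w, w⟫ = a ^ 2 := by
    rw [real_inner_self_eq_norm_sq, ha, dist_eq_norm, hw]
  have hc2 : c ^ 2 = b ^ 2 - 2 * s + a ^ 2 := by
    have h : c ^ 2 = ⟪u - w, u - w⟫ := by
      rw [real_inner_self_eq_norm_sq, hc, dist_eq_norm, hvAB]
    rw [h]
    simp only [inner_sub_left, inner_sub_right, haa, hbb, hss, hss']
    ring
  -- circumcenter relations
  have hou : 2 * ⟪o, u⟫ = b ^ 2 := by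
    have h2 : ⟪o - u, o - u⟫ = ⟪o, o⟫ := by
      rw [real_inner_self_eq_norm_sq, real_inner_self_eq_norm_sq, ← hvOA, ← ho,
        ← dist_eq_norm, ← dist_eq_norm, hOA, hOC]
    simp only [inner_sub_left, inner_sub_right] at h2
    rw [real_inner_comm o u, hbb] at h2
    linarith
  have how : 2 * ⟪o, w⟫ = a ^ 2 := by
    have h2 : ⟪o - w, o - w⟫ = ⟪o, o⟫ := by
      rw [real_inner_self_eq_norm_sq, real_inner_self_eq_norm_sq, ← hvOB, ← ho,
        ← dist_eq_norm, ← dist_eq_norm, hOB, hOC]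
    simp only [inner_sub_left, inner_sub_right] at h2
    rw [real_inner_comm o w, haa] at h2
    linarith
  -- non-collinearity, strict Cauchy-Schwarz
  have hncol : ¬Collinear ℝ ({A, B, C} : Set (EuclideanSpace ℝ (Fin 2))) :=
    affineIndependent_iff_not_collinear_set.1 hABC
  have hind : ∀ r : ℝ, w ≠ r • u := by
    intro r hr
    apply hncol
    rw [collinear_iff_of_mem (show C ∈ ({A, B, C} : Set (EuclideanSpace ℝ (Fin 2))) by simp)]
    refine ⟨u, ?_⟩
    intro p hp
    simp only [Set.mem_insert_iff, Set.mem_singleton_iff] at hp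
    rcases hp with rfl | rfl | rfl
    · exact ⟨1, by simp only [vadd_eq_add, one_smul]; rw [← hu]; abel⟩
    · exact ⟨r, by simp only [vadd_eq_add]; rw [← hr, ← hw]; abel⟩
    · exact ⟨0, by simp⟩
  have hb2 : (b : ℝ) ^ 2 ≠ 0 := (pow_pos hb0 2).ne'
  have hr0 : b ^ 2 • w - s • u ≠ 0 := by
    intro h
    rw [sub_eq_zero] at h
    apply hind (s / b ^ 2)
    calc w = (b ^ 2)⁻¹ • (b ^ 2 • w) := by rw [smul_smul, inv_mul_cancel₀ hb2, one_smul]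
      _ = (b ^ 2)⁻¹ • (s • u) := by rw [h]
      _ = (s / b ^ 2) • u := by rw [smul_smul, ← div_eq_inv_mul]
  have hpos : 0 < ⟪b ^ 2 • w - s • u, b ^ 2 • w - s • u⟫ :=
    lt_of_le_of_ne real_inner_self_nonneg (Ne.symm (inner_self_ne_zero.2 hr0))
  have hval : ⟪b ^ 2 • w - s • u, b ^ 2 • w - s • u⟫ = b ^ 2 * (a ^ 2 * b ^ 2 - s ^ 2) := by
    simp only [inner_sub_left, inner_sub_right, real_inner_smul_left, real_inner_smul_right,
      haa, hbb, hss, hss']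
    ring
  rw [hval] at hpos
  have hcauchy : s ^ 2 < a ^ 2 * b ^ 2 := by nlinarith [hpos, pow_pos hb0 2]
  have hK : 0 < a ^ 2 + b ^ 2 + 2 * s := by
    nlinarith [hcauchy, sq_nonneg (a - b), sq_nonneg (a * b + s), mul_pos ha0 hb0]
  have hKne : a ^ 2 + b ^ 2 + 2 * s ≠ 0 := hK.ne'
  have hsum : a ^ 2 + b ^ 2 + c ^ 2 ≠ 0 := by positivity
  -- the Lemoine point relative to C
  have hLC : L - C = (a ^ 2 + b ^ 2 + c ^ 2)⁻¹ • (a ^ 2 • u + b ^ 2 • w) := by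
    rw [hL, ← hu, ← hw]
    match_scalars <;> field_simp <;> ring
  have hDD : ⟪a ^ 2 • u + b ^ 2 • w, a ^ 2 • u + b ^ 2 • w⟫ =
      a ^ 2 * b ^ 2 * (a ^ 2 + b ^ 2 + 2 * s) := by
    simp only [inner_add_left, inner_add_right, real_inner_smul_left, real_inner_smul_right,
      haa, hbb, hss, hss']
    ring
  have hCL : C ≠ L := by
    intro h
    have h0 := hLC
    rw [← h, sub_self] at h0
    have hD : a ^ 2 • u + b ^ 2 • w = 0 := by
      have h1 := congrArg (fun z : EuclideanSpace ℝ (Fin 2) => (a ^ 2 + b ^ 2 + c ^ 2) • z) h0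
      simpa [smul_smul, ← mul_assoc, mul_inv_cancel₀ hsum] using h1.symm
    rw [hD] at hDD
    simp only [inner_zero_left] at hDD
    nlinarith [hK, pow_pos ha0 2, pow_pos hb0 2]
  have hN : ⟪o, a ^ 2 • u + b ^ 2 • w⟫ = a ^ 2 * b ^ 2 := by
    rw [inner_add_right, real_inner_smul_right, real_inner_smul_right]
    linear_combination (a ^ 2 / 2) * hou + (b ^ 2 / 2) * how
  -- the key formula for L₃
  have hMK : (a ^ 2 + b ^ 2 + 2 * s) • m = a ^ 2 • u + b ^ 2 • w := by
    have hproj := hL₃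
    rw [proj_line C L O hCL] at hproj
    have hstep : m = (⟪O - C, L - C⟫ / ⟪L - C, L - C⟫) • (L - C) := by
      rw [← hm, hproj, add_sub_cancel_right]
    rw [hstep, hLC, ho, real_inner_smul_right, real_inner_smul_left, real_inner_smul_right,
      hN, hDD]
    match_scalars <;> field_simp <;> ring
  -- inner products with m
  have hKC1 : (a ^ 2 + b ^ 2 + 2 * s) * ⟪m, u⟫ = b ^ 2 * (a ^ 2 + s) := by
    rw [← real_inner_smul_left, hMK, inner_add_left, real_inner_smul_left, real_inner_smul_left,
      hbb, hss']
    ring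
  have hKC2 : (a ^ 2 + b ^ 2 + 2 * s) * ⟪m, w⟫ = a ^ 2 * (b ^ 2 + s) := by
    rw [← real_inner_smul_left, hMK, inner_add_left, real_inner_smul_left, real_inner_smul_left,
      haa, hss]
    ring
  -- E-values
  have eA1 : (a ^ 2 + b ^ 2 + 2 * s) * ⟪m - u, -u⟫ = b ^ 2 * (b ^ 2 + s) := by
    rw [inner_neg_right, inner_sub_left, hbb]
    linear_combination -hKC1
  have eA2 : (a ^ 2 + b ^ 2 + 2 * s) * ⟪m - u, w - u⟫ =
      a ^ 2 * b ^ 2 + b ^ 2 * b ^ 2 - 2 * s ^ 2 := by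
    rw [inner_sub_left, inner_sub_right, inner_sub_right, hbb, hss]
    linear_combination hKC2 - hKC1
  have eB1 : (a ^ 2 + b ^ 2 + 2 * s) * ⟪m - w, u - w⟫ =
      a ^ 2 * a ^ 2 + a ^ 2 * b ^ 2 - 2 * s ^ 2 := by
    rw [inner_sub_left, inner_sub_right, inner_sub_right, haa, hss']
    linear_combination hKC1 - hKC2
  have eB2 : (a ^ 2 + b ^ 2 + 2 * s) * ⟪m - w, -w⟫ = a ^ 2 * (a ^ 2 + s) := by
    rw [inner_neg_right, inner_sub_left, haa]
    linear_combination -hKC2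
  -- F-values
  have fA1 : ⟪-u, -u⟫ = b ^ 2 := by rw [inner_neg_neg, hbb]
  have fA2 : ⟪w - u, w - u⟫ = b ^ 2 - 2 * s + a ^ 2 := by
    simp only [inner_sub_left, inner_sub_right, haa, hbb, hss, hss']
    ring
  have fA3 : ⟪-u, w - u⟫ = b ^ 2 - s := by
    simp only [inner_neg_left, inner_sub_right, hbb, hss]
    ring
  have fB1 : ⟪u - w, u - w⟫ = b ^ 2 - 2 * s + a ^ 2 := by
    simp only [inner_sub_left, inner_sub_right, haa, hbb, hss, hss']
    ring
  have fB2 : ⟪-w, -w⟫ = a ^ 2 := by rw [inner_neg_neg, haa]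
  have fB3 : ⟪u - w, -w⟫ = a ^ 2 - s := by
    simp only [inner_neg_right, inner_sub_left, haa, hss]
    ring
  -- squared side lengths of the pedal triangle
  have hne1 : ⟪-u, -u⟫ ≠ 0 := by rw [fA1]; exact (pow_pos hb0 2).ne'
  have hne2 : ⟪w - u, w - u⟫ ≠ 0 := by rw [fA2, ← hc2]; exact (pow_pos hc0 2).ne'
  have hne3 : ⟪u - w, u - w⟫ ≠ 0 := by rw [fB1, ← hc2]; exact (pow_pos hc0 2).ne'
  have hne4 : ⟪-w, -w⟫ ≠ 0 := by rw [fB2]; exact (pow_pos ha0 2).ne'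
  have hne5 : ⟪w, w⟫ ≠ 0 := by rw [haa]; exact (pow_pos ha0 2).ne'
  have hne6 : ⟪u, u⟫ ≠ 0 := by rw [hbb]; exact (pow_pos hb0 2).ne'
  have hdiff1 : B₁ - C₁ = (⟪m - u, -u⟫ / ⟪-u, -u⟫) • (-u) -
      (⟪m - u, w - u⟫ / ⟪w - u, w - u⟫) • (w - u) := by
    rw [hB₁A, hC₁A]; abel
  have hdiff2 : C₁ - A₁ = (⟪m - w, u - w⟫ / ⟪u - w, u - w⟫) • (u - w) -
      (⟪m - w, -w⟫ / ⟪-w, -w⟫) • (-w) := by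
    rw [hC₁B, hA₁B]; abel
  have hdiff3 : A₁ - B₁ = (⟪m, w⟫ / ⟪w, w⟫) • w - (⟪m, u⟫ / ⟪u, u⟫) • u := by
    rw [hA₁C, hB₁C]; abel
  have w1 : dist B₁ C₁ ^ 2 * (⟪-u, -u⟫ * ⟪w - u, w - u⟫) =
      ⟪m - u, -u⟫ ^ 2 * ⟪w - u, w - u⟫ + ⟪m - u, w - u⟫ ^ 2 * ⟪-u, -u⟫ -
        2 * ⟪m - u, -u⟫ * ⟪m - u, w - u⟫ * ⟪-u, w - u⟫ := by
    rw [dist_eq_norm, hdiff1]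
    exact side_sq (m - u) (-u) (w - u) hne1 hne2
  have w2 : dist C₁ A₁ ^ 2 * (⟪u - w, u - w⟫ * ⟪-w, -w⟫) =
      ⟪m - w, u - w⟫ ^ 2 * ⟪-w, -w⟫ + ⟪m - w, -w⟫ ^ 2 * ⟪u - w, u - w⟫ -
        2 * ⟪m - w, u - w⟫ * ⟪m - w, -w⟫ * ⟪u - w, -w⟫ := by
    rw [dist_eq_norm, hdiff2]
    exact side_sq (m - w) (u - w) (-w) hne3 hne4
  have w3 : dist A₁ B₁ ^ 2 * (⟪w, w⟫ * ⟪u, u⟫) =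
      ⟪m, w⟫ ^ 2 * ⟪u, u⟫ + ⟪m, u⟫ ^ 2 * ⟪w, w⟫ -
        2 * ⟪m, w⟫ * ⟪m, u⟫ * ⟪w, u⟫ := by
    rw [dist_eq_norm, hdiff3]
    exact side_sq m w u hne5 hne6
  rw [fA1, fA2, fA3] at w1
  rw [fB1, fB2, fB3] at w2
  rw [haa, hbb, hss'] at w3
  -- the three clean squared side lengths
  have hd1 : dist B₁ C₁ ^ 2 * ((b ^ 2 - 2 * s + a ^ 2) * (a ^ 2 + b ^ 2 + 2 * s)) =
      b ^ 2 * (a ^ 2 * b ^ 2 - s ^ 2) := by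
    refine mul_right_cancel₀ (show (b ^ 2 * (a ^ 2 + b ^ 2 + 2 * s)) ≠ 0 from
      (mul_pos (pow_pos hb0 2) hK).ne') ?_
    linear_combination ((a ^ 2 + b ^ 2 + 2 * s) ^ 2) * w1 +
      ((b ^ 2 - 2 * s + a ^ 2) * ((a ^ 2 + b ^ 2 + 2 * s) * ⟪m - u, -u⟫ + b ^ 2 * (b ^ 2 + s)) -
        2 * (b ^ 2 - s) * (a ^ 2 + b ^ 2 + 2 * s) * ⟪m - u, w - u⟫) * eA1 +
      (b ^ 2 * ((a ^ 2 + b ^ 2 + 2 * s) * ⟪m - u, w - u⟫ +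
          (a ^ 2 * b ^ 2 + b ^ 2 * b ^ 2 - 2 * s ^ 2)) -
        2 * (b ^ 2 - s) * (b ^ 2 * (b ^ 2 + s))) * eA2
  have hd2 : dist C₁ A₁ ^ 2 * ((b ^ 2 - 2 * s + a ^ 2) * (a ^ 2 + b ^ 2 + 2 * s)) =
      a ^ 2 * (a ^ 2 * b ^ 2 - s ^ 2) := by
    refine mul_right_cancel₀ (show (a ^ 2 * (a ^ 2 + b ^ 2 + 2 * s)) ≠ 0 from
      (mul_pos (pow_pos ha0 2) hK).ne') ?_
    linear_combination ((a ^ 2 + b ^ 2 + 2 * s) ^ 2) * w2 +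
      (a ^ 2 * ((a ^ 2 + b ^ 2 + 2 * s) * ⟪m - w, u - w⟫ +
          (a ^ 2 * a ^ 2 + a ^ 2 * b ^ 2 - 2 * s ^ 2)) -
        2 * (a ^ 2 - s) * (a ^ 2 * (a ^ 2 + s))) * eB1 +
      ((b ^ 2 - 2 * s + a ^ 2) * ((a ^ 2 + b ^ 2 + 2 * s) * ⟪m - w, -w⟫ + a ^ 2 * (a ^ 2 + s)) -
        2 * (a ^ 2 - s) * (a ^ 2 + b ^ 2 + 2 * s) * ⟪m - w, u - w⟫) * eB2
  have hd3 : dist A₁ B₁ ^ 2 * (a ^ 2 + b ^ 2 + 2 * s) = a ^ 2 * b ^ 2 - s ^ 2 := by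
    refine mul_right_cancel₀ (show (a ^ 2 * b ^ 2 * (a ^ 2 + b ^ 2 + 2 * s)) ≠ 0 from
      (mul_pos (mul_pos (pow_pos ha0 2) (pow_pos hb0 2)) hK).ne') ?_
    linear_combination ((a ^ 2 + b ^ 2 + 2 * s) ^ 2) * w3 +
      (b ^ 2 * ((a ^ 2 + b ^ 2 + 2 * s) * ⟪m, w⟫ + a ^ 2 * (b ^ 2 + s)) -
        2 * s * (b ^ 2 * (a ^ 2 + s))) * hKC2 +
      (a ^ 2 * ((a ^ 2 + b ^ 2 + 2 * s) * ⟪m, u⟫ + b ^ 2 * (a ^ 2 + s)) -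
        2 * s * (a ^ 2 + b ^ 2 + 2 * s) * ⟪m, w⟫) * hKC1
  have hP : 0 < b ^ 2 - 2 * s + a ^ 2 := by
    have h := pow_pos hc0 2
    rwa [hc2] at h
  constructor
  · refine (sq_eq_sq₀ (mul_nonneg ha0.le dist_nonneg) (mul_nonneg hb0.le dist_nonneg)).1 ?_
    refine mul_right_cancel₀ (show ((b ^ 2 - 2 * s + a ^ 2) * (a ^ 2 + b ^ 2 + 2 * s)) ≠ 0 from
      (mul_pos hP hK).ne') ?_
    linear_combination a ^ 2 * hd1 - b ^ 2 * hd2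
  · refine (sq_eq_sq₀ (mul_nonneg hc0.le dist_nonneg) (mul_nonneg ha0.le dist_nonneg)).1 ?_
    refine mul_right_cancel₀ hKne ?_
    linear_combination hd2 - a ^ 2 * hd3 + (dist C₁ A₁ ^ 2 * (a ^ 2 + b ^ 2 + 2 * s)) * hc2
end
end

section
/- Assume ∠ A C B ≠ π/2 (equivalently c² ≠ a² + b², so A, B, O are not collinear). Let L₃ be the orthogonal projection of O onto the symmedian line CL. Then the four points A, B, O, L₃ are concyclic, i.e. L₃ lies on the circle through A, B and O. -/
open EuclideanGeometry
open scoped EuclideanGeometry RealInnerProductSpace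

noncomputable section

set_option maxHeartbeats 1600000 in
theorem stmt10 (A B C O L L₃ : EuclideanSpace ℝ (Fin 2)) (R a b c : ℝ)
    (hABC : AffineIndependent ℝ ![A, B, C])
    (hR : 0 < R) (hOA : dist O A = R) (hOB : dist O B = R) (hOC : dist O C = R)
    (ha : a = dist B C) (hb : b = dist C A) (hc : c = dist A B)
    (hangle : ∠ A C B ≠ Real.pi / 2)
    (hL : L = (a ^ 2 + b ^ 2 + c ^ 2)⁻¹ • (a ^ 2 • A + b ^ 2 • B + c ^ 2 • C))
    (hL₃ : L₃ = EuclideanGeometry.orthogonalProjection (affineSpan ℝ {C, L}) O) :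
    EuclideanGeometry.Concyclic ({A, B, O, L₃} : Set (EuclideanSpace ℝ (Fin 2))) := by
  -- basic nondegeneracy
  have hBC : B ≠ C := by
    intro h
    have := hABC.injective (show ![A,B,C] 1 = ![A,B,C] 2 by simpa using h)
    simp at this
  have hapos : 0 < a := ha ▸ dist_pos.2 hBC
  have hw : (0:ℝ) < a ^ 2 + b ^ 2 + c ^ 2 := by nlinarith [sq_nonneg b, sq_nonneg c]
  -- a² + b² - c² = 2⟪A-C, B-C⟫ ≠ 0
  have ha2 : a ^ 2 = ‖B - C‖ ^ 2 := by rw [ha, dist_eq_norm]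
  have hb2 : b ^ 2 = ‖A - C‖ ^ 2 := by rw [hb, dist_comm, dist_eq_norm]
  have hc2 : c ^ 2 = ‖A - B‖ ^ 2 := by rw [hc, dist_eq_norm]
  have hinner : ⟪A - C, B - C⟫ ≠ 0 := by
    intro h
    exact hangle ((InnerProductGeometry.inner_eq_zero_iff_angle_eq_pi_div_two _ _).1 h)
  have hksplit : a ^ 2 + b ^ 2 - c ^ 2 = 2 * ⟪A - C, B - C⟫ := by
    have h1 : A - B = (A - C) - (B - C) := by abel
    have hx : ‖(A - C) - (B - C)‖ ^ 2
        = ‖A - C‖ ^ 2 - 2 * ⟪A - C, B - C⟫ + ‖B - C‖ ^ 2 := norm_sub_sq_real _ _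
    rw [ha2, hb2, hc2, h1, hx]
    ring
  have hk : a ^ 2 + b ^ 2 - c ^ 2 ≠ 0 := by
    rw [hksplit]; exact mul_ne_zero two_ne_zero hinner
  -- the pole T of AB, lying on line CL
  set S : AffineSubspace ℝ (EuclideanSpace ℝ (Fin 2)) :=
    affineSpan ℝ ({C, L} : Set (EuclideanSpace ℝ (Fin 2))) with hS
  set T : EuclideanSpace ℝ (Fin 2) :=
    AffineMap.lineMap C L ((a ^ 2 + b ^ 2 + c ^ 2) / (a ^ 2 + b ^ 2 - c ^ 2)) with hT
  have hTmem : T ∈ S := AffineMap.lineMap_mem_affineSpan_pair _ _ _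
  have hwL : (a ^ 2 + b ^ 2 + c ^ 2) • L = a ^ 2 • A + b ^ 2 • B + c ^ 2 • C := by
    rw [hL, smul_smul, mul_inv_cancel₀ hw.ne', one_smul]
  -- norms of radii
  have eA : ‖A - O‖ = R := by rw [← dist_eq_norm, dist_comm]; exact hOA
  have eB : ‖B - O‖ = R := by rw [← dist_eq_norm, dist_comm]; exact hOB
  have eC : ‖C - O‖ = R := by rw [← dist_eq_norm, dist_comm]; exact hOC
  -- inner products with circumradius
  have hAB : ⟪A - O, A - B⟫ = c ^ 2 / 2 := by
    have h1 : A - B = (A - O) - (B - O) := by abel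
    have h2 : c ^ 2 = ‖(A - O) - (B - O)‖ ^ 2 := by rw [← h1, hc, dist_eq_norm]
    rw [h1, inner_sub_right, real_inner_self_eq_norm_sq, eA]
    rw [@norm_sub_sq_real, eA, eB] at h2
    linarith
  have hAC : ⟪A - O, A - C⟫ = b ^ 2 / 2 := by
    have h1 : A - C = (A - O) - (C - O) := by abel
    have h2 : b ^ 2 = ‖(A - O) - (C - O)‖ ^ 2 := by rw [← h1, hb, dist_comm, dist_eq_norm]
    rw [h1, inner_sub_right, real_inner_self_eq_norm_sq, eA]
    rw [@norm_sub_sq_real, eA, eC] at h2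
    linarith
  have hBA : ⟪B - O, B - A⟫ = c ^ 2 / 2 := by
    have h1 : B - A = (B - O) - (A - O) := by abel
    have h2 : c ^ 2 = ‖(B - O) - (A - O)‖ ^ 2 := by
      rw [← h1, hc, dist_comm, dist_eq_norm]
    rw [h1, inner_sub_right, real_inner_self_eq_norm_sq, eB]
    rw [@norm_sub_sq_real, eA, eB] at h2
    linarith
  have hBCin : ⟪B - O, B - C⟫ = a ^ 2 / 2 := by
    have h1 : B - C = (B - O) - (C - O) := by abel
    have h2 : a ^ 2 = ‖(B - O) - (C - O)‖ ^ 2 := by rw [← h1, ha, dist_eq_norm]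
    rw [h1, inner_sub_right, real_inner_self_eq_norm_sq, eB]
    rw [@norm_sub_sq_real, eB, eC] at h2
    linarith
  -- tangency: key algebraic identities
  have hkeyA : (a ^ 2 + b ^ 2 - c ^ 2) • (A - T) = b ^ 2 • (A - B) - c ^ 2 • (A - C) := by
    rw [hT, AffineMap.lineMap_apply_module, hL]
    match_scalars <;> field_simp <;> ring
  have hkeyB : (a ^ 2 + b ^ 2 - c ^ 2) • (B - T) = a ^ 2 • (B - A) - c ^ 2 • (B - C) := by
    rw [hT, AffineMap.lineMap_apply_module, hL]
    match_scalars <;> field_simp <;> ring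
  have hiA : ⟪A - O, A - T⟫ = 0 := by
    have h3 : ⟪A - O, (a ^ 2 + b ^ 2 - c ^ 2) • (A - T)⟫
        = (a ^ 2 + b ^ 2 - c ^ 2) * ⟪A - O, A - T⟫ := real_inner_smul_right _ _ _
    rw [hkeyA, inner_sub_right, real_inner_smul_right, real_inner_smul_right, hAB, hAC] at h3
    have h4 : (a ^ 2 + b ^ 2 - c ^ 2) * ⟪A - O, A - T⟫ = 0 := by linarith [h3.symm]
    exact (mul_eq_zero.1 h4).resolve_left hk
  have hiB : ⟪B - O, B - T⟫ = 0 := by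
    have h3 : ⟪B - O, (a ^ 2 + b ^ 2 - c ^ 2) • (B - T)⟫
        = (a ^ 2 + b ^ 2 - c ^ 2) * ⟪B - O, B - T⟫ := real_inner_smul_right _ _ _
    rw [hkeyB, inner_sub_right, real_inner_smul_right, real_inner_smul_right, hBA, hBCin] at h3
    have h4 : (a ^ 2 + b ^ 2 - c ^ 2) * ⟪B - O, B - T⟫ = 0 := by linarith [h3.symm]
    exact (mul_eq_zero.1 h4).resolve_left hk
  -- the projection L₃
  have hmem : L₃ ∈ S := by
    rw [hL₃]; exact EuclideanGeometry.orthogonalProjection_mem O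
  have hperp : O - L₃ ∈ S.directionᗮ := by
    rw [hL₃]
    simpa [vsub_eq_sub] using
      EuclideanGeometry.vsub_orthogonalProjection_mem_direction_orthogonal S O
  have hdir : L₃ - T ∈ S.direction := by
    simpa [vsub_eq_sub] using AffineSubspace.vsub_mem_direction hmem hTmem
  have hiL : ⟪L₃ - O, L₃ - T⟫ = 0 := by
    have h0 : ⟪L₃ - T, O - L₃⟫ = 0 :=
      (Submodule.mem_orthogonal _ _).1 hperp _ hdir
    have h1 : L₃ - O = -(O - L₃) := by abel
    rw [h1, real_inner_comm, inner_neg_right, h0, neg_zero]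
  -- Thales: inner = 0 implies membership in the circle with diameter OT
  have key : ∀ X : EuclideanSpace ℝ (Fin 2), ⟪X - O, X - T⟫ = 0 →
      dist X (midpoint ℝ O T) = dist O T / 2 := by
    intro X hX
    have hm : X - midpoint ℝ O T = (2:ℝ)⁻¹ • ((X - O) + (X - T)) := by
      rw [midpoint_eq_smul_add, invOf_eq_inv]
      module
    have hOT : O - T = (X - T) - (X - O) := by abel
    have h1 : ‖(X - O) + (X - T)‖ * ‖(X - O) + (X - T)‖
        = ‖X - O‖ * ‖X - O‖ + ‖X - T‖ * ‖X - T‖ :=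
      (norm_add_sq_eq_norm_sq_add_norm_sq_iff_real_inner_eq_zero _ _).2 hX
    have h2 : ‖(X - T) - (X - O)‖ * ‖(X - T) - (X - O)‖
        = ‖X - T‖ * ‖X - T‖ + ‖X - O‖ * ‖X - O‖ :=
      (norm_sub_sq_eq_norm_sq_add_norm_sq_iff_real_inner_eq_zero _ _).2
        (by rw [real_inner_comm]; exact hX)
    have h3 : ‖(X - O) + (X - T)‖ = ‖(X - T) - (X - O)‖ := by
      rcases mul_self_eq_mul_self_iff.1 (h1.trans (by linarith [h2] : _)) with h | h
      · exact h
      · have := norm_nonneg ((X - O) + (X - T))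
        have := norm_nonneg ((X - T) - (X - O))
        linarith
    rw [dist_eq_norm, hm, norm_smul, dist_eq_norm, hOT, ← h3]
    simp [Real.norm_eq_abs, abs_of_nonneg]
    ring
  -- assemble
  refine ⟨⟨midpoint ℝ O T, dist O T / 2, ?_⟩, coplanar_of_finrank_eq_two _ ?_⟩
  · intro p hp
    simp only [Set.mem_insert_iff, Set.mem_singleton_iff] at hp
    rcases hp with rfl | rfl | rfl | rfl
    · exact key _ hiA
    · exact key _ hiB
    · exact key _ (by simp)
    · exact key _ hiL
  · simp [finrank_euclideanSpace]
end
end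

section
/- The orthogonal projections L₁, L₂, L₃ of the circumcenter O onto the symmedian lines AL, BL, CL respectively are given by the affine combinations L₁ = ((b²+c²−a²) • A + b² • B + c² • C)/(2(b²+c²)−a²), L₂ = (a² • A + (c²+a²−b²) • B + c² • C)/(2(c²+a²)−b²), and L₃ = (a² • A + b² • B + (a²+b²−c²) • C)/(2(a²+b²)−c²). -/
/-!
Put `w = b² (B - A) + c² (C - A)`, so that `L - A = w / (a² + b² + c²)` and the symmedian through `A`
has direction `w`. Since `O` is equidistant from the vertices, `⟪B - A, O - A⟫ = c² / 2` and
`⟪C - A, O - A⟫ = b² / 2`, hence `⟪w, O - A⟫ = b²c²`, while the law of cosines gives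
`‖w‖² = b²c² (2(b² + c²) - a²)`. So the foot of the perpendicular from `O` is
`A + w / (2(b² + c²) - a²)`. By Apollonius the denominator is `4 AM²` for the midpoint `M` of `BC`,
positive for a nondegenerate triangle. The other two feet follow by cyclic symmetry.
-/

open EuclideanGeometry RealInnerProductSpace

noncomputable section

variable {V : Type*} [NormedAddCommGroup V] [InnerProductSpace ℝ V]

lemma inner_sub_sub_eq_dist_sq (A B C : V) :
    ⟪B - A, C - A⟫ = (dist A B ^ 2 + dist A C ^ 2 - dist B C ^ 2) / 2 := by
  rw [real_inner_eq_norm_mul_self_add_norm_mul_self_sub_norm_sub_mul_self_div_two,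
    sub_sub_sub_cancel_right, dist_comm A B, dist_comm A C, dist_eq_norm, dist_eq_norm,
    dist_eq_norm]
  ring

lemma two_mul_add_sub_dist_sq_eq_four_mul_dist_midpoint_sq (A B C : V) :
    2 * (dist C A ^ 2 + dist A B ^ 2) - dist B C ^ 2 = 4 * dist A (midpoint ℝ B C) ^ 2 := by
  have := dist_sq_add_dist_sq_eq_two_mul_dist_midpoint_sq_add_half_dist_sq A B C
  rw [dist_comm C A]
  linarith

lemma ne_midpoint_of_not_collinear {A B C : V} (h : ¬Collinear ℝ {A, B, C}) :
    A ≠ midpoint ℝ B C := by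
  rintro rfl
  exact h (collinear_insert_of_mem_affineSpan_pair (AffineMap.lineMap_mem_affineSpan_pair _ _ _))

theorem coe_orthogonalProjection_line_eq_add_smul {A w O : V} {s t : ℝ} (hs : s ≠ 0)
    (h : ⟪w, O - A⟫ = t * ⟪w, w⟫) :
    (orthogonalProjection line[ℝ, A, A + s • w] O : V) = A + t • w := by
  rw [coe_orthogonalProjection_eq_iff_mem, direction_affineSpan, vectorSpan_pair,
    Submodule.mem_orthogonal_singleton_iff_inner_right]
  constructor
  · convert AffineMap.lineMap_mem_affineSpan_pair (t / s) A (A + s • w) using 1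
    rw [AffineMap.lineMap_apply, vsub_eq_sub, vadd_eq_add, add_sub_cancel_left, smul_smul,
      div_mul_cancel₀ t hs, add_comm]
  · rw [vsub_eq_sub, vsub_eq_sub, sub_add_cancel_left, sub_add_eq_sub_sub, inner_neg_left,
      real_inner_smul_left, inner_sub_right, real_inner_smul_right, h]
    ring

def lemoinePoint (A B C : V) : V :=
  (dist B C ^ 2 + dist C A ^ 2 + dist A B ^ 2)⁻¹ •
    (dist B C ^ 2 • A + dist C A ^ 2 • B + dist A B ^ 2 • C)

lemma lemoinePoint_rotate (A B C : V) : lemoinePoint B C A = lemoinePoint A B C := by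
  unfold lemoinePoint
  rw [← add_rotate (dist B C ^ 2), ← add_rotate (dist B C ^ 2 • A)]

theorem coe_orthogonalProjection_line_lemoinePoint {A B C O : V}
    (hOB : dist O B = dist O A) (hOC : dist O C = dist O A) (hA : A ≠ midpoint ℝ B C) :
    (orthogonalProjection line[ℝ, A, lemoinePoint A B C] O : V) =
      (2 * (dist C A ^ 2 + dist A B ^ 2) - dist B C ^ 2)⁻¹ •
        ((dist C A ^ 2 + dist A B ^ 2 - dist B C ^ 2) • A + dist C A ^ 2 • B +
          dist A B ^ 2 • C) := by
  set a := dist B C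
  set b := dist C A
  set c := dist A B
  set S := a ^ 2 + b ^ 2 + c ^ 2
  set D := 2 * (b ^ 2 + c ^ 2) - a ^ 2 with hD
  set w : V := b ^ 2 • (B - A) + c ^ 2 • (C - A)
  have hD_pos : 0 < D := by
    rw [hD, two_mul_add_sub_dist_sq_eq_four_mul_dist_midpoint_sq]
    have := dist_pos.2 hA
    positivity
  have hS_pos : 0 < S := by nlinarith
  have hL : lemoinePoint A B C = A + S⁻¹ • w := by
    rw [lemoinePoint, show a ^ 2 • A + b ^ 2 • B + c ^ 2 • C = S • A + w by module, smul_add,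
      inv_smul_smul₀ hS_pos.ne']
  have hP : D⁻¹ • ((b ^ 2 + c ^ 2 - a ^ 2) • A + b ^ 2 • B + c ^ 2 • C) = A + D⁻¹ • w := by
    rw [show (b ^ 2 + c ^ 2 - a ^ 2) • A + b ^ 2 • B + c ^ 2 • C = D • A + w by module, smul_add,
      inv_smul_smul₀ hD_pos.ne']
  have hBC : ⟪B - A, C - A⟫ = (c ^ 2 + b ^ 2 - a ^ 2) / 2 := by
    rw [inner_sub_sub_eq_dist_sq, dist_comm A C]
  have hBB : ⟪B - A, B - A⟫ = c ^ 2 := by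
    rw [inner_sub_sub_eq_dist_sq, dist_self]; ring
  have hCC : ⟪C - A, C - A⟫ = b ^ 2 := by
    rw [inner_sub_sub_eq_dist_sq, dist_self, dist_comm A C]; ring
  have hBO : ⟪B - A, O - A⟫ = c ^ 2 / 2 := by
    rw [inner_sub_sub_eq_dist_sq, dist_comm A O, dist_comm B O, hOB]; ring
  have hCO : ⟪C - A, O - A⟫ = b ^ 2 / 2 := by
    rw [inner_sub_sub_eq_dist_sq, dist_comm A C, dist_comm A O, dist_comm C O, hOC]; ring
  have hww : ⟪w, w⟫ = b ^ 2 * c ^ 2 * D := by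
    simp only [w, inner_add_left, inner_add_right, real_inner_smul_left, real_inner_smul_right,
      real_inner_comm (B - A), hBB, hBC, hCC]
    ring
  have hwO : ⟪w, O - A⟫ = b ^ 2 * c ^ 2 := by
    simp only [w, inner_add_left, real_inner_smul_left, hBO, hCO]
    ring
  rw [hP, hL, coe_orthogonalProjection_line_eq_add_smul (inv_ne_zero hS_pos.ne')]
  rw [hww, hwO]
  field_simp

theorem stmt11_general (A B C O L L₁ L₂ L₃ : EuclideanSpace ℝ (Fin 2)) (R a b c : ℝ)
    (hABC : AffineIndependent ℝ ![A, B, C])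
    (hOA : dist O A = R) (hOB : dist O B = R) (hOC : dist O C = R)
    (ha : a = dist B C) (hb : b = dist C A) (hc : c = dist A B)
    (hL : L = (a ^ 2 + b ^ 2 + c ^ 2)⁻¹ • (a ^ 2 • A + b ^ 2 • B + c ^ 2 • C))
    (hL₁ : L₁ = EuclideanGeometry.orthogonalProjection (affineSpan ℝ {A, L}) O)
    (hL₂ : L₂ = EuclideanGeometry.orthogonalProjection (affineSpan ℝ {B, L}) O)
    (hL₃ : L₃ = EuclideanGeometry.orthogonalProjection (affineSpan ℝ {C, L}) O) :
    L₁ = (2 * (b ^ 2 + c ^ 2) - a ^ 2)⁻¹ •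
        ((b ^ 2 + c ^ 2 - a ^ 2) • A + b ^ 2 • B + c ^ 2 • C) ∧
    L₂ = (2 * (c ^ 2 + a ^ 2) - b ^ 2)⁻¹ •
        (a ^ 2 • A + (c ^ 2 + a ^ 2 - b ^ 2) • B + c ^ 2 • C) ∧
    L₃ = (2 * (a ^ 2 + b ^ 2) - c ^ 2)⁻¹ •
        (a ^ 2 • A + b ^ 2 • B + (a ^ 2 + b ^ 2 - c ^ 2) • C) := by
  subst ha hb hc hL₁ hL₂ hL₃
  have hL' : L = lemoinePoint A B C := hL
  have hABC' : ¬Collinear ℝ {A, B, C} := affineIndependent_iff_not_collinear_set.mp hABC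
  have hBCA : ¬Collinear ℝ {B, C, A} := by rwa [Set.pair_comm C A, Set.insert_comm B A]
  have hCAB : ¬Collinear ℝ {C, A, B} := by rwa [Set.insert_comm C A, Set.pair_comm C B]
  refine ⟨?_, ?_, ?_⟩
  · rw [hL', coe_orthogonalProjection_line_lemoinePoint (hOB.trans hOA.symm)
      (hOC.trans hOA.symm) (ne_midpoint_of_not_collinear hABC')]
  · rw [hL', ← lemoinePoint_rotate, coe_orthogonalProjection_line_lemoinePoint
      (hOC.trans hOB.symm) (hOA.trans hOB.symm) (ne_midpoint_of_not_collinear hBCA)]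
    module
  · rw [hL', lemoinePoint_rotate, coe_orthogonalProjection_line_lemoinePoint
      (hOA.trans hOC.symm) (hOB.trans hOC.symm) (ne_midpoint_of_not_collinear hCAB)]
    module

theorem stmt11 (A B C O L L₁ L₂ L₃ : EuclideanSpace ℝ (Fin 2)) (R a b c : ℝ)
    (hABC : AffineIndependent ℝ ![A, B, C])
    (hR : 0 < R) (hOA : dist O A = R) (hOB : dist O B = R) (hOC : dist O C = R)
    (ha : a = dist B C) (hb : b = dist C A) (hc : c = dist A B)
    (hL : L = (a ^ 2 + b ^ 2 + c ^ 2)⁻¹ • (a ^ 2 • A + b ^ 2 • B + c ^ 2 • C))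
    (hL₁ : L₁ = EuclideanGeometry.orthogonalProjection (affineSpan ℝ {A, L}) O)
    (hL₂ : L₂ = EuclideanGeometry.orthogonalProjection (affineSpan ℝ {B, L}) O)
    (hL₃ : L₃ = EuclideanGeometry.orthogonalProjection (affineSpan ℝ {C, L}) O) :
    L₁ = (2 * (b ^ 2 + c ^ 2) - a ^ 2)⁻¹ •
        ((b ^ 2 + c ^ 2 - a ^ 2) • A + b ^ 2 • B + c ^ 2 • C) ∧
    L₂ = (2 * (c ^ 2 + a ^ 2) - b ^ 2)⁻¹ •
        (a ^ 2 • A + (c ^ 2 + a ^ 2 - b ^ 2) • B + c ^ 2 • C) ∧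
    L₃ = (2 * (a ^ 2 + b ^ 2) - c ^ 2)⁻¹ •
        (a ^ 2 • A + b ^ 2 • B + (a ^ 2 + b ^ 2 - c ^ 2) • C) :=
  stmt11_general A B C O L L₁ L₂ L₃ R a b c hABC hOA hOB hOC ha hb hc hL hL₁ hL₂ hL₃
end
end

section
/- Assume a ≠ b, let L₃ be the orthogonal projection of O onto the symmedian line CL, and assume L₃ ≠ O. Then the inverse point L₃' = inversion O R L₃ satisfies: (i) L₃' = (a² • A − b² • B)/(a² − b²) (the affine combination of A and B with weights a²/(a²−b²) and −b²/(a²−b²)); (ii) L₃' lies on the line AB; (iii) a² · dist L₃' A = b² · dist L₃' B (so L₃' is the center of the Apollonius circle with basic points A, B passing through C); (iv) the line C L₃' is tangent to the circumcircle at C, i.e. the inner product ⟪C − O, L₃' − C⟫ = 0. -/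
open EuclideanGeometry
open scoped RealInnerProductSpace

/-!
Let `D = (a² • A - b² • B) / (a² - b²)`. Both `C` and the Lemoine point `L` lie on the polar
`{X | ⟪X - O, D - O⟫ = R²}` of `D`; this only needs the Gram entries
`⟪A - O, B - O⟫ = R² - c² / 2` (and cyclically). In the plane the polar of `D ≠ O` is the line
through the inverse of `D` perpendicular to `OD`, so it is the line `CL`, and the foot `L₃` of the
perpendicular from `O` to it is the inverse of `D`. Inverting once more gives `L₃' = D`, and the
remaining claims are properties of `D`: it lies on `AB`, divides it externally in the ratio
`b² : a²`, and `C` on the circle lies on its polar, i.e. `CD` is tangent.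
-/

namespace EuclideanGeometry

variable {V P : Type*} [NormedAddCommGroup V] [InnerProductSpace ℝ V] [MetricSpace P]
  [NormedAddTorsor V P]

def polar (O : P) (R : ℝ) (D : P) : Set P := {X | ⟪X -ᵥ O, D -ᵥ O⟫ = R ^ 2}

lemma mem_polar {O D X : P} {R : ℝ} : X ∈ polar O R D ↔ ⟪X -ᵥ O, D -ᵥ O⟫ = R ^ 2 := Iff.rfl

lemma inversion_mem_polar {O D : P} (R : ℝ) (hD : D ≠ O) : inversion O R D ∈ polar O R D := by
  have hDO : dist D O ≠ 0 := dist_ne_zero.2 hD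
  rw [mem_polar, inversion_vsub_center, real_inner_smul_left,
    real_inner_self_eq_norm_sq, ← dist_eq_norm_vsub]
  field_simp

lemma inner_vsub_vsub_eq_zero_of_mem_polar_of_dist_eq {O D C : P} {R : ℝ} (hC : dist O C = R)
    (hCD : C ∈ polar O R D) : ⟪C -ᵥ O, D -ᵥ C⟫ = 0 := by
  rw [← vsub_sub_vsub_cancel_right D C O, inner_sub_right, hCD, real_inner_self_eq_norm_sq,
    ← dist_eq_norm_vsub, dist_comm, hC, sub_self]

lemma inner_vsub_vsub_eq_zero_of_mem_polar {O D X Y : P} {R : ℝ} (hX : X ∈ polar O R D)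
    (hY : Y ∈ polar O R D) : ⟪D -ᵥ O, Y -ᵥ X⟫ = 0 := by
  rw [← vsub_sub_vsub_cancel_right Y X O, inner_sub_right, real_inner_comm, hY,
    real_inner_comm, hX, sub_self]

theorem orthogonalProjection_affineSpan_pair_eq_inversion [Fact (Module.finrank ℝ V = 2)]
    {O D X Y : P} {R : ℝ} (hR : R ≠ 0) (hXY : X ≠ Y) (hX : X ∈ polar O R D)
    (hY : Y ∈ polar O R D) :
    (orthogonalProjection line[ℝ, X, Y] O : P) = inversion O R D := by
  have hD : D ≠ O := by
    rintro rfl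
    rw [mem_polar, vsub_self, inner_zero_right] at hX
    exact pow_ne_zero 2 hR hX.symm
  have hinv := inversion_mem_polar R hD
  rw [coe_orthogonalProjection_eq_iff_mem, direction_affineSpan, vectorSpan_pair_rev]
  constructor
  · rw [← AffineSubspace.vsub_right_mem_direction_iff_mem (left_mem_affineSpan_pair ℝ X Y),
      direction_affineSpan, vectorSpan_pair_rev]
    exact Submodule.mem_span_singleton_of_inner_eq_zero_of_inner_eq_zero (vsub_ne_zero.2 hD)
      (vsub_ne_zero.2 hXY.symm) (inner_vsub_vsub_eq_zero_of_mem_polar hX hinv)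
      (inner_vsub_vsub_eq_zero_of_mem_polar hX hY)
  · rw [Submodule.mem_orthogonal_singleton_iff_inner_left, ← neg_vsub_eq_vsub_rev (inversion O R D),
      inversion_vsub_center, inner_neg_left, real_inner_smul_left,
      inner_vsub_vsub_eq_zero_of_mem_polar hX hY, mul_zero, neg_zero]

variable {E : Type*} [NormedAddCommGroup E] [InnerProductSpace ℝ E]

lemma smul_add_smul_add_smul_ne_of_affineIndependent {A B C : E}
    (h : AffineIndependent ℝ ![A, B, C]) {p q r : ℝ} (hpq : p ≠ 0 ∨ q ≠ 0)
    (hS : p + q + r ≠ 0) : (p + q + r)⁻¹ • (p • A + q • B + r • C) ≠ C := by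
  intro hC
  have hsum : ∑ i, ![p, q, -(p + q)] i • ![A, B, C] i = 0 := by
    rw [inv_smul_eq_iff₀ hS] at hC
    simp only [Fin.sum_univ_three, Matrix.cons_val_zero, Matrix.cons_val_one,
      Matrix.cons_val_two, Matrix.tail_cons, Matrix.head_cons]
    linear_combination (norm := module) hC
  have hw := h.eq_zero_of_sum_eq_zero (s := Finset.univ) (by simp [Fin.sum_univ_three]) hsum
  exact hpq.elim (· (by simpa using hw 0 (Finset.mem_univ _)))
    (· (by simpa using hw 1 (Finset.mem_univ _)))

lemma smul_sub_smul_mem_affineSpan_pair (x y : E) {p q : ℝ} (h : p ≠ q) :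
    (p - q)⁻¹ • (p • x - q • y) ∈ line[ℝ, x, y] := by
  have hpq : p - q ≠ 0 := sub_ne_zero.2 h
  have : (p - q)⁻¹ • (p • x - q • y) = AffineMap.lineMap x y (-q / (p - q)) := by
    rw [AffineMap.lineMap_apply, vsub_eq_sub, vadd_eq_add]
    match_scalars <;> field_simp
    ring
  exact this ▸ AffineMap.lineMap_mem_affineSpan_pair _ _ _

lemma abs_mul_dist_smul_sub_smul (x y : E) {p q : ℝ} (h : p ≠ q) :
    |p| * dist ((p - q)⁻¹ • (p • x - q • y)) x = |q| * dist ((p - q)⁻¹ • (p • x - q • y)) y := by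
  have hpq : p - q ≠ 0 := sub_ne_zero.2 h
  have hx : (p - q)⁻¹ • (p • x - q • y) - x = ((p - q)⁻¹ * q) • (x - y) := by
    match_scalars <;> field_simp
    ring
  have hy : (p - q)⁻¹ • (p • x - q • y) - y = ((p - q)⁻¹ * p) • (x - y) := by
    match_scalars <;> field_simp
    ring
  rw [dist_eq_norm, dist_eq_norm, hx, hy, norm_smul, norm_smul, Real.norm_eq_abs,
    Real.norm_eq_abs, abs_mul, abs_mul]
  ring

variable {A B C O : E} {R a b c : ℝ}

lemma inner_sub_sub_of_dist_eq (hA : dist O A = R) (hB : dist O B = R) :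
    ⟪A - O, B - O⟫ = R ^ 2 - dist A B ^ 2 / 2 := by
  have h := norm_sub_sq_real (A - O) (B - O)
  rw [sub_sub_sub_cancel_right, ← dist_eq_norm, ← dist_eq_norm, ← dist_eq_norm, dist_comm A O,
    dist_comm B O, hA, hB] at h
  linarith

lemma inner_sub_inv_smul_sub_smul_sub (hab : a ^ 2 ≠ b ^ 2) (X : E) :
    ⟪X - O, (a ^ 2 - b ^ 2)⁻¹ • (a ^ 2 • A - b ^ 2 • B) - O⟫ =
      (a ^ 2 - b ^ 2)⁻¹ * (a ^ 2 * ⟪X - O, A - O⟫ - b ^ 2 * ⟪X - O, B - O⟫) := by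
  have hD : (a ^ 2 - b ^ 2)⁻¹ • (a ^ 2 • A - b ^ 2 • B) - O =
      (a ^ 2 - b ^ 2)⁻¹ • (a ^ 2 • (A - O) - b ^ 2 • (B - O)) := by
    have : a ^ 2 - b ^ 2 ≠ 0 := sub_ne_zero.2 hab
    match_scalars <;> field_simp
    ring
  rw [hD, real_inner_smul_right, inner_sub_right, real_inner_smul_right, real_inner_smul_right]

lemma vertex_mem_polar (hA : dist O A = R) (hB : dist O B = R) (hC : dist O C = R)
    (ha : a = dist B C) (hb : b = dist C A) (hab : a ^ 2 ≠ b ^ 2) :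
    C ∈ polar O R ((a ^ 2 - b ^ 2)⁻¹ • (a ^ 2 • A - b ^ 2 • B)) := by
  have : a ^ 2 - b ^ 2 ≠ 0 := sub_ne_zero.2 hab
  rw [mem_polar, vsub_eq_sub, vsub_eq_sub, inner_sub_inv_smul_sub_smul_sub hab,
    inner_sub_sub_of_dist_eq hC hA, inner_sub_sub_of_dist_eq hC hB, ← hb, dist_comm, ← ha]
  field_simp
  ring

lemma lemoinePoint_mem_polar (hA : dist O A = R) (hB : dist O B = R) (hC : dist O C = R)
    (ha : a = dist B C) (hb : b = dist C A) (hc : c = dist A B) (hab : a ^ 2 ≠ b ^ 2)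
    (hS : a ^ 2 + b ^ 2 + c ^ 2 ≠ 0) :
    (a ^ 2 + b ^ 2 + c ^ 2)⁻¹ • (a ^ 2 • A + b ^ 2 • B + c ^ 2 • C) ∈
      polar O R ((a ^ 2 - b ^ 2)⁻¹ • (a ^ 2 • A - b ^ 2 • B)) := by
  have hL : (a ^ 2 + b ^ 2 + c ^ 2)⁻¹ • (a ^ 2 • A + b ^ 2 • B + c ^ 2 • C) - O =
      (a ^ 2 + b ^ 2 + c ^ 2)⁻¹ • (a ^ 2 • (A - O) + b ^ 2 • (B - O) + c ^ 2 • (C - O)) := by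
    match_scalars <;> field_simp
    ring
  have : a ^ 2 - b ^ 2 ≠ 0 := sub_ne_zero.2 hab
  rw [mem_polar, vsub_eq_sub, vsub_eq_sub, inner_sub_inv_smul_sub_smul_sub hab, hL]
  simp only [real_inner_smul_left, inner_add_left]
  rw [inner_sub_sub_of_dist_eq hA hA, inner_sub_sub_of_dist_eq hA hB,
    inner_sub_sub_of_dist_eq hB hA, inner_sub_sub_of_dist_eq hB hB,
    inner_sub_sub_of_dist_eq hC hA, inner_sub_sub_of_dist_eq hC hB, dist_self, dist_self,
    dist_comm B A, ← hc, ← hb, dist_comm C B, ← ha]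
  field_simp
  ring

end EuclideanGeometry

open scoped EuclideanSpace

theorem stmt14_general (A B C O L L₃ : EuclideanSpace ℝ (Fin 2)) (R a b c : ℝ)
    (hABC : AffineIndependent ℝ ![A, B, C])
    (hR : 0 < R) (hOA : dist O A = R) (hOB : dist O B = R) (hOC : dist O C = R)
    (ha : a = dist B C) (hb : b = dist C A) (hc : c = dist A B)
    (hab : a ≠ b)
    (hL : L = (a ^ 2 + b ^ 2 + c ^ 2)⁻¹ • (a ^ 2 • A + b ^ 2 • B + c ^ 2 • C))
    (hL₃ : L₃ = EuclideanGeometry.orthogonalProjection (affineSpan ℝ {C, L}) O) :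
    inversion O R L₃ = (a ^ 2 - b ^ 2)⁻¹ • (a ^ 2 • A - b ^ 2 • B) ∧
    inversion O R L₃ ∈ affineSpan ℝ ({A, B} : Set (EuclideanSpace ℝ (Fin 2))) ∧
    a ^ 2 * dist (inversion O R L₃) A = b ^ 2 * dist (inversion O R L₃) B ∧
    ⟪C - O, inversion O R L₃ - C⟫ = 0 := by
  have hab2 : a ^ 2 ≠ b ^ 2 := by
    rw [ha, hb] at hab ⊢
    exact (pow_left_inj₀ dist_nonneg dist_nonneg two_ne_zero).not.2 hab
  have hS : a ^ 2 + b ^ 2 + c ^ 2 ≠ 0 := by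
    intro h
    apply hab2
    nlinarith [sq_nonneg a, sq_nonneg b, sq_nonneg c]
  have hCL : C ≠ L := hL ▸ (smul_add_smul_add_smul_ne_of_affineIndependent hABC
    (by by_contra! h; exact hab2 (h.1.trans h.2.symm)) hS).symm
  have hCpolar := vertex_mem_polar hOA hOB hOC ha hb hab2
  have hL₃D : L₃ = inversion O R ((a ^ 2 - b ^ 2)⁻¹ • (a ^ 2 • A - b ^ 2 • B)) := by
    rw [hL₃, orthogonalProjection_affineSpan_pair_eq_inversion hR.ne' hCL hCpolar
      (hL ▸ lemoinePoint_mem_polar hOA hOB hOC ha hb hc hab2 hS)]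
  rw [hL₃D, inversion_inversion O hR.ne']
  refine ⟨rfl, smul_sub_smul_mem_affineSpan_pair A B hab2, ?_, ?_⟩
  · simpa only [abs_sq] using abs_mul_dist_smul_sub_smul A B hab2
  · simpa only [vsub_eq_sub] using inner_vsub_vsub_eq_zero_of_mem_polar_of_dist_eq hOC hCpolar

theorem stmt14 (A B C O L L₃ : EuclideanSpace ℝ (Fin 2)) (R a b c : ℝ)
    (hABC : AffineIndependent ℝ ![A, B, C])
    (hR : 0 < R) (hOA : dist O A = R) (hOB : dist O B = R) (hOC : dist O C = R)
    (ha : a = dist B C) (hb : b = dist C A) (hc : c = dist A B)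
    (hab : a ≠ b)
    (hL : L = (a ^ 2 + b ^ 2 + c ^ 2)⁻¹ • (a ^ 2 • A + b ^ 2 • B + c ^ 2 • C))
    (hL₃ : L₃ = EuclideanGeometry.orthogonalProjection (affineSpan ℝ {C, L}) O)
    (hL₃O : L₃ ≠ O) :
    inversion O R L₃ = (a ^ 2 - b ^ 2)⁻¹ • (a ^ 2 • A - b ^ 2 • B) ∧
    inversion O R L₃ ∈ affineSpan ℝ ({A, B} : Set (EuclideanSpace ℝ (Fin 2))) ∧
    a ^ 2 * dist (inversion O R L₃) A = b ^ 2 * dist (inversion O R L₃) B ∧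
    ⟪C - O, inversion O R L₃ - C⟫ = 0 :=
  stmt14_general A B C O L L₃ R a b c hABC hR hOA hOB hOC ha hb hc hab hL hL₃
end

section
/- Assume the triangle is scalene (a ≠ b, b ≠ c, c ≠ a). The centers of the three basic Apollonius circles of triangle ABC are P₁ = (b² • B − c² • C)/(b² − c²), P₂ = (c² • C − a² • A)/(c² − a²), P₃ = (a² • A − b² • B)/(a² − b²). Then P₁, P₂, P₃ are collinear, and the line through them is perpendicular to the line OL through the circumcenter and the Lemoine point: ⟪P₁ − P₂, L − O⟫ = 0 and ⟪P₂ − P₃, L − O⟫ = 0. -/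
open EuclideanGeometry
open scoped RealInnerProductSpace

set_option maxHeartbeats 1000000 in
noncomputable section

theorem stmt15 (A B C O L P₁ P₂ P₃ : EuclideanSpace ℝ (Fin 2)) (R a b c : ℝ)
    (hABC : AffineIndependent ℝ ![A, B, C])
    (hR : 0 < R) (hOA : dist O A = R) (hOB : dist O B = R) (hOC : dist O C = R)
    (ha : a = dist B C) (hb : b = dist C A) (hc : c = dist A B)
    (hscalene : a ≠ b ∧ b ≠ c ∧ c ≠ a)
    (hL : L = (a ^ 2 + b ^ 2 + c ^ 2)⁻¹ • (a ^ 2 • A + b ^ 2 • B + c ^ 2 • C))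
    (hP₁ : P₁ = (b ^ 2 - c ^ 2)⁻¹ • (b ^ 2 • B - c ^ 2 • C))
    (hP₂ : P₂ = (c ^ 2 - a ^ 2)⁻¹ • (c ^ 2 • C - a ^ 2 • A))
    (hP₃ : P₃ = (a ^ 2 - b ^ 2)⁻¹ • (a ^ 2 • A - b ^ 2 • B)) :
    Collinear ℝ ({P₁, P₂, P₃} : Set (EuclideanSpace ℝ (Fin 2))) ∧
    ⟪P₁ - P₂, L - O⟫ = 0 ∧ ⟪P₂ - P₃, L - O⟫ = 0 := by
  obtain ⟨hab, hbc, hca⟩ := hscalene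
  -- distinct vertices
  have hAB : A ≠ B := fun h =>
    absurd (hABC.injective (show ![A, B, C] 0 = ![A, B, C] 1 by simp [h])) (by decide)
  have hBC : B ≠ C := fun h =>
    absurd (hABC.injective (show ![A, B, C] 1 = ![A, B, C] 2 by simp [h])) (by decide)
  have hCA : C ≠ A := fun h =>
    absurd (hABC.injective (show ![A, B, C] 2 = ![A, B, C] 0 by simp [h])) (by decide)
  have hapos : 0 < a := by rw [ha]; exact dist_pos.mpr hBC
  have hbpos : 0 < b := by rw [hb]; exact dist_pos.mpr hCA
  have hcpos : 0 < c := by rw [hc]; exact dist_pos.mpr hAB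
  have hx : b ^ 2 - c ^ 2 ≠ 0 := by
    intro h; apply hbc; nlinarith
  have hy : c ^ 2 - a ^ 2 ≠ 0 := by
    intro h; apply hca.symm; nlinarith
  have hz : a ^ 2 - b ^ 2 ≠ 0 := by
    intro h; apply hab; nlinarith
  have hs : a ^ 2 + b ^ 2 + c ^ 2 ≠ 0 := by positivity
  set u : EuclideanSpace ℝ (Fin 2) := A - O with hu
  set v : EuclideanSpace ℝ (Fin 2) := B - O with hv
  set w : EuclideanSpace ℝ (Fin 2) := C - O with hw
  -- inner product values
  have huu : ⟪u, u⟫ = R ^ 2 := by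
    rw [real_inner_self_eq_norm_sq, hu, ← dist_eq_norm, dist_comm, hOA]
  have hvv : ⟪v, v⟫ = R ^ 2 := by
    rw [real_inner_self_eq_norm_sq, hv, ← dist_eq_norm, dist_comm, hOB]
  have hww : ⟪w, w⟫ = R ^ 2 := by
    rw [real_inner_self_eq_norm_sq, hw, ← dist_eq_norm, dist_comm, hOC]
  have hnuv : c ^ 2 = R ^ 2 - 2 * ⟪u, v⟫ + R ^ 2 := by
    have h1 : ‖u - v‖ ^ 2 = ‖u‖ ^ 2 - 2 * ⟪u, v⟫ + ‖v‖ ^ 2 := norm_sub_sq_real u v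
    have h2 : u - v = A - B := by rw [hu, hv]; abel
    have h3 : ‖u‖ = R := by rw [hu, ← dist_eq_norm, dist_comm, hOA]
    have h4 : ‖v‖ = R := by rw [hv, ← dist_eq_norm, dist_comm, hOB]
    rw [h2, h3, h4, ← dist_eq_norm, ← hc] at h1
    linarith
  have huv : ⟪u, v⟫ = R ^ 2 - c ^ 2 / 2 := by linarith
  have hnuw : b ^ 2 = R ^ 2 - 2 * ⟪u, w⟫ + R ^ 2 := by
    have h1 : ‖u - w‖ ^ 2 = ‖u‖ ^ 2 - 2 * ⟪u, w⟫ + ‖w‖ ^ 2 := norm_sub_sq_real u w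
    have h2 : u - w = A - C := by rw [hu, hw]; abel
    have h3 : ‖u‖ = R := by rw [hu, ← dist_eq_norm, dist_comm, hOA]
    have h4 : ‖w‖ = R := by rw [hw, ← dist_eq_norm, dist_comm, hOC]
    rw [h2, h3, h4, ← dist_eq_norm, dist_comm, ← hb] at h1
    linarith
  have huw : ⟪u, w⟫ = R ^ 2 - b ^ 2 / 2 := by linarith
  have hnvw : a ^ 2 = R ^ 2 - 2 * ⟪v, w⟫ + R ^ 2 := by
    have h1 : ‖v - w‖ ^ 2 = ‖v‖ ^ 2 - 2 * ⟪v, w⟫ + ‖w‖ ^ 2 := norm_sub_sq_real v w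
    have h2 : v - w = B - C := by rw [hv, hw]; abel
    have h3 : ‖v‖ = R := by rw [hv, ← dist_eq_norm, dist_comm, hOB]
    have h4 : ‖w‖ = R := by rw [hw, ← dist_eq_norm, dist_comm, hOC]
    rw [h2, h3, h4, ← dist_eq_norm, ← ha] at h1
    linarith
  have hvw : ⟪v, w⟫ = R ^ 2 - a ^ 2 / 2 := by linarith
  have hvu : ⟪v, u⟫ = R ^ 2 - c ^ 2 / 2 := by rw [real_inner_comm]; exact huv
  have hwu : ⟪w, u⟫ = R ^ 2 - b ^ 2 / 2 := by rw [real_inner_comm]; exact huw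
  have hwv : ⟪w, v⟫ = R ^ 2 - a ^ 2 / 2 := by rw [real_inner_comm]; exact hvw
  -- scaled forms of the point definitions
  have e1 : (b ^ 2 - c ^ 2) • (P₁ - O) = b ^ 2 • v - c ^ 2 • w := by
    rw [hP₁, hv, hw, smul_sub, smul_smul, mul_inv_cancel₀ hx, one_smul]
    module
  have e2 : (c ^ 2 - a ^ 2) • (P₂ - O) = c ^ 2 • w - a ^ 2 • u := by
    rw [hP₂, hw, hu, smul_sub, smul_smul, mul_inv_cancel₀ hy, one_smul]
    module
  have e3 : (a ^ 2 - b ^ 2) • (P₃ - O) = a ^ 2 • u - b ^ 2 • v := by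
    rw [hP₃, hu, hv, smul_sub, smul_smul, mul_inv_cancel₀ hz, one_smul]
    module
  have eL : (a ^ 2 + b ^ 2 + c ^ 2) • (L - O) = a ^ 2 • u + b ^ 2 • v + c ^ 2 • w := by
    rw [hL, hu, hv, hw, smul_sub, smul_smul, mul_inv_cancel₀ hs, one_smul]
    module
  -- key inner product identities
  have key₁ : ⟪b ^ 2 • v - c ^ 2 • w, a ^ 2 • u + b ^ 2 • v + c ^ 2 • w⟫
      = R ^ 2 * (b ^ 2 - c ^ 2) * (a ^ 2 + b ^ 2 + c ^ 2) := by
    simp only [inner_sub_left, inner_add_right, real_inner_smul_left, real_inner_smul_right,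
      huu, hvv, hww, huv, huw, hvw, hvu, hwu, hwv]
    ring
  have key₂ : ⟪c ^ 2 • w - a ^ 2 • u, a ^ 2 • u + b ^ 2 • v + c ^ 2 • w⟫
      = R ^ 2 * (c ^ 2 - a ^ 2) * (a ^ 2 + b ^ 2 + c ^ 2) := by
    simp only [inner_sub_left, inner_add_right, real_inner_smul_left, real_inner_smul_right,
      huu, hvv, hww, huv, huw, hvw, hvu, hwu, hwv]
    ring
  have key₃ : ⟪a ^ 2 • u - b ^ 2 • v, a ^ 2 • u + b ^ 2 • v + c ^ 2 • w⟫
      = R ^ 2 * (a ^ 2 - b ^ 2) * (a ^ 2 + b ^ 2 + c ^ 2) := by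
    simp only [inner_sub_left, inner_add_right, real_inner_smul_left, real_inner_smul_right,
      huu, hvv, hww, huv, huw, hvw, hvu, hwu, hwv]
    ring
  -- perpendicularity
  have perp₁ : ⟪P₁ - P₂, L - O⟫ = 0 := by
    have h12 : (b ^ 2 - c ^ 2) • ((c ^ 2 - a ^ 2) • (P₁ - P₂))
        = (c ^ 2 - a ^ 2) • (b ^ 2 • v - c ^ 2 • w) - (b ^ 2 - c ^ 2) • (c ^ 2 • w - a ^ 2 • u) := by
      rw [← e1, ← e2]; module
    have hbig : ⟪(b ^ 2 - c ^ 2) • ((c ^ 2 - a ^ 2) • (P₁ - P₂)),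
        (a ^ 2 + b ^ 2 + c ^ 2) • (L - O)⟫ = 0 := by
      rw [h12, eL, inner_sub_left, real_inner_smul_left, real_inner_smul_left, key₁, key₂]
      ring
    rw [real_inner_smul_left, real_inner_smul_left, real_inner_smul_right] at hbig
    have h1 := (mul_eq_zero.mp hbig).resolve_left hx
    have h2 := (mul_eq_zero.mp h1).resolve_left hy
    exact (mul_eq_zero.mp h2).resolve_left hs
  have perp₂ : ⟪P₂ - P₃, L - O⟫ = 0 := by
    have h23 : (c ^ 2 - a ^ 2) • ((a ^ 2 - b ^ 2) • (P₂ - P₃))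
        = (a ^ 2 - b ^ 2) • (c ^ 2 • w - a ^ 2 • u) - (c ^ 2 - a ^ 2) • (a ^ 2 • u - b ^ 2 • v) := by
      rw [← e2, ← e3]; module
    have hbig : ⟪(c ^ 2 - a ^ 2) • ((a ^ 2 - b ^ 2) • (P₂ - P₃)),
        (a ^ 2 + b ^ 2 + c ^ 2) • (L - O)⟫ = 0 := by
      rw [h23, eL, inner_sub_left, real_inner_smul_left, real_inner_smul_left, key₂, key₃]
      ring
    rw [real_inner_smul_left, real_inner_smul_left, real_inner_smul_right] at hbig
    have h1 := (mul_eq_zero.mp hbig).resolve_left hy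
    have h2 := (mul_eq_zero.mp h1).resolve_left hz
    exact (mul_eq_zero.mp h2).resolve_left hs
  refine ⟨?_, perp₁, perp₂⟩
  -- collinearity
  have hrel : (a ^ 2 - b ^ 2) • (P₃ - P₂) = (-(b ^ 2 - c ^ 2)) • (P₁ - P₂) := by
    have hsum : (b ^ 2 - c ^ 2) • (P₁ - O) + (c ^ 2 - a ^ 2) • (P₂ - O)
        + (a ^ 2 - b ^ 2) • (P₃ - O) = 0 := by
      rw [e1, e2, e3]; module
    have hz' : (a ^ 2 - b ^ 2) • (P₃ - O)
        = 0 - (b ^ 2 - c ^ 2) • (P₁ - O) - (c ^ 2 - a ^ 2) • (P₂ - O) := by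
      rw [← hsum]; abel
    calc (a ^ 2 - b ^ 2) • (P₃ - P₂)
        = (a ^ 2 - b ^ 2) • (P₃ - O) - (a ^ 2 - b ^ 2) • (P₂ - O) := by module
      _ = (0 - (b ^ 2 - c ^ 2) • (P₁ - O) - (c ^ 2 - a ^ 2) • (P₂ - O))
          - (a ^ 2 - b ^ 2) • (P₂ - O) := by rw [hz']
      _ = (-(b ^ 2 - c ^ 2)) • (P₁ - P₂) := by module
  have hP₃eq : P₃ - P₂ = ((a ^ 2 - b ^ 2)⁻¹ * (-(b ^ 2 - c ^ 2))) • (P₁ - P₂) := by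
    have h' := congrArg (fun x => (a ^ 2 - b ^ 2)⁻¹ • x) hrel
    simpa [smul_smul, inv_mul_cancel₀ hz] using h'
  rw [collinear_iff_of_mem (Set.mem_insert P₁ _)]
  refine ⟨P₁ - P₂, ?_⟩
  intro p hp
  rcases hp with h | h | h
  · exact ⟨0, by simp [h]⟩
  · refine ⟨-1, ?_⟩
    rw [h]
    show P₂ = (-1 : ℝ) • (P₁ - P₂) + P₁
    module
  · simp only [Set.mem_singleton_iff] at h
    refine ⟨(a ^ 2 - b ^ 2)⁻¹ * (-(b ^ 2 - c ^ 2)) - 1, ?_⟩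
    rw [h]
    show P₃ = ((a ^ 2 - b ^ 2)⁻¹ * (-(b ^ 2 - c ^ 2)) - 1) • (P₁ - P₂) + P₁
    have h3 : P₃ = ((a ^ 2 - b ^ 2)⁻¹ * (-(b ^ 2 - c ^ 2))) • (P₁ - P₂) + P₂ := by
      rw [← hP₃eq]; abel
    rw [h3]; module
end
end

section
/- Assume the triangle is not equilateral (so D := a⁴ + b⁴ + c⁴ − a²b² − b²c² − c²a² > 0). Let Ω₁ and Ω₂ be first and second Brocard points with Ω₁ ≠ O and Ω₂ ≠ O. Then the exterior Brocard points are given in barycentric form by: inversion O R Ω₁ = (a²(a²−b²) • A + b²(b²−c²) • B + c²(c²−a²) • C)/D and inversion O R Ω₂ = (a²(a²−c²) • A + b²(b²−a²) • B + c²(c²−b²) • C)/D (affine combinations of A, B, C with the indicated weights). -/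
open EuclideanGeometry
open scoped EuclideanGeometry

noncomputable section

open Real Module
open scoped RealInnerProductSpace

/-!
Work in barycentric coordinates for `A, B, C`, with squared sides `p = a²`, `q = b²`, `r = c²`.
Two angles are equal iff their cotangents are, and the cotangent of an angle of a triangle is its
law-of-cosines expression divided by `√heronSq`. If `P` has weights `(α, β, γ)`, the triangles
`PAB`, `PBC`, `PCA` have areas proportional to `γ, α, β`, and the Leibniz formula
`|P - X|² = Σ wᵢ |Xᵢ - X|² - Σ wᵢ wⱼ dᵢⱼ²` expresses their sides through the weights, so the two
Brocard angle conditions become two quadratic relations between the weights; their only positive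
solution is `(pr : pq : qr)`. The same formula applied to the circumcenter gives its weights
`(p(q+r-p) : q(r+p-q) : r(p+q-r))` and `R² · heronSq p q r = pqr`, hence
`(R / |P - O|)² = S / D` with `S = pq + qr + rp`, `D = p² + q² + r² - pq - qr - rp`, and the
weights of `O + (S / D) • (P - O)` reduce to `p(p - q) / D, …`. The second Brocard point of
`A, B, C` is the first one of `A, C, B`.
-/

/-- Sixteen times the squared area of a triangle whose squared side lengths are `x`, `y`, `z`
(Heron's formula). -/
def heronSq (x y z : ℝ) : ℝ := 2 * (x * y + y * z + z * x) - (x ^ 2 + y ^ 2 + z ^ 2)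

section Angle

variable {V P : Type*} [NormedAddCommGroup V] [InnerProductSpace ℝ V] [MetricSpace P]
  [NormedAddTorsor V P]

theorem two_mul_cos_angle_mul_dist_mul_dist (A B C : P) :
    2 * cos (∠ B A C) * dist B A * dist C A = dist B A ^ 2 + dist C A ^ 2 - dist B C ^ 2 := by
  linear_combination dist_sq_eq_dist_sq_add_dist_sq_sub_two_mul_dist_mul_dist_mul_cos_angle B A C

theorem two_mul_sin_angle_mul_dist_mul_dist (A B C : P) :
    2 * sin (∠ B A C) * dist B A * dist C A =
      √(heronSq (dist B A ^ 2) (dist C A ^ 2) (dist B C ^ 2)) := by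
  have hsin := InnerProductGeometry.sin_angle_mul_norm_mul_norm (B -ᵥ A) (C -ᵥ A)
  have hinner := InnerProductGeometry.cos_angle_mul_norm_mul_norm (B -ᵥ A) (C -ᵥ A)
  have hcos := two_mul_cos_angle_mul_dist_mul_dist A B C
  rw [← dist_eq_norm_vsub, ← dist_eq_norm_vsub] at hsin hinner
  rw [real_inner_self_eq_norm_sq, real_inner_self_eq_norm_sq, ← dist_eq_norm_vsub,
    ← dist_eq_norm_vsub] at hsin
  rw [EuclideanGeometry.angle] at hcos
  have hG : heronSq (dist B A ^ 2) (dist C A ^ 2) (dist B C ^ 2) =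
      2 ^ 2 * (dist B A ^ 2 * dist C A ^ 2 - ⟪B -ᵥ A, C -ᵥ A⟫ * ⟪B -ᵥ A, C -ᵥ A⟫) := by
    rw [← hinner, heronSq]
    linear_combination (2 * cos (InnerProductGeometry.angle (B -ᵥ A) (C -ᵥ A)) * dist B A *
      dist C A + dist B A ^ 2 + dist C A ^ 2 - dist B C ^ 2) * hcos
  rw [hG, sqrt_mul (by positivity), ← hsin, sqrt_sq zero_le_two, EuclideanGeometry.angle]
  ring

theorem sqrt_heronSq_mul_eq_of_angle_eq {A B C A' B' C' : P} (h : ∠ B A C = ∠ B' A' C') :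
    √(heronSq (dist B' A' ^ 2) (dist C' A' ^ 2) (dist B' C' ^ 2)) *
        (dist B A ^ 2 + dist C A ^ 2 - dist B C ^ 2) =
      √(heronSq (dist B A ^ 2) (dist C A ^ 2) (dist B C ^ 2)) *
        (dist B' A' ^ 2 + dist C' A' ^ 2 - dist B' C' ^ 2) := by
  rw [← two_mul_sin_angle_mul_dist_mul_dist, ← two_mul_sin_angle_mul_dist_mul_dist,
    ← two_mul_cos_angle_mul_dist_mul_dist, ← two_mul_cos_angle_mul_dist_mul_dist, h]
  ring

theorem heronSq_pos_of_not_collinear {A B C : P} (h : ¬ Collinear ℝ {A, B, C}) :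
    0 < heronSq (dist B C ^ 2) (dist C A ^ 2) (dist A B ^ 2) := by
  have h' : ¬ Collinear ℝ {B, A, C} := by rwa [Set.insert_comm]
  have hpos : 0 < 2 * sin (∠ B A C) * dist B A * dist C A := by
    have := sin_pos_of_not_collinear h'
    have := dist_pos.mpr (ne₁₂_of_not_collinear h')
    have := dist_pos.mpr (ne₂₃_of_not_collinear h').symm
    positivity
  rw [two_mul_sin_angle_mul_dist_mul_dist, dist_comm B A] at hpos
  have := sqrt_pos.mp hpos
  unfold heronSq at this ⊢
  linarith

end Angle

section Weights

variable {V : Type*} [NormedAddCommGroup V] [InnerProductSpace ℝ V]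

theorem dist_smul_add_smul_add_smul_sq {α β γ : ℝ} (h : α + β + γ = 1) (A B C X : V) :
    dist (α • A + β • B + γ • C) X ^ 2 =
      α * dist A X ^ 2 + β * dist B X ^ 2 + γ * dist C X ^ 2 -
        (β * γ * dist B C ^ 2 + γ * α * dist C A ^ 2 + α * β * dist A B ^ 2) := by
  have hX : α • A + β • B + γ • C - X = α • (A - X) + β • (B - X) + γ • (C - X) := by
    linear_combination (norm := module) h • X
  have hBC : B - C = (B - X) - (C - X) := by abel
  have hCA : C - A = (C - X) - (A - X) := by abel
  have hAB : A - B = (A - X) - (B - X) := by abel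
  rw [dist_eq_norm, dist_eq_norm, dist_eq_norm, dist_eq_norm, dist_eq_norm, dist_eq_norm,
    dist_eq_norm, hX, hBC, hCA, hAB]
  generalize A - X = a, B - X = b, C - X = c
  simp only [← real_inner_self_eq_norm_sq, inner_add_left, inner_add_right, inner_sub_left,
    inner_sub_right, real_inner_smul_left, real_inner_smul_right]
  rw [real_inner_comm a b, real_inner_comm a c, real_inner_comm b c]
  linear_combination (⟪a, a⟫ * α + ⟪b, b⟫ * β + ⟪c, c⟫ * γ) * h

theorem brocard_relation_of_angle_eq {A B C P : V} {α β γ : ℝ} (hABC : ¬ Collinear ℝ {A, B, C})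
    (hα : 0 ≤ α) (hγ : 0 ≤ γ) (h : α + β + γ = 1) (hP : P = α • A + β • B + γ • C)
    (hangle : ∠ P A B = ∠ P B C) :
    α * β * dist A B ^ 2 = γ ^ 2 * dist B C ^ 2 + α * γ * (dist B C ^ 2 - dist C A ^ 2) := by
  have hPA := hP ▸ dist_smul_add_smul_add_smul_sq h A B C A
  have hPB := hP ▸ dist_smul_add_smul_add_smul_sq h A B C B
  have hPC := hP ▸ dist_smul_add_smul_add_smul_sq h A B C C
  rw [dist_comm B A] at hPA
  rw [dist_comm C B] at hPB
  rw [dist_comm A C] at hPC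
  simp only [dist_self] at hPA hPB hPC
  have hcot := sqrt_heronSq_mul_eq_of_angle_eq hangle
  rw [dist_comm B A, dist_comm C B] at hcot
  have hH := heronSq_pos_of_not_collinear hABC
  set H := heronSq (dist B C ^ 2) (dist C A ^ 2) (dist A B ^ 2)
  have hα' : α = 1 - β - γ := by linear_combination h
  have hPAB : heronSq (dist P A ^ 2) (dist A B ^ 2) (dist P B ^ 2) = (γ * √H) ^ 2 := by
    rw [mul_pow, sq_sqrt hH.le, hPA, hPB, hα']; unfold H heronSq; ring
  have hPBC : heronSq (dist P B ^ 2) (dist B C ^ 2) (dist P C ^ 2) = (α * √H) ^ 2 := by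
    rw [mul_pow, sq_sqrt hH.le, hPB, hPC, hα']; unfold H heronSq; ring
  rw [hPAB, hPBC, sqrt_sq (by positivity), sqrt_sq (by positivity), hPA, hPB, hPC] at hcot
  have hcot' :
      √H * (α * (2 * β * dist A B ^ 2 + γ * (dist C A ^ 2 + dist A B ^ 2 - dist B C ^ 2))) =
        √H * (γ * (α * (dist A B ^ 2 + dist B C ^ 2 - dist C A ^ 2) + 2 * γ * dist B C ^ 2)) := by
    rw [hα'] at hcot ⊢
    linear_combination hcot
  linear_combination (mul_left_cancel₀ (sqrt_pos.mpr hH).ne' hcot') / 2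

theorem brocard_weights_of_relations {p q r α β γ : ℝ} (hr : 0 < r) (hH : 0 < heronSq p q r)
    (hα : 0 < α) (hγ : 0 < γ) (h : α + β + γ = 1)
    (h₁ : α * β * r = γ ^ 2 * p + α * γ * (p - q))
    (h₂ : β * γ * p = α ^ 2 * q + β * α * (q - r)) :
    α * (p * q + q * r + r * p) = p * r ∧ β * (p * q + q * r + r * p) = p * q ∧
      γ * (p * q + q * r + r * p) = q * r := by
  have hF : 0 < r * α ^ 2 + (p + r - q) * α * γ + p * γ ^ 2 := by
    have h4rF : 4 * r * (r * α ^ 2 + (p + r - q) * α * γ + p * γ ^ 2) =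
        (2 * r * α + (p + r - q) * γ) ^ 2 + heronSq p q r * γ ^ 2 := by
      unfold heronSq; ring
    have : 0 < 4 * r * (r * α ^ 2 + (p + r - q) * α * γ + p * γ ^ 2) := by
      rw [h4rF]; positivity
    exact pos_of_mul_pos_right this (by positivity)
  have hγα : p * γ = q * α := by
    have hfactor : (p * γ - q * α) * (r * α ^ 2 + (p + r - q) * α * γ + p * γ ^ 2) = 0 := by
      linear_combination (α * r) * h₂ - (γ * p - α * (q - r)) * h₁
    linear_combination (mul_eq_zero.mp hfactor).resolve_right hF.ne'
  have hβγ : r * β = p * γ := by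
    refine mul_left_cancel₀ hα.ne' ?_
    linear_combination h₁ + γ * hγα
  refine ⟨?_, ?_, ?_⟩
  · linear_combination p * r * h - p * hβγ - (p + r) * hγα
  · linear_combination p * q * h + (p + q) * hβγ + p * hγα
  · linear_combination q * r * h + r * hγα - q * hβγ

theorem brocardPoint_weights {A B C P : V} {α β γ p q r : ℝ} (hABC : ¬ Collinear ℝ {A, B, C})
    (hp : dist B C ^ 2 = p) (hq : dist C A ^ 2 = q) (hr : dist A B ^ 2 = r)
    (hα : 0 < α) (hβ : 0 < β) (hγ : 0 < γ) (h : α + β + γ = 1)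
    (hP : P = α • A + β • B + γ • C) (h₁ : ∠ P A B = ∠ P B C) (h₂ : ∠ P B C = ∠ P C A) :
    α * (p * q + q * r + r * p) = p * r ∧ β * (p * q + q * r + r * p) = p * q ∧
      γ * (p * q + q * r + r * p) = q * r := by
  have hBCA : ¬ Collinear ℝ {B, C, A} := by rwa [Set.pair_comm, Set.insert_comm]
  have hr0 : 0 < r := hr ▸ pow_pos (dist_pos.mpr (ne₁₂_of_not_collinear hABC)) 2
  have hH := heronSq_pos_of_not_collinear hABC
  have h₁' := brocard_relation_of_angle_eq hABC hα.le hγ.le h hP h₁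
  have h₂' := brocard_relation_of_angle_eq (α := β) (β := γ) (γ := α) hBCA hβ.le hα.le
    (by linear_combination h) (by rw [hP]; abel) h₂
  subst hp hq hr
  exact brocard_weights_of_relations hr0 hH hα hγ h h₁' h₂'

theorem circumcenter_weights {A B C O : V} {x y z R p q r : ℝ} (hp : dist B C ^ 2 = p)
    (hq : dist C A ^ 2 = q) (hr : dist A B ^ 2 = r) (h : x + y + z = 1)
    (hO : O = x • A + y • B + z • C) (hA : dist O A = R) (hB : dist O B = R)
    (hC : dist O C = R) :
    x * heronSq p q r = p * (q + r - p) ∧ y * heronSq p q r = q * (r + p - q) ∧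
      z * heronSq p q r = r * (p + q - r) ∧ R ^ 2 * heronSq p q r = p * q * r := by
  have RA := hO ▸ dist_smul_add_smul_add_smul_sq h A B C A
  have RB := hO ▸ dist_smul_add_smul_add_smul_sq h A B C B
  have RC := hO ▸ dist_smul_add_smul_add_smul_sq h A B C C
  rw [dist_comm B A] at RA
  rw [dist_comm C B] at RB
  rw [dist_comm A C] at RC
  simp only [dist_self, hA, hB, hC, hp, hq, hr] at RA RB RC
  -- Averaging the three equations with the weights `x, y, z` shows `R² = yzp + zxq + xyr`.
  have hRπ : R ^ 2 = y * z * p + z * x * q + x * y * r := by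
    linear_combination x * RA + y * RB + z * RC - (R ^ 2 + y * z * p + z * x * q + x * y * r) * h
  have L₁ : 2 * R ^ 2 = y * r + z * q := by linear_combination RA + hRπ
  have L₂ : 2 * R ^ 2 = x * r + z * p := by linear_combination RB + hRπ
  have L₃ : 2 * R ^ 2 = x * q + y * p := by linear_combination RC + hRπ
  have hx : x * heronSq p q r = p * (q + r - p) := by
    unfold heronSq
    linear_combination 2 * p * L₁ - (p + q - r) * L₂ - (p - q + r) * L₃ + p * (q + r - p) * h
  have hz : z * heronSq p q r = r * (p + q - r) := by
    unfold heronSq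
    linear_combination 2 * r * L₃ - (r + p - q) * L₁ - (r - p + q) * L₂ + r * (p + q - r) * h
  refine ⟨hx, ?_, hz, ?_⟩
  · unfold heronSq
    linear_combination 2 * q * L₂ - (q + r - p) * L₃ - (q - r + p) * L₁ + q * (r + p - q) * h
  · linear_combination heronSq p q r / 2 * L₂ + r / 2 * hx + p / 2 * hz

theorem inversion_brocardPoint_eq {A B C O P : V} {α β γ x y z R p q r : ℝ}
    (hABC : ¬ Collinear ℝ {A, B, C})
    (hp : dist B C ^ 2 = p) (hq : dist C A ^ 2 = q) (hr : dist A B ^ 2 = r)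
    (hα : 0 < α) (hβ : 0 < β) (hγ : 0 < γ) (hαβγ : α + β + γ = 1)
    (hP : P = α • A + β • B + γ • C) (h₁ : ∠ P A B = ∠ P B C) (h₂ : ∠ P B C = ∠ P C A)
    (hxyz : x + y + z = 1) (hO : O = x • A + y • B + z • C)
    (hOA : dist O A = R) (hOB : dist O B = R) (hOC : dist O C = R) (hPO : P ≠ O) :
    inversion O R P = (p ^ 2 + q ^ 2 + r ^ 2 - p * q - q * r - r * p)⁻¹ •
      ((p * (p - q)) • A + (q * (q - r)) • B + (r * (r - p)) • C) := by
  have hH : 0 < heronSq p q r := hp ▸ hq ▸ hr ▸ heronSq_pos_of_not_collinear hABC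
  have hr0 : 0 < r := hr ▸ pow_pos (dist_pos.mpr (ne₁₂_of_not_collinear hABC)) 2
  have hp0 : 0 < p := hp ▸ pow_pos (dist_pos.mpr (ne₂₃_of_not_collinear hABC)) 2
  have hq0 : 0 < q := hq ▸ pow_pos (dist_pos.mpr (ne₁₃_of_not_collinear hABC).symm) 2
  obtain ⟨hα', hβ', hγ'⟩ := brocardPoint_weights hABC hp hq hr hα hβ hγ hαβγ hP h₁ h₂
  obtain ⟨hx, hy, hz, hR⟩ := circumcenter_weights hp hq hr hxyz hO hOA hOB hOC
  set S := p * q + q * r + r * p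
  set D := p ^ 2 + q ^ 2 + r ^ 2 - p * q - q * r - r * p
  set H := heronSq p q r
  have hS : 0 < S := by positivity
  have hDSH : D = S - H := by unfold D S H heronSq; ring
  have hPO2 : dist P O ^ 2 = R ^ 2 - (β * γ * p + γ * α * q + α * β * r) := by
    rw [hP, dist_smul_add_smul_add_smul_sq hαβγ, dist_comm A O, dist_comm B O, dist_comm C O, hOA,
      hOB, hOC, hp, hq, hr]
    linear_combination R ^ 2 * hαβγ
  have hπ : (β * γ * p + γ * α * q + α * β * r) * S = p * q * r := by
    refine mul_right_cancel₀ hS.ne' ?_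
    linear_combination p * γ * S * hβ' + p * (p * q) * hγ' + q * α * S * hγ' + q * (q * r) * hα' +
      r * β * S * hα' + r * (p * r) * hβ'
  have hdist : dist P O ^ 2 * (H * S) = p * q * r * D := by
    rw [hDSH]
    linear_combination (H * S) * hPO2 + S * hR - H * hπ
  have hD : D ≠ 0 := by
    intro hD0
    rw [hD0, mul_zero, mul_eq_zero, or_iff_left (mul_pos hH hS).ne'] at hdist
    exact hPO (dist_eq_zero.mp (pow_eq_zero_iff two_ne_zero |>.mp hdist))
  have ht : (R / dist P O) ^ 2 = S / D := by
    rw [div_pow, div_eq_div_iff (by simpa using hPO) hD]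
    refine mul_right_cancel₀ hH.ne' ?_
    linear_combination D * hR - hdist
  rw [inversion, ht, vsub_eq_sub, vadd_eq_add, hP, hO]
  match_scalars <;> field_simp <;> rw [hDSH]
  · linear_combination hα' - hx
  · linear_combination hβ' - hy
  · linear_combination hγ' - hz

end Weights

theorem exists_weights_of_affineIndependent {V : Type*} [NormedAddCommGroup V] [NormedSpace ℝ V]
    (hV : finrank ℝ V = 2) {A B C : V} (hABC : AffineIndependent ℝ ![A, B, C]) (X : V) :
    ∃ α β γ : ℝ, α + β + γ = 1 ∧ X = α • A + β • B + γ • C ∧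
      (X ∈ interior (convexHull ℝ {A, B, C}) ↔ 0 < α ∧ 0 < β ∧ 0 < γ) := by
  have : FiniteDimensional ℝ V := Module.finite_of_finrank_eq_succ hV
  let b : AffineBasis (Fin 3) ℝ V :=
    ⟨![A, B, C], hABC, by rw [hABC.affineSpan_eq_top_iff_card_eq_finrank_add_one]; simp [hV]⟩
  have hb : ⇑b = ![A, B, C] := rfl
  have hrange : Set.range b = {A, B, C} := by
    rw [hb, Matrix.range_cons, Matrix.range_cons, Matrix.range_cons_empty]; rfl
  have hsum := b.sum_coord_apply_eq_one X
  have hX := b.linear_combination_coord_eq_self X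
  rw [Fin.sum_univ_three] at hsum hX
  refine ⟨b.coord 0 X, b.coord 1 X, b.coord 2 X, hsum, ?_, ?_⟩
  · simpa [hb] using hX.symm
  · rw [← hrange, b.interior_convexHull]
    simp [Fin.forall_fin_succ]

theorem stmt17_general (A B C O Ω₁ Ω₂ : EuclideanSpace ℝ (Fin 2)) (R a b c : ℝ)
    (hABC : AffineIndependent ℝ ![A, B, C])
    (hOA : dist O A = R) (hOB : dist O B = R) (hOC : dist O C = R)
    (ha : a = dist B C) (hb : b = dist C A) (hc : c = dist A B)
    (hΩ₁ : Ω₁ ∈ interior (convexHull ℝ ({A, B, C} : Set (EuclideanSpace ℝ (Fin 2)))))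
    (hΩ₁₁ : ∠ Ω₁ A B = ∠ Ω₁ B C) (hΩ₁₂ : ∠ Ω₁ B C = ∠ Ω₁ C A)
    (hΩ₂ : Ω₂ ∈ interior (convexHull ℝ ({A, B, C} : Set (EuclideanSpace ℝ (Fin 2)))))
    (hΩ₂₁ : ∠ Ω₂ A C = ∠ Ω₂ C B) (hΩ₂₂ : ∠ Ω₂ C B = ∠ Ω₂ B A)
    (hΩ₁O : Ω₁ ≠ O) (hΩ₂O : Ω₂ ≠ O) :
    inversion O R Ω₁ =
      (a ^ 4 + b ^ 4 + c ^ 4 - a ^ 2 * b ^ 2 - b ^ 2 * c ^ 2 - c ^ 2 * a ^ 2)⁻¹ •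
        ((a ^ 2 * (a ^ 2 - b ^ 2)) • A + (b ^ 2 * (b ^ 2 - c ^ 2)) • B +
          (c ^ 2 * (c ^ 2 - a ^ 2)) • C) ∧
    inversion O R Ω₂ =
      (a ^ 4 + b ^ 4 + c ^ 4 - a ^ 2 * b ^ 2 - b ^ 2 * c ^ 2 - c ^ 2 * a ^ 2)⁻¹ •
        ((a ^ 2 * (a ^ 2 - c ^ 2)) • A + (b ^ 2 * (b ^ 2 - a ^ 2)) • B +
          (c ^ 2 * (c ^ 2 - b ^ 2)) • C) := by
  have hV : finrank ℝ (EuclideanSpace ℝ (Fin 2)) = 2 := finrank_euclideanSpace_fin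
  have hABC' : ¬ Collinear ℝ {A, B, C} := affineIndependent_iff_not_collinear_set.mp hABC
  have hACB : ¬ Collinear ℝ {A, C, B} := by rwa [Set.pair_comm]
  obtain ⟨x, y, z, hxyz, hO, -⟩ := exists_weights_of_affineIndependent hV hABC O
  obtain ⟨α₁, β₁, γ₁, hs₁, hP₁, hpos₁⟩ := exists_weights_of_affineIndependent hV hABC Ω₁
  obtain ⟨α₂, β₂, γ₂, hs₂, hP₂, hpos₂⟩ := exists_weights_of_affineIndependent hV hABC Ω₂
  obtain ⟨hα₁, hβ₁, hγ₁⟩ := hpos₁.mp hΩ₁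
  obtain ⟨hα₂, hβ₂, hγ₂⟩ := hpos₂.mp hΩ₂
  constructor
  · rw [inversion_brocardPoint_eq (p := a ^ 2) (q := b ^ 2) (r := c ^ 2) hABC' (by rw [ha])
      (by rw [hb]) (by rw [hc]) hα₁ hβ₁ hγ₁ hs₁ hP₁ hΩ₁₁ hΩ₁₂ hxyz hO hOA hOB hOC hΩ₁O]
    congr 1
    ring
  · have hP₂' : Ω₂ = α₂ • A + γ₂ • C + β₂ • B := by rw [hP₂]; abel
    have hO' : O = x • A + z • C + y • B := by rw [hO]; abel
    rw [inversion_brocardPoint_eq (p := a ^ 2) (q := c ^ 2) (r := b ^ 2) hACB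
      (by rw [ha, dist_comm]) (by rw [hc, dist_comm]) (by rw [hb, dist_comm]) hα₂ hγ₂ hβ₂
      (by linear_combination hs₂) hP₂' hΩ₂₁ hΩ₂₂ (by linear_combination hxyz) hO' hOA hOC hOB hΩ₂O]
    congr 1
    · ring
    · abel

theorem stmt17 (A B C O Ω₁ Ω₂ : EuclideanSpace ℝ (Fin 2)) (R a b c : ℝ)
    (hABC : AffineIndependent ℝ ![A, B, C])
    (hR : 0 < R) (hOA : dist O A = R) (hOB : dist O B = R) (hOC : dist O C = R)
    (ha : a = dist B C) (hb : b = dist C A) (hc : c = dist A B)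
    (hne : ¬ (a = b ∧ b = c))
    (hΩ₁ : Ω₁ ∈ interior (convexHull ℝ ({A, B, C} : Set (EuclideanSpace ℝ (Fin 2)))))
    (hΩ₁₁ : ∠ Ω₁ A B = ∠ Ω₁ B C) (hΩ₁₂ : ∠ Ω₁ B C = ∠ Ω₁ C A)
    (hΩ₂ : Ω₂ ∈ interior (convexHull ℝ ({A, B, C} : Set (EuclideanSpace ℝ (Fin 2)))))
    (hΩ₂₁ : ∠ Ω₂ A C = ∠ Ω₂ C B) (hΩ₂₂ : ∠ Ω₂ C B = ∠ Ω₂ B A)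
    (hΩ₁O : Ω₁ ≠ O) (hΩ₂O : Ω₂ ≠ O) :
    inversion O R Ω₁ =
      (a ^ 4 + b ^ 4 + c ^ 4 - a ^ 2 * b ^ 2 - b ^ 2 * c ^ 2 - c ^ 2 * a ^ 2)⁻¹ •
        ((a ^ 2 * (a ^ 2 - b ^ 2)) • A + (b ^ 2 * (b ^ 2 - c ^ 2)) • B +
          (c ^ 2 * (c ^ 2 - a ^ 2)) • C) ∧
    inversion O R Ω₂ =
      (a ^ 4 + b ^ 4 + c ^ 4 - a ^ 2 * b ^ 2 - b ^ 2 * c ^ 2 - c ^ 2 * a ^ 2)⁻¹ •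
        ((a ^ 2 * (a ^ 2 - c ^ 2)) • A + (b ^ 2 * (b ^ 2 - a ^ 2)) • B +
          (c ^ 2 * (c ^ 2 - b ^ 2)) • C) :=
  stmt17_general A B C O Ω₁ Ω₂ R a b c hABC hOA hOB hOC ha hb hc hΩ₁ hΩ₁₁ hΩ₁₂ hΩ₂ hΩ₂₁ hΩ₂₂ hΩ₁O
    hΩ₂O
end
end
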